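/- arXiv:2502.19196 — 6 statements merged into one kernel-verified Lean document; each statement's English description precedes it below -/
import Mathlib

section
/- Let M be a matroid on a finite ground set E and let x₀, x₁, x₂, y₀, y₁, y₂ ≥ 0. Suppose that for every basis A of M, the local basis exchange graph H[A] satisfies T̃_{H[A]}(x₁,y₁) · T̃_{H[A]}(x₂,y₂) ≥ T̃_{H[A]}(x₀,y₀)². Then T_M(x₁,y₁) · T_M(x₂,y₂) ≥ T_M(x₀,y₀)². -/
open scoped Classical

/-- The permutation Tutte polynomial of a bipartite graph `G` on finite vertex set `V`
with bipartition class `A` (the other class being `Aᶜ`). -/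
noncomputable def permTutte {V : Type*} [Fintype V] [DecidableEq V]
    (G : SimpleGraph V) (A : Set V) (x y : ℝ) : ℝ :=
  ((Fintype.card V).factorial : ℝ)⁻¹ *
    ∑ π : V ≃ Fin (Fintype.card V),
      x ^ Nat.card {i : V // i ∈ A ∧ ∀ j, G.Adj i j → π j < π i} *
      y ^ Nat.card {j : V // j ∉ A ∧ ∀ i, G.Adj j i → π i < π j}

/-- The rank of a set in a matroid: the maximal cardinality of an independent subset. -/
noncomputable def mrank {α : Type*} (M : Matroid α) (S : Set α) : ℕ :=
  sSup {n : ℕ | ∃ I ⊆ S, M.Indep I ∧ I.ncard = n}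

/-- The Tutte polynomial of a matroid whose ground set is the whole (finite) type `α`:
`T_M(x,y) = Σ_{S ⊆ E} (x−1)^{r(E)−r(S)} (y−1)^{|S|−r(S)}`. -/
noncomputable def matroidTutte {α : Type*} [Fintype α] (M : Matroid α) (x y : ℝ) : ℝ :=
  ∑ S : Finset α,
    (x - 1) ^ (mrank M Set.univ - mrank M (S : Set α)) *
    (y - 1) ^ (S.card - mrank M (S : Set α))

/-- The local basis exchange graph `H[B]` of a matroid `M` with respect to a basis `B`:
the bipartite graph on the ground set with parts `B` and `E ∖ B`, where `e ∈ B` is adjacent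
to `f ∉ B` iff `(B ∖ {e}) ∪ {f}` is a basis. -/
def basisExchangeGraph {α : Type*} (M : Matroid α) (B : Set α) : SimpleGraph α where
  Adj e f :=
    (e ∈ B ∧ f ∉ B ∧ M.IsBase (insert f (B \ {e}))) ∨
    (f ∈ B ∧ e ∉ B ∧ M.IsBase (insert e (B \ {f})))
  symm := ⟨fun e f h => by tauto⟩
  loopless := ⟨fun e h => by
    rcases h with ⟨h1, h2, _⟩ | ⟨h1, h2, _⟩ <;> exact h2 h1⟩


set_option linter.unusedSectionVars false
set_option linter.unusedVariables false
set_option maxHeartbeats 1000000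

namespace TransferAux

open Finset

variable {α : Type*} [Fintype α] [DecidableEq α] {M : Matroid α} {B : Set α} {e f : α}

lemma sum_powerset_pow (A : Finset α) (r : ℝ) :
    ∑ T ∈ A.powerset, r ^ T.card = (r + 1) ^ A.card := by
  have h := Finset.prod_add (fun _ : α => r) (fun _ : α => 1) A
  simp only [Finset.prod_const, one_pow, mul_one] at h
  exact h.symm

lemma base_exch_iff (hE : M.E = Set.univ) (hB : M.IsBase B) (he : e ∈ B) (hf : f ∉ B) :
    M.IsBase (insert f (B \ {e})) ↔ f ∉ M.closure (B \ {e}) := by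
  constructor
  · intro h
    have h2 := h.indep.notMem_closure_diff_of_mem (Set.mem_insert f _)
    rwa [Set.insert_diff_self_of_notMem (fun h' => hf h'.1)] at h2
  · intro h
    apply hB.exchange_isBase_of_indep hf
    rw [(hB.indep.subset Set.diff_subset).insert_indep_iff_of_notMem (fun h' => hf h'.1)]
    exact ⟨by rw [hE]; trivial, h⟩

lemma exch_mem_of_closure (hE : M.E = Set.univ) (hB : M.IsBase B) (hf : f ∉ B) {B' : Set α}
    (hB' : B' ⊆ B) (hfB' : f ∈ M.closure B') (he : e ∈ B)
    (hx : M.IsBase (insert f (B \ {e}))) : e ∈ B' := by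
  by_contra hne
  have hsub : B' ⊆ B \ {e} := Set.subset_diff_singleton hB' hne
  exact ((base_exch_iff hE hB he hf).1 hx) (M.closure_subset_closure hsub hfB')

lemma exists_subset_exchpartners (hE : M.E = Set.univ) (hB : M.IsBase B) (hf : f ∉ B) :
    ∃ I : Finset α, ↑I ⊆ B ∧ f ∈ M.closure ↑I ∧
      ∀ e ∈ I, M.IsBase (insert f (B \ {e})) := by
  have hfB : f ∈ M.closure B := by rw [hB.closure_eq, hE]; trivial
  have hBfin : B.Finite := Set.toFinite B
  have hne : (Finset.univ.filter
      (fun I : Finset α => ↑I ⊆ B ∧ f ∈ M.closure ↑I)).Nonempty := by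
    refine ⟨hBfin.toFinset, ?_⟩
    simp only [Finset.mem_filter, Finset.mem_univ, true_and, Set.Finite.coe_toFinset]
    exact ⟨subset_rfl, hfB⟩
  obtain ⟨I, hImin⟩ := Finset.exists_minimal hne
  have hIm := hImin.1
  have hmin : ∀ x ∈ _, ¬ x < I := fun x hx hlt =>
    lt_irrefl _ (lt_of_lt_of_le hlt (hImin.2 hx hlt.le))
  simp only [Finset.mem_filter, Finset.mem_univ, true_and] at hIm
  refine ⟨I, hIm.1, hIm.2, fun e heI => ?_⟩
  have heB : e ∈ B := hIm.1 heI
  rw [base_exch_iff hE hB heB hf]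
  intro hfcl
  have h1 : f ∉ M.closure ↑(I.erase e) := by
    intro hc
    refine hmin (I.erase e) ?_ (Finset.erase_ssubset heI)
    simp only [Finset.mem_filter, Finset.mem_univ, true_and]
    exact ⟨(Finset.coe_subset.2 (Finset.erase_subset e I)).trans hIm.1, hc⟩
  have hIeq : (I : Set α) = insert e ↑(I.erase e) := by
    rw [← Finset.coe_insert, Finset.insert_erase heI]
  have h2 : e ∈ M.closure (insert f ↑(I.erase e)) := by
    refine (Matroid.closure_exchange ⟨?_, h1⟩).1
    rw [← hIeq]; exact hIm.2
  have h3 : e ∈ M.closure (B \ {e}) := by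
    have hsub : insert f ↑(I.erase e) ⊆ insert f (B \ {e}) := by
      apply Set.insert_subset_insert
      intro a ha
      rcases Finset.mem_coe.1 ha with ha'
      have := Finset.mem_erase.1 ha'
      exact ⟨hIm.1 this.2, this.1⟩
    have := M.closure_subset_closure hsub h2
    rwa [Matroid.closure_insert_eq_of_mem_closure hfcl] at this
  exact hB.indep.notMem_closure_diff_of_mem heB h3


set_option linter.unusedSectionVars false
set_option linter.unusedVariables false
/-- `B` is a base all of whose non-members beat (in `ι`) every exchange partner. -/
def StarB (M : Matroid α) (ι : α → ℕ) (B : Finset α) : Prop :=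
  M.IsBase ↑B ∧ ∀ f ∉ B, ∀ e ∈ B, M.IsBase (insert f ((B : Set α) \ {e})) → ι e < ι f

lemma exists_starB (hE : M.E = Set.univ) (hι : Function.Injective ι) :
    ∃ B : Finset α, StarB M ι B := by
  obtain ⟨B₀, hB₀⟩ := M.exists_isBase
  have hne : (Finset.univ.filter fun B : Finset α => M.IsBase ↑B).Nonempty := by
    refine ⟨(Set.toFinite B₀).toFinset, ?_⟩
    simp only [Finset.mem_filter, Finset.mem_univ, true_and, Set.Finite.coe_toFinset]
    exact hB₀
  obtain ⟨B, hBmem, hBmin⟩ := Finset.exists_min_image _ (fun B => ∑ e ∈ B, 2 ^ ι e) hne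
  refine ⟨B, (Finset.mem_filter.1 hBmem).2, ?_⟩
  intro f hf e he hx
  by_contra hlt
  push_neg at hlt
  have hne' : ι f ≠ ι e := fun hfe => hf (by rw [hι hfe]; exact he)
  have hlt' : ι f < ι e := lt_of_le_of_ne hlt hne'
  set B' : Finset α := insert f (B.erase e) with hB'
  have hcoe : (↑B' : Set α) = insert f ((B : Set α) \ {e}) := by
    simp [hB', Finset.coe_insert, Finset.coe_erase]
  have hbase' : M.IsBase ↑B' := by rw [hcoe]; exact hx
  have hsum : ∑ a ∈ B', 2 ^ ι a < ∑ a ∈ B, 2 ^ ι a := by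
    rw [Finset.sum_insert (fun hc => hf (Finset.mem_of_mem_erase hc))]
    calc 2 ^ ι f + ∑ a ∈ B.erase e, 2 ^ ι a
        < 2 ^ ι e + ∑ a ∈ B.erase e, 2 ^ ι a := by
          exact Nat.add_lt_add_right (Nat.pow_lt_pow_right one_lt_two hlt') _
      _ = ∑ a ∈ B, 2 ^ ι a := Finset.add_sum_erase _ (fun a => 2 ^ ι a) he
  exact absurd (hBmin B' (Finset.mem_filter.2 ⟨Finset.mem_univ _, hbase'⟩))
    (not_le.2 hsum)

lemma starB_aux (hE : M.E = Set.univ) {B₁ B₂ : Finset α} (h₁ : StarB M ι B₁)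
    (h₂ : M.IsBase (B₂ : Set α)) {g : α} (hg : g ∈ B₂) (hg1 : g ∉ B₁)
    (hmin : ∀ x ∈ (B₁ \ B₂) ∪ (B₂ \ B₁), ι g ≤ ι x) : False := by
  obtain ⟨I, hIB, hgI, hIe⟩ := exists_subset_exchpartners hE h₁.1
    (fun hc => hg1 (Finset.mem_coe.1 hc))
  have hIB₂ : (I : Set α) ⊆ (B₂ : Set α) \ {g} := by
    intro a ha
    have haB₁ : a ∈ B₁ := Finset.mem_coe.1 (hIB ha)
    have hlt : ι a < ι g := h₁.2 g hg1 a haB₁ (hIe a ha)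
    have haB₂ : a ∈ B₂ := by
      by_contra hc
      exact absurd (hmin a (Finset.mem_union_left _ (Finset.mem_sdiff.2 ⟨haB₁, hc⟩)))
        (not_le.2 hlt)
    exact ⟨haB₂, fun hc => (lt_irrefl _ (hc ▸ hlt))⟩
  have : g ∈ M.closure ((B₂ : Set α) \ {g}) := M.closure_subset_closure hIB₂ hgI
  exact h₂.indep.notMem_closure_diff_of_mem hg this

lemma starB_unique (hE : M.E = Set.univ) (hι : Function.Injective ι) {B₁ B₂ : Finset α}
    (h₁ : StarB M ι B₁) (h₂ : StarB M ι B₂) : B₁ = B₂ := by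
  by_contra hne
  have hd : ((B₁ \ B₂) ∪ (B₂ \ B₁)).Nonempty := by
    rw [Finset.nonempty_iff_ne_empty]
    intro h0
    rw [Finset.union_eq_empty, Finset.sdiff_eq_empty_iff_subset,
      Finset.sdiff_eq_empty_iff_subset] at h0
    exact hne (Finset.Subset.antisymm h0.1 h0.2)
  obtain ⟨g, hg, hgmin⟩ := Finset.exists_min_image _ ι hd
  rcases Finset.mem_union.1 hg with hg' | hg'
  · have := Finset.mem_sdiff.1 hg'
    exact starB_aux hE h₂ h₁.1 this.1 this.2
      (fun x hx => hgmin x (by rw [Finset.union_comm] at hx; exact hx))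
  · have := Finset.mem_sdiff.1 hg'
    exact starB_aux hE h₁ h₂.1 this.1 this.2 hgmin

/-- The auxiliary order: elements of `S` first (increasing `π`), then the rest (decreasing `π`). -/
def iota (π : α ≃ Fin (Fintype.card α)) (S : Finset α) (a : α) : ℕ :=
  if a ∈ S then (π a : ℕ) else 2 * Fintype.card α - (π a : ℕ)

lemma iota_lt (π : α ≃ Fin (Fintype.card α)) (a : α) : (π a : ℕ) < Fintype.card α := (π a).isLt

lemma iota_inj (π : α ≃ Fin (Fintype.card α)) (S : Finset α) :
    Function.Injective (iota π S) := by
  intro a b hab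
  have ha := iota_lt π a
  have hb := iota_lt π b
  have hπ : (π a : ℕ) = (π b : ℕ) → a = b := fun h => π.injective (Fin.ext h)
  by_cases haS : a ∈ S <;> by_cases hbS : b ∈ S <;>
    simp only [iota, haS, hbS, if_true, if_false] at hab <;>
    [exact hπ hab; omega; omega; exact hπ (by omega)]

variable (M) in
/-- Internally active elements of the base `B` w.r.t. the order `π`. -/
noncomputable def IAf (π : α ≃ Fin (Fintype.card α)) (B : Finset α) : Finset α :=
  B.filter (fun e => ∀ f, f ∉ B → M.IsBase (insert f ((B : Set α) \ {e})) → (π f : ℕ) < π e)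

variable (M) in
/-- Externally active elements w.r.t. the base `B` and the order `π`. -/
noncomputable def EAf (π : α ≃ Fin (Fintype.card α)) (B : Finset α) : Finset α :=
  Bᶜ.filter (fun f => ∀ e, e ∈ B → M.IsBase (insert f ((B : Set α) \ {e})) → (π e : ℕ) < π f)

variable (M) in
/-- `S` belongs to the Crapo interval of the base `B`. -/
def Fib (π : α ≃ Fin (Fintype.card α)) (B S : Finset α) : Prop :=
  B \ S ⊆ IAf M π B ∧ S \ B ⊆ EAf M π B

lemma star_iff_fib (π : α ≃ Fin (Fintype.card α)) {B S : Finset α} (hB : M.IsBase (B : Set α)) :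
    (∀ f ∉ B, ∀ e ∈ B, M.IsBase (insert f ((B : Set α) \ {e})) →
        iota π S e < iota π S f) ↔ Fib M π B S := by
  have hm : ∀ a, (π a : ℕ) < Fintype.card α := iota_lt π
  constructor
  · intro hstar
    constructor
    · intro e he
      rw [Finset.mem_sdiff] at he
      rw [IAf, Finset.mem_filter]
      refine ⟨he.1, fun f hf hx => ?_⟩
      have h := hstar f hf e he.1 hx
      have hae := hm e; have haf := hm f
      by_cases hfS : f ∈ S <;>
        simp only [iota, he.2, hfS, if_true, if_false] at h <;> omega
    · intro f hf
      rw [Finset.mem_sdiff] at hf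
      rw [EAf, Finset.mem_filter, Finset.mem_compl]
      refine ⟨hf.2, fun e he hx => ?_⟩
      have h := hstar f hf.2 e he hx
      have hae := hm e; have haf := hm f
      by_cases heS : e ∈ S <;>
        simp only [iota, hf.1, heS, if_true, if_false] at h <;> omega
  · rintro ⟨hIA, hEA⟩ f hf e he hx
    have hae := hm e; have haf := hm f
    by_cases hfS : f ∈ S
    · have hfEA := hEA (Finset.mem_sdiff.2 ⟨hfS, hf⟩)
      rw [EAf, Finset.mem_filter] at hfEA
      have h1 : (π e : ℕ) < π f := hfEA.2 e he hx
      by_cases heS : e ∈ S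
      · simp only [iota, heS, hfS, if_true]; omega
      · have heIA := hIA (Finset.mem_sdiff.2 ⟨he, heS⟩)
        rw [IAf, Finset.mem_filter] at heIA
        exact absurd (heIA.2 f hf hx) (by omega)
    · by_cases heS : e ∈ S
      · simp only [iota, heS, hfS, if_true, if_false]; omega
      · have heIA := hIA (Finset.mem_sdiff.2 ⟨he, heS⟩)
        rw [IAf, Finset.mem_filter] at heIA
        have h1 : (π f : ℕ) < π e := heIA.2 f hf hx
        simp only [iota, heS, hfS, if_false]; omega


variable (M) in
/-- The base whose Crapo interval contains `S`. -/
noncomputable def kappa (hE : M.E = Set.univ) (π : α ≃ Fin (Fintype.card α))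
    (S : Finset α) : Finset α :=
  (exists_starB (M := M) hE (iota_inj π S)).choose

lemma kappa_star (hE : M.E = Set.univ) (π : α ≃ Fin (Fintype.card α)) (S : Finset α) :
    StarB M (iota π S) (kappa M hE π S) :=
  (exists_starB (M := M) hE (iota_inj π S)).choose_spec

lemma kappa_base (hE : M.E = Set.univ) (π : α ≃ Fin (Fintype.card α)) (S : Finset α) :
    M.IsBase ((kappa M hE π S : Finset α) : Set α) :=
  (kappa_star hE π S).1

lemma kappa_eq_iff (hE : M.E = Set.univ) (π : α ≃ Fin (Fintype.card α)) {B S : Finset α}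
    (hB : M.IsBase (B : Set α)) :
    kappa M hE π S = B ↔ Fib M π B S := by
  constructor
  · rintro rfl
    exact (star_iff_fib π hB).1 (kappa_star hE π S).2
  · intro hfib
    exact starB_unique hE (iota_inj π S) (kappa_star hE π S) ⟨hB, (star_iff_fib π hB).2 hfib⟩

lemma mrank_eq_of_basis {I X : Set α} (hI : M.IsBasis I X) : mrank M X = I.ncard := by
  have hset : {n : ℕ | ∃ J ⊆ X, M.Indep J ∧ J.ncard = n} = Set.Iic I.ncard := by
    ext n
    simp only [Set.mem_setOf_eq, Set.mem_Iic]
    constructor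
    · rintro ⟨J, hJX, hJi, rfl⟩
      obtain ⟨I', hI', hJI'⟩ := hJi.subset_isBasis_of_subset hJX hI.subset_ground
      have hcard := hI'.encard_eq_encard hI
      have h1 : J.ncard ≤ I'.ncard := Set.ncard_le_ncard hJI' (Set.toFinite _)
      have h2 : I'.ncard = I.ncard := by rw [Set.ncard, Set.ncard, hcard]
      omega
    · intro hn
      obtain ⟨J, hJI, hJcard⟩ := Set.exists_subset_card_eq hn
      exact ⟨J, hJI.trans hI.subset, hI.indep.subset hJI, hJcard⟩
  rw [mrank, hset, csSup_Iic]

lemma mrank_univ (hE : M.E = Set.univ) {B : Finset α} (hB : M.IsBase (B : Set α)) :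
    mrank M Set.univ = B.card := by
  rw [mrank_eq_of_basis (X := Set.univ) (by rw [← hE, Matroid.isBasis_ground_iff]; exact hB),
    Set.ncard_coe_finset]

lemma mrank_fib (hE : M.E = Set.univ) (π : α ≃ Fin (Fintype.card α)) {B S : Finset α}
    (hB : M.IsBase (B : Set α)) (hfib : Fib M π B S) :
    mrank M (S : Set α) = (S ∩ B).card := by
  have hbasis : M.IsBasis ((S ∩ B : Finset α) : Set α) (S : Set α) := by
    apply Matroid.Indep.isBasis_of_subset_of_subset_closure
    · exact hB.indep.subset (by rw [Finset.coe_inter]; exact Set.inter_subset_right)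
    · rw [Finset.coe_inter]; exact Set.inter_subset_left
    · intro a haS
      have haS' : a ∈ S := Finset.mem_coe.1 haS
      by_cases haB : a ∈ B
      · exact M.subset_closure _ (by rw [hE]; exact Set.subset_univ _)
          (Finset.mem_coe.2 (Finset.mem_inter.2 ⟨haS', haB⟩))
      · -- a is externally active; its exchange partners lie in S ∩ B
        have haEA := hfib.2 (Finset.mem_sdiff.2 ⟨haS', haB⟩)
        rw [EAf, Finset.mem_filter] at haEA
        obtain ⟨I, hIB, haI, hIe⟩ := exists_subset_exchpartners hE hB
          (fun hc => haB (Finset.mem_coe.1 hc))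
        have hIsub : (I : Set α) ⊆ ((S ∩ B : Finset α) : Set α) := by
          intro e heI
          have heI' : e ∈ I := Finset.mem_coe.1 heI
          have heB : e ∈ B := Finset.mem_coe.1 (hIB heI)
          have heS : e ∈ S := by
            by_contra heS
            have heIA := hfib.1 (Finset.mem_sdiff.2 ⟨heB, heS⟩)
            rw [IAf, Finset.mem_filter] at heIA
            have h1 := heIA.2 a haB (hIe e heI')
            have h2 := haEA.2 e heB (hIe e heI')
            omega
          exact Finset.mem_coe.2 (Finset.mem_inter.2 ⟨heS, heB⟩)
        exact M.closure_subset_closure hIsub haI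
  rw [mrank_eq_of_basis hbasis, Set.ncard_coe_finset]


lemma term_eq (hE : M.E = Set.univ) (π : α ≃ Fin (Fintype.card α)) {B S : Finset α}
    (hB : M.IsBase (B : Set α)) (hfib : Fib M π B S) (x y : ℝ) :
    (x - 1) ^ (mrank M Set.univ - mrank M (S : Set α)) *
      (y - 1) ^ (S.card - mrank M (S : Set α)) =
    (x - 1) ^ (B \ S).card * (y - 1) ^ (S \ B).card := by
  rw [mrank_univ hE hB, mrank_fib hE π hB hfib]
  have h1 : B \ S = B \ (S ∩ B) := by ext a; simp only [Finset.mem_sdiff, Finset.mem_inter]; tauto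
  have h2 : S \ B = S \ (S ∩ B) := by ext a; simp only [Finset.mem_sdiff, Finset.mem_inter]; tauto
  rw [h1, h2, Finset.card_sdiff_of_subset Finset.inter_subset_right,
    Finset.card_sdiff_of_subset Finset.inter_subset_left]

lemma IAf_subset (π : α ≃ Fin (Fintype.card α)) (B : Finset α) : IAf M π B ⊆ B :=
  Finset.filter_subset _ _

lemma EAf_disj (π : α ≃ Fin (Fintype.card α)) (B : Finset α) {a : α}
    (ha : a ∈ EAf M π B) : a ∉ B := Finset.mem_compl.1 (Finset.mem_filter.1 ha).1

lemma fiber_sum (π : α ≃ Fin (Fintype.card α)) {B : Finset α} (x y : ℝ) :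
    ∑ S ∈ Finset.univ.filter (fun S => Fib M π B S),
      (x - 1) ^ (B \ S).card * (y - 1) ^ (S \ B).card
    = x ^ (IAf M π B).card * y ^ (EAf M π B).card := by
  have h1 : x ^ (IAf M π B).card = ∑ T ∈ (IAf M π B).powerset, (x - 1) ^ T.card := by
    rw [sum_powerset_pow, sub_add_cancel]
  have h2 : y ^ (EAf M π B).card = ∑ T ∈ (EAf M π B).powerset, (y - 1) ^ T.card := by
    rw [sum_powerset_pow, sub_add_cancel]
  rw [h1, h2, Finset.sum_mul_sum,
    ← Finset.sum_product (f := fun p : Finset α × Finset α =>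
      (x - 1) ^ p.1.card * (y - 1) ^ p.2.card)]
  apply Finset.sum_nbij' (i := fun S => (B \ S, S \ B)) (j := fun p => (B \ p.1) ∪ p.2)
  · intro S hS
    have hfib : Fib M π B S := (Finset.mem_filter.1 hS).2
    rw [Finset.mem_product]
    exact ⟨Finset.mem_powerset.2 hfib.1, Finset.mem_powerset.2 hfib.2⟩
  · intro p hp
    rw [Finset.mem_product] at hp
    have hT : p.1 ⊆ IAf M π B := Finset.mem_powerset.1 hp.1
    have hX : p.2 ⊆ EAf M π B := Finset.mem_powerset.1 hp.2
    rw [Finset.mem_filter]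
    refine ⟨Finset.mem_univ _, ?_, ?_⟩
    · intro a ha
      rw [Finset.mem_sdiff, Finset.mem_union, Finset.mem_sdiff] at ha
      exact hT (by tauto)
    · intro a ha
      rw [Finset.mem_sdiff, Finset.mem_union, Finset.mem_sdiff] at ha
      have haX : a ∈ p.2 := by tauto
      exact hX haX
  · intro S hS
    ext a
    simp only [Finset.mem_union, Finset.mem_sdiff]
    tauto
  · intro p hp
    rw [Finset.mem_product] at hp
    have hT : ∀ a ∈ p.1, a ∈ B := fun a ha =>
      IAf_subset π B (Finset.mem_powerset.1 hp.1 ha)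
    have hX : ∀ a ∈ p.2, a ∉ B := fun a ha =>
      EAf_disj π B (Finset.mem_powerset.1 hp.2 ha)
    have e1 : B \ ((B \ p.1) ∪ p.2) = p.1 := by
      ext a
      simp only [Finset.mem_sdiff, Finset.mem_union]
      constructor
      · tauto
      · intro ha; exact ⟨hT a ha, by tauto⟩
    have e2 : ((B \ p.1) ∪ p.2) \ B = p.2 := by
      ext a
      simp only [Finset.mem_sdiff, Finset.mem_union]
      constructor
      · tauto
      · intro ha; exact ⟨Or.inr ha, hX a ha⟩
    exact Prod.ext e1 e2
  · intro S hS; rfl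


lemma tutte_eq_sum_act (hE : M.E = Set.univ) (π : α ≃ Fin (Fintype.card α)) (x y : ℝ) :
    matroidTutte M x y = ∑ B ∈ Finset.univ.filter (fun B : Finset α => M.IsBase (B : Set α)),
      x ^ (IAf M π B).card * y ^ (EAf M π B).card := by
  rw [matroidTutte,
    ← Finset.sum_fiberwise_of_maps_to (g := kappa M hE π)
      (t := Finset.univ.filter (fun B : Finset α => M.IsBase (B : Set α)))
      (fun S _ => Finset.mem_filter.2 ⟨Finset.mem_univ _, kappa_base hE π S⟩)]
  apply Finset.sum_congr rfl
  intro B hB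
  have hBb : M.IsBase (B : Set α) := (Finset.mem_filter.1 hB).2
  have hfilter : Finset.univ.filter (fun S => kappa M hE π S = B)
      = Finset.univ.filter (Fib M π B) :=
    Finset.filter_congr (fun S _ => by rw [kappa_eq_iff hE π hBb])
  rw [hfilter, ← fiber_sum π x y]
  apply Finset.sum_congr rfl
  intro S hS
  exact term_eq hE π hBb (Finset.mem_filter.1 hS).2 x y

lemma iaN_eq (π : α ≃ Fin (Fintype.card α)) (B : Finset α) :
    Nat.card {i : α // i ∈ (B : Set α) ∧
        ∀ j, (basisExchangeGraph M (B : Set α)).Adj i j → π j < π i}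
      = (IAf M π B).card := by
  rw [Nat.card_eq_fintype_card, Fintype.card_subtype]
  congr 1
  ext a
  simp only [Finset.mem_filter, Finset.mem_univ, true_and, IAf, Finset.mem_coe]
  constructor
  · rintro ⟨hiB, hadj⟩
    refine ⟨hiB, fun f hf hx => ?_⟩
    have := hadj f (Or.inl ⟨hiB, fun hc => hf (Finset.mem_coe.1 hc), hx⟩)
    exact this
  · rintro ⟨hiB, hact⟩
    refine ⟨hiB, fun j hj => ?_⟩
    rcases hj with ⟨h1, h2, h3⟩ | ⟨h1, h2, h3⟩
    · exact hact j (fun hc => h2 (Finset.mem_coe.2 hc)) h3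
    · exact absurd hiB h2

lemma eaN_eq (π : α ≃ Fin (Fintype.card α)) (B : Finset α) :
    Nat.card {j : α // j ∉ (B : Set α) ∧
        ∀ i, (basisExchangeGraph M (B : Set α)).Adj j i → π i < π j}
      = (EAf M π B).card := by
  rw [Nat.card_eq_fintype_card, Fintype.card_subtype]
  congr 1
  ext a
  simp only [Finset.mem_filter, Finset.mem_univ, true_and, EAf, Finset.mem_coe,
    Finset.mem_compl]
  constructor
  · rintro ⟨hiB, hadj⟩
    refine ⟨fun hc => hiB (Finset.mem_coe.2 hc), fun e he hx => ?_⟩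
    exact hadj e (Or.inr ⟨Finset.mem_coe.2 he, hiB, hx⟩)
  · rintro ⟨hiB, hact⟩
    refine ⟨fun hc => hiB (Finset.mem_coe.1 hc), fun i hi => ?_⟩
    rcases hi with ⟨h1, h2, h3⟩ | ⟨h1, h2, h3⟩
    · exact absurd h1 (fun hc => hiB (Finset.mem_coe.1 hc))
    · exact hact i (Finset.mem_coe.1 h1) h3


lemma tutte_eq_sum_permTutte (hE : M.E = Set.univ) (x y : ℝ) :
    matroidTutte M x y = ∑ B ∈ Finset.univ.filter (fun B : Finset α => M.IsBase (B : Set α)),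
      permTutte (basisExchangeGraph M (B : Set α)) (B : Set α) x y := by
  have hfac : ((Fintype.card α).factorial : ℝ) ≠ 0 :=
    Nat.cast_ne_zero.2 (Nat.factorial_ne_zero _)
  have hsum : ∑ _π : α ≃ Fin (Fintype.card α), matroidTutte M x y
      = ((Fintype.card α).factorial : ℝ) * matroidTutte M x y := by
    rw [Finset.sum_const, Finset.card_univ, Fintype.card_equiv (Fintype.equivFin α),
      nsmul_eq_mul]
  calc matroidTutte M x y
      = ((Fintype.card α).factorial : ℝ)⁻¹ *
          ∑ _π : α ≃ Fin (Fintype.card α), matroidTutte M x y := by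
        rw [hsum, ← mul_assoc, inv_mul_cancel₀ hfac, one_mul]
    _ = ((Fintype.card α).factorial : ℝ)⁻¹ * ∑ π : α ≃ Fin (Fintype.card α),
          ∑ B ∈ Finset.univ.filter (fun B : Finset α => M.IsBase (B : Set α)),
            x ^ (IAf M π B).card * y ^ (EAf M π B).card := by
        rw [Finset.sum_congr rfl fun π _ => tutte_eq_sum_act hE π x y]
    _ = ∑ B ∈ Finset.univ.filter (fun B : Finset α => M.IsBase (B : Set α)),
          ((Fintype.card α).factorial : ℝ)⁻¹ * ∑ π : α ≃ Fin (Fintype.card α),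
            x ^ (IAf M π B).card * y ^ (EAf M π B).card := by
        rw [Finset.sum_comm, Finset.mul_sum]
    _ = ∑ B ∈ Finset.univ.filter (fun B : Finset α => M.IsBase (B : Set α)),
          permTutte (basisExchangeGraph M (B : Set α)) (B : Set α) x y := by
        refine Finset.sum_congr rfl fun B _ => ?_
        rw [permTutte]
        congr 1
        refine Finset.sum_congr rfl fun π _ => ?_
        rw [iaN_eq, eaN_eq]

lemma permTutte_nonneg {V : Type*} [Fintype V] [DecidableEq V] (G : SimpleGraph V)
    (A : Set V) {x y : ℝ} (hx : 0 ≤ x) (hy : 0 ≤ y) : 0 ≤ permTutte G A x y := by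
  rw [permTutte]
  apply mul_nonneg (by positivity)
  apply Finset.sum_nonneg
  intro π _
  positivity

end TransferAux

/-- Transfer lemma: if for every basis `A` of `M` the local basis exchange graph `H[A]`
satisfies `T̃_{H[A]}(x₁,y₁) · T̃_{H[A]}(x₂,y₂) ≥ T̃_{H[A]}(x₀,y₀)²`, then
`T_M(x₁,y₁) · T_M(x₂,y₂) ≥ T_M(x₀,y₀)²`. -/
theorem matroidTutte_transfer
    {α : Type*} [Fintype α] [DecidableEq α] (M : Matroid α) (hE : M.E = Set.univ)
    (x₀ x₁ x₂ y₀ y₁ y₂ : ℝ)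
    (hx₀ : 0 ≤ x₀) (hx₁ : 0 ≤ x₁) (hx₂ : 0 ≤ x₂)
    (hy₀ : 0 ≤ y₀) (hy₁ : 0 ≤ y₁) (hy₂ : 0 ≤ y₂)
    (h : ∀ A : Set α, M.IsBase A →
      permTutte (basisExchangeGraph M A) A x₁ y₁ *
        permTutte (basisExchangeGraph M A) A x₂ y₂ ≥
      permTutte (basisExchangeGraph M A) A x₀ y₀ ^ 2) :
    matroidTutte M x₁ y₁ * matroidTutte M x₂ y₂ ≥ matroidTutte M x₀ y₀ ^ 2 := by
  classical
  rw [TransferAux.tutte_eq_sum_permTutte hE x₀ y₀, TransferAux.tutte_eq_sum_permTutte hE x₁ y₁,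
    TransferAux.tutte_eq_sum_permTutte hE x₂ y₂]
  set s := Finset.univ.filter (fun B : Finset α => M.IsBase (B : Set α)) with hs
  set a : Finset α → ℝ := fun B => permTutte (basisExchangeGraph M (B : Set α)) (B : Set α) x₁ y₁
  set b : Finset α → ℝ := fun B => permTutte (basisExchangeGraph M (B : Set α)) (B : Set α) x₂ y₂
  set c : Finset α → ℝ := fun B => permTutte (basisExchangeGraph M (B : Set α)) (B : Set α) x₀ y₀
  have ha : ∀ B ∈ s, 0 ≤ a B := fun B _ => TransferAux.permTutte_nonneg _ _ hx₁ hy₁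
  have hb : ∀ B ∈ s, 0 ≤ b B := fun B _ => TransferAux.permTutte_nonneg _ _ hx₂ hy₂
  have hc : ∀ B ∈ s, 0 ≤ c B := fun B _ => TransferAux.permTutte_nonneg _ _ hx₀ hy₀
  have hcab : ∀ B ∈ s, c B ^ 2 ≤ a B * b B := by
    intro B hB
    exact h (B : Set α) (Finset.mem_filter.1 hB).2
  rw [ge_iff_le]
  calc (∑ B ∈ s, c B) ^ 2
      ≤ (∑ B ∈ s, Real.sqrt (a B * b B)) ^ 2 := by
        apply pow_le_pow_left₀ (Finset.sum_nonneg hc)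
        apply Finset.sum_le_sum
        intro B hB
        rw [Real.le_sqrt (hc B hB) (mul_nonneg (ha B hB) (hb B hB))]
        exact hcab B hB
    _ ≤ (∑ B ∈ s, a B) * ∑ B ∈ s, b B := by
        apply Finset.sum_sq_le_sum_mul_sum_of_sq_eq_mul s ha hb
        intro B hB
        exact Real.sq_sqrt (mul_nonneg (ha B hB) (hb B hB))
end

section
/- Let H = (A, B, E) be a finite bipartite graph and let x, y ≥ 0. For independent random variables (x_i)_{i∈A} and (y_j)_{j∈B}, each uniformly distributed on [0,1], define for i ∈ A the random variable X_i to be x if 1 − y_j ≤ x_i for all j ∈ N(i) and 1 otherwise, and for j ∈ B define Y_j to be y if x_i ≤ 1 − y_j for all i ∈ N(j) and 1 otherwise (where a condition over an empty neighborhood holds vacuously). Then T̃_H(x,y) = E[ Π_{i∈A} X_i · Π_{j∈B} Y_j ]. -/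
open scoped Classical

/-- `G` is bipartite with parts `A` and `Aᶜ`. -/
def IsBipartition {V : Type*} (G : SimpleGraph V) (A : Set V) : Prop :=
  ∀ u v, G.Adj u v → (u ∈ A ↔ v ∉ A)

open MeasureTheory Set
open scoped ENNReal

/-- The uniform product measure on `[0,1]^V`: the coordinates are i.i.d. uniform on `[0,1]`. -/
noncomputable def cubeMeasure (V : Type*) [Fintype V] : Measure (V → ℝ) :=
  Measure.pi fun _ => volume.restrict (Set.Icc (0 : ℝ) 1)

section PermTutteAux

variable {V : Type*} [Fintype V] [DecidableEq V]

instance : IsProbabilityMeasure (volume.restrict (Set.Icc (0:ℝ) 1)) :=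
  ⟨by simp [Real.volume_Icc]⟩

instance : IsProbabilityMeasure (cubeMeasure V) := by
  unfold cubeMeasure; infer_instance

def region (π : V ≃ Fin (Fintype.card V)) : Set (V → ℝ) :=
  {u | ∀ v w : V, π v < π w → u v < u w}

lemma measurableSet_region (π : V ≃ Fin (Fintype.card V)) : MeasurableSet (region π) := by
  have h : region π = ⋂ (v : V) (w : V), {u : V → ℝ | π v < π w → u v < u w} := by
    ext u; simp [region]
  rw [h]
  refine MeasurableSet.iInter fun v => MeasurableSet.iInter fun w => ?_
  by_cases hc : π v < π w
  · have : {u : V → ℝ | π v < π w → u v < u w} = {u : V → ℝ | u v < u w} := by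
      ext u; simp [hc]
    rw [this]
    exact measurableSet_lt (measurable_pi_apply v) (measurable_pi_apply w)
  · have : {u : V → ℝ | π v < π w → u v < u w} = univ := by ext u; simp [hc]
    rw [this]; exact MeasurableSet.univ

lemma pair_null (v w : V) (hvw : v ≠ w) : cubeMeasure V {u | u v = u w} = 0 := by
  set e := MeasurableEquiv.piEquivPiSubtypeProd (fun _ : V => ℝ) (· = v) with he
  have hmp := measurePreserving_piEquivPiSubtypeProd
    (fun _ : V => volume.restrict (Set.Icc (0:ℝ) 1)) (· = v)
  set T : Set (({i : V // i = v} → ℝ) × ({i : V // ¬ i = v} → ℝ)) :=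
    {q | q.1 ⟨v, rfl⟩ = q.2 ⟨w, fun h => hvw h.symm⟩} with hT
  have hTm : MeasurableSet T :=
    measurableSet_eq_fun (measurable_fst.eval) (measurable_snd.eval)
  have hpre : {u : V → ℝ | u v = u w} = e ⁻¹' T := rfl
  rw [hpre]
  show Measure.pi (fun _ : V => volume.restrict (Set.Icc (0:ℝ) 1)) (e ⁻¹' T) = 0
  rw [hmp.measure_preimage hTm.nullMeasurableSet]
  rw [Measure.measure_prod_null hTm]
  refine Filter.Eventually.of_forall fun a => ?_
  have hsl : (Prod.mk a ⁻¹' T) =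
      {b : {i : V // ¬ i = v} → ℝ | b ⟨w, fun h => hvw h.symm⟩ = a ⟨v, rfl⟩} := by
    ext b; simp [hT, eq_comm]
  show (Measure.pi fun _ : {i : V // ¬ i = v} => volume.restrict (Set.Icc (0:ℝ) 1))
      (Prod.mk a ⁻¹' T) = 0
  rw [hsl]
  exact Measure.pi_hyperplane _ _ _

lemma ae_inj : ∀ᵐ u ∂cubeMeasure V, Function.Injective u := by
  rw [ae_iff]
  have hsub : {u : V → ℝ | ¬ Function.Injective u} ⊆
      ⋃ (v : V) (w : V) (_ : v ≠ w), {u : V → ℝ | u v = u w} := by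
    intro u hu
    simp only [mem_setOf_eq, Function.Injective, not_forall] at hu
    obtain ⟨a, b, h1, h2⟩ := hu
    exact mem_iUnion.2 ⟨a, mem_iUnion.2 ⟨b, mem_iUnion.2 ⟨h2, h1⟩⟩⟩
  exact measure_mono_null hsub (measure_iUnion_null fun a => measure_iUnion_null fun b =>
      measure_iUnion_null fun h => pair_null a b h)

lemma region_lt_iff {π : V ≃ Fin (Fintype.card V)} {u : V → ℝ} (hu : u ∈ region π)
    {v w : V} : u v < u w ↔ π v < π w := by
  constructor
  · intro h
    rcases lt_trichotomy (π v) (π w) with h' | h' | h'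
    · exact h'
    · exact absurd (congrArg u (π.injective h')) (ne_of_lt h)
    · exact absurd (hu _ _ h') (lt_asymm h)
  · exact hu v w

lemma region_le_iff {π : V ≃ Fin (Fintype.card V)} {u : V → ℝ} (hu : u ∈ region π)
    {v w : V} (hvw : w ≠ v) : u w ≤ u v ↔ π w < π v := by
  constructor
  · intro h
    have h1 : ¬ π v < π w := fun hc => absurd (hu _ _ hc) (not_lt.2 h)
    exact lt_of_le_of_ne (not_lt.1 h1) fun hh => hvw (π.injective hh)
  · exact fun h => le_of_lt (hu _ _ h)

lemma region_disjoint : Pairwise (Function.onFun Disjoint (region (V := V))) := by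
  intro π π' hne
  rw [Function.onFun, Set.disjoint_left]
  intro u hu hu'
  apply hne
  have hsm : StrictMono (⇑(π.symm.trans π') : Fin (Fintype.card V) → Fin (Fintype.card V)) := by
    intro a b hab
    have h1 : π (π.symm a) < π (π.symm b) := by simpa using hab
    have h2 : u (π.symm a) < u (π.symm b) := (region_lt_iff hu).2 h1
    exact (region_lt_iff hu').1 h2
  have hiso : StrictMono.orderIsoOfSurjective _ hsm (π.symm.trans π').surjective
      = OrderIso.refl _ := Subsingleton.elim _ _
  have key : ∀ a, (π.symm.trans π') a = a := by
    intro a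
    have := congrArg (fun (e : Fin (Fintype.card V) ≃o Fin (Fintype.card V)) => e a) hiso
    exact this
  apply Equiv.ext
  intro v
  have h3 := key (π v)
  simp only [Equiv.trans_apply, Equiv.symm_apply_apply] at h3
  exact h3.symm

lemma region_measure_eq (π π' : V ≃ Fin (Fintype.card V)) :
    cubeMeasure V (region π) = cubeMeasure V (region π') := by
  set f : V ≃ V := π.trans π'.symm with hf
  have hmp := measurePreserving_piCongrLeft
    (fun _ : V => volume.restrict (Set.Icc (0:ℝ) 1)) f
  set e := MeasurableEquiv.piCongrLeft (fun _ : V => ℝ) f with he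
  have hco : ∀ (g : V → ℝ) (v : V), e g v = g (f.symm v) := by
    intro g v
    rw [he, MeasurableEquiv.coe_piCongrLeft]
    conv_lhs => rw [show v = f (f.symm v) by simp]
    exact Equiv.piCongrLeft_apply_apply (fun _ : V => ℝ) f g (f.symm v)
  have hpre : (⇑e) ⁻¹' (region π') = region π := by
    ext g
    simp only [mem_preimage, region, mem_setOf_eq]
    constructor
    · intro h a b hab
      have := h (f a) (f b) (by simpa [hf] using hab)
      simpa [hco, hf] using this
    · intro h v w hvw
      have := h (f.symm v) (f.symm w) (by simpa [hf] using hvw)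
      simpa [hco] using this
  have := hmp.measure_preimage (measurableSet_region π').nullMeasurableSet
  rw [hpre] at this
  exact this

lemma exists_region {u : V → ℝ} (hu : Function.Injective u) :
    ∃ π : V ≃ Fin (Fintype.card V), u ∈ region π := by
  set s : Finset ℝ := Finset.univ.image u with hs
  have hcard : s.card = Fintype.card V := by
    rw [hs, Finset.card_image_of_injective _ hu, Finset.card_univ]
  set oe := s.orderIsoOfFin hcard with hoe
  have hmem : ∀ v, u v ∈ s := fun v => Finset.mem_image_of_mem u (Finset.mem_univ v)
  set g : V → Fin (Fintype.card V) := fun v => oe.symm ⟨u v, hmem v⟩ with hg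
  have hginj : Function.Injective g := by
    intro a b hab
    have h1 : (⟨u a, hmem a⟩ : {x // x ∈ s}) = ⟨u b, hmem b⟩ := oe.symm.injective hab
    exact hu (congrArg Subtype.val h1)
  have hbij : Function.Bijective g :=
    (Fintype.bijective_iff_injective_and_card g).2 ⟨hginj, by simp⟩
  refine ⟨Equiv.ofBijective g hbij, fun v w h => ?_⟩
  have h' : g v < g w := h
  have h2 : (⟨u v, hmem v⟩ : {x // x ∈ s}) < ⟨u w, hmem w⟩ := by
    rwa [← OrderIso.lt_iff_lt oe.symm]
  exact Subtype.mk_lt_mk.1 h2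

lemma region_measure (π₀ : V ≃ Fin (Fintype.card V)) :
    cubeMeasure V (region π₀) = (((Fintype.card V).factorial : ℝ≥0∞))⁻¹ := by
  have hUc : cubeMeasure V (⋃ π : V ≃ Fin (Fintype.card V), region π)ᶜ = 0 := by
    have hsub : (⋃ π : V ≃ Fin (Fintype.card V), region π)ᶜ ⊆
        {u : V → ℝ | ¬ Function.Injective u} := by
      intro u hu hinj
      obtain ⟨π, hπ⟩ := exists_region hinj
      exact (mem_compl_iff _ _).1 hu (mem_iUnion.2 ⟨π, hπ⟩)
    have h0 : cubeMeasure V {u : V → ℝ | ¬ Function.Injective u} = 0 := by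
      have := ae_inj (V := V); rwa [ae_iff] at this
    exact measure_mono_null hsub h0
  have hU : cubeMeasure V (⋃ π : V ≃ Fin (Fintype.card V), region π) = 1 :=
    (prob_compl_eq_zero_iff (MeasurableSet.iUnion measurableSet_region)).1 hUc
  have hsum : ∑ π : V ≃ Fin (Fintype.card V), cubeMeasure V (region π) = 1 := by
    rw [← tsum_fintype (L := SummationFilter.unconditional _), ← measure_iUnion region_disjoint measurableSet_region, hU]
  have hall : ∀ π : V ≃ Fin (Fintype.card V),
      cubeMeasure V (region π) = cubeMeasure V (region π₀) := fun π => region_measure_eq π π₀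
  rw [Finset.sum_congr rfl (fun π _ => hall π), Finset.sum_const, Finset.card_univ,
    Fintype.card_equiv (Fintype.equivFin V), nsmul_eq_mul] at hsum
  have hne : (((Fintype.card V).factorial : ℝ≥0∞)) ≠ 0 :=
    Nat.cast_ne_zero.2 (Nat.factorial_ne_zero _)
  have hnt : (((Fintype.card V).factorial : ℝ≥0∞)) ≠ ⊤ := ENNReal.natCast_ne_top _
  calc cubeMeasure V (region π₀)
      = (((Fintype.card V).factorial : ℝ≥0∞))⁻¹ * (((Fintype.card V).factorial : ℝ≥0∞)
          * cubeMeasure V (region π₀)) := by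
        rw [← mul_assoc, ENNReal.inv_mul_cancel hne hnt, one_mul]
    _ = (((Fintype.card V).factorial : ℝ≥0∞))⁻¹ := by rw [hsum, mul_one]

lemma prod_eq_pow (Q P : V → Prop) [DecidablePred Q] [DecidablePred P] (t : ℝ) :
    (∏ i ∈ Finset.univ.filter (fun i => Q i), (if P i then t else 1))
      = t ^ Nat.card {i : V // Q i ∧ P i} := by
  rw [Finset.prod_ite, Finset.prod_const, Finset.prod_const_one, mul_one,
    Finset.filter_filter, Nat.card_eq_fintype_card]
  rw [Fintype.card_subtype]

lemma g_on_region (G : SimpleGraph V) (A : Set V) {π : V ≃ Fin (Fintype.card V)}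
    {u : V → ℝ} (hu : u ∈ region π) (x y : ℝ) :
    (∏ i ∈ Finset.univ.filter (· ∈ A), (if ∀ j, G.Adj i j → u j ≤ u i then x else 1)) *
      (∏ j ∈ Finset.univ.filter (· ∉ A), (if ∀ i, G.Adj j i → u i ≤ u j then y else 1))
    = x ^ Nat.card {i : V // i ∈ A ∧ ∀ j, G.Adj i j → π j < π i} *
      y ^ Nat.card {j : V // j ∉ A ∧ ∀ i, G.Adj j i → π i < π j} := by
  have h1 : ∀ v : V, (∀ w, G.Adj v w → u w ≤ u v) ↔ (∀ w, G.Adj v w → π w < π v) := by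
    intro v
    refine forall₂_congr fun w hadj => ?_
    exact region_le_iff hu hadj.ne'
  have e1 : (∏ i ∈ Finset.univ.filter (· ∈ A), (if ∀ j, G.Adj i j → u j ≤ u i then x else 1))
      = ∏ i ∈ Finset.univ.filter (· ∈ A), (if ∀ j, G.Adj i j → π j < π i then x else 1) :=
    Finset.prod_congr rfl fun i _ => if_congr (h1 i) rfl rfl
  have e2 : (∏ j ∈ Finset.univ.filter (· ∉ A), (if ∀ i, G.Adj j i → u i ≤ u j then y else 1))
      = ∏ j ∈ Finset.univ.filter (· ∉ A), (if ∀ i, G.Adj j i → π i < π j then y else 1) :=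
    Finset.prod_congr rfl fun j _ => if_congr (h1 j) rfl rfl
  rw [e1, e2]
  congr 1
  · exact prod_eq_pow (fun i => i ∈ A) (fun i => ∀ j, G.Adj i j → π j < π i) x
  · exact prod_eq_pow (fun j => j ∉ A) (fun j => ∀ i, G.Adj j i → π i < π j) y

noncomputable def flipMap (A : Set V) : (V → ℝ) ≃ᵐ (V → ℝ) where
  toEquiv :=
  { toFun := fun z v => if v ∈ A then z v else 1 - z v
    invFun := fun z v => if v ∈ A then z v else 1 - z v
    left_inv := fun z => funext fun v => by by_cases h : v ∈ A <;> simp [h]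
    right_inv := fun z => funext fun v => by by_cases h : v ∈ A <;> simp [h] }
  measurable_toFun := by
    refine measurable_pi_lambda _ fun v => ?_
    by_cases h : v ∈ A
    · simpa [h] using measurable_pi_apply v
    · simpa [h, Function.comp_def] using (measurable_const_sub (1:ℝ)).comp (measurable_pi_apply v)
  measurable_invFun := by
    refine measurable_pi_lambda _ fun v => ?_
    by_cases h : v ∈ A
    · simpa [h] using measurable_pi_apply v
    · simpa [h, Function.comp_def] using (measurable_const_sub (1:ℝ)).comp (measurable_pi_apply v)

lemma flipMap_measurePreserving (A : Set V) :
    MeasurePreserving (⇑(flipMap (V := V) A)) (cubeMeasure V) (cubeMeasure V) := by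
  have hf : ∀ v : V, MeasurePreserving (fun t : ℝ => if v ∈ A then t else 1 - t)
      (volume.restrict (Set.Icc (0:ℝ) 1)) (volume.restrict (Set.Icc (0:ℝ) 1)) := by
    intro v
    by_cases h : v ∈ A
    · rw [show (fun t : ℝ => if v ∈ A then t else 1 - t) = id from funext fun t => if_pos h]
      exact MeasurePreserving.id (volume.restrict (Set.Icc (0:ℝ) 1))
    · have hsub : MeasurePreserving (fun t : ℝ => 1 - t) volume volume :=
        Measure.measurePreserving_sub_left volume 1
      have hpre : (fun t : ℝ => 1 - t) ⁻¹' (Set.Icc (0:ℝ) 1) = Set.Icc (0:ℝ) 1 := by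
        ext t
        simp only [mem_preimage, mem_Icc]
        constructor <;> rintro ⟨h1, h2⟩ <;> constructor <;> linarith
      have := hsub.restrict_preimage (measurableSet_Icc (a := (0:ℝ)) (b := 1))
      rw [hpre] at this
      simpa [h] using this
  exact measurePreserving_pi _ _ hf

lemma flip_integrand (G : SimpleGraph V) (A : Set V) (hbip : IsBipartition G A)
    (x y : ℝ) (u : V → ℝ) :
    (∏ i ∈ Finset.univ.filter (· ∈ A),
        (if ∀ j, G.Adj i j → 1 - (flipMap A u) j ≤ (flipMap A u) i then x else 1)) *
      (∏ j ∈ Finset.univ.filter (· ∉ A),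
        (if ∀ i, G.Adj j i → (flipMap A u) i ≤ 1 - (flipMap A u) j then y else 1))
    = (∏ i ∈ Finset.univ.filter (· ∈ A), (if ∀ j, G.Adj i j → u j ≤ u i then x else 1)) *
      (∏ j ∈ Finset.univ.filter (· ∉ A), (if ∀ i, G.Adj j i → u i ≤ u j then y else 1)) := by
  congr 1
  · refine Finset.prod_congr rfl fun i hi => ?_
    have hiA : i ∈ A := by simpa using hi
    refine if_congr (forall₂_congr fun j hadj => ?_) rfl rfl
    have hjA : j ∉ A := (hbip i j hadj).1 hiA
    show 1 - (if j ∈ A then u j else 1 - u j) ≤ (if i ∈ A then u i else 1 - u i) ↔ _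
    rw [if_pos hiA, if_neg hjA, sub_sub_cancel]
  · refine Finset.prod_congr rfl fun j hj => ?_
    have hjA : j ∉ A := by simpa using hj
    refine if_congr (forall₂_congr fun i hadj => ?_) rfl rfl
    have hiA : i ∈ A := by
      by_contra hiA
      exact hjA ((hbip j i hadj).2 hiA)
    show (if i ∈ A then u i else 1 - u i) ≤ 1 - (if j ∈ A then u j else 1 - u j) ↔ _
    rw [if_pos hiA, if_neg hjA, sub_sub_cancel]


end PermTutteAux

/-- Integral representation of the permutation Tutte polynomial: with i.i.d. uniform
random variables (`z i` playing the role of `x_i` for `i ∈ A` and of `y_j` for `j ∈ B`),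
`T̃_H(x,y) = E[ Π_{i∈A} X_i · Π_{j∈B} Y_j ]` where `X_i = x` if `1 − y_j ≤ x_i` for all
neighbors `j` of `i` (else `1`), and `Y_j = y` if `x_i ≤ 1 − y_j` for all neighbors `i`
of `j` (else `1`). -/
theorem permTutte_eq_integral
    {V : Type*} [Fintype V] [DecidableEq V] (G : SimpleGraph V)
    (A : Set V) (hbip : IsBipartition G A) (x y : ℝ) (hx : 0 ≤ x) (hy : 0 ≤ y) :
    permTutte G A x y =
      ∫ z : V → ℝ,
        (∏ i ∈ Finset.univ.filter (· ∈ A),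
          (if ∀ j, G.Adj i j → 1 - z j ≤ z i then x else 1)) *
        (∏ j ∈ Finset.univ.filter (· ∉ A),
          (if ∀ i, G.Adj j i → z i ≤ 1 - z j then y else 1))
        ∂(cubeMeasure V) := by
  classical
  set c : (V ≃ Fin (Fintype.card V)) → ℝ := fun π =>
    x ^ Nat.card {i : V // i ∈ A ∧ ∀ j, G.Adj i j → π j < π i} *
    y ^ Nat.card {j : V // j ∉ A ∧ ∀ i, G.Adj j i → π i < π j} with hc
  have hmp := flipMap_measurePreserving (V := V) A
  have hCoV := hmp.integral_comp' (fun z : V → ℝ =>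
    (∏ i ∈ Finset.univ.filter (· ∈ A),
      (if ∀ j, G.Adj i j → 1 - z j ≤ z i then x else 1)) *
    (∏ j ∈ Finset.univ.filter (· ∉ A),
      (if ∀ i, G.Adj j i → z i ≤ 1 - z j then y else 1)))
  rw [← hCoV]
  have hae : (fun u : V → ℝ =>
      (∏ i ∈ Finset.univ.filter (· ∈ A),
        (if ∀ j, G.Adj i j → 1 - (flipMap A u) j ≤ (flipMap A u) i then x else 1)) *
      (∏ j ∈ Finset.univ.filter (· ∉ A),
        (if ∀ i, G.Adj j i → (flipMap A u) i ≤ 1 - (flipMap A u) j then y else 1)))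
      =ᵐ[cubeMeasure V]
      (fun u => ∑ π : V ≃ Fin (Fintype.card V),
        (region π).indicator (fun _ => c π) u) := by
    filter_upwards [ae_inj (V := V)] with u hu
    obtain ⟨π₀, hπ₀⟩ := exists_region hu
    have hsum : ∑ π : V ≃ Fin (Fintype.card V),
        (region π).indicator (fun _ => c π) u = c π₀ := by
      rw [Finset.sum_eq_single π₀]
      · rw [Set.indicator_of_mem hπ₀]
      · intro π _ hne
        rw [Set.indicator_of_notMem]
        intro hmem
        exact (Set.disjoint_left.1 (region_disjoint hne) hmem) hπ₀
      · intro h; exact absurd (Finset.mem_univ π₀) h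
    rw [hsum]
    exact (flip_integrand G A hbip x y u).trans (g_on_region G A hπ₀ x y)
  rw [integral_congr_ae hae, integral_finset_sum _
    (fun π _ => (integrable_const (c π)).indicator (measurableSet_region π))]
  have hval : ∀ π : V ≃ Fin (Fintype.card V),
      ∫ u, (region π).indicator (fun _ => c π) u ∂(cubeMeasure V)
        = (((Fintype.card V).factorial : ℝ))⁻¹ * c π := by
    intro π
    rw [integral_indicator_const (c π) (measurableSet_region π), measureReal_def, region_measure π,
      ENNReal.toReal_inv, smul_eq_mul]
    norm_num
  rw [Finset.sum_congr rfl fun π _ => hval π, ← Finset.mul_sum]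
  rfl
end

section
/- Let H = (A, B, E) be a finite bipartite graph with vertex degrees d_v, and let real weights x^(i) ≥ 1 for i ∈ A and 0 ≤ y^(j) ≤ 1 for j ∈ B be given. For independent random variables (x_i)_{i∈A} and (y_j)_{j∈B}, each uniformly distributed on [0,1], define for i ∈ A the random variable X̂_i to be x^(i) if 1 − y_j ≤ x_i for all j ∈ N(i) and 1 otherwise, and for j ∈ B define Ŷ_j to be y^(j) if x_i ≤ 1 − y_j for all i ∈ N(j) and 1 otherwise (conditions over empty neighborhoods hold vacuously). Then E[ Π_{i∈A} X̂_i · Π_{j∈B} Ŷ_j ] ≥ Π_{i∈A} ( x^(i)/(d_i+1) + d_i/(d_i+1) ) · Π_{j∈B} ( y^(j)/(d_j+1) + d_j/(d_j+1) ). -/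
open scoped Classical

open MeasureTheory

noncomputable def m0' : Measure ℝ := volume.restrict (Set.Icc (0 : ℝ) 1)
instance : IsProbabilityMeasure m0' := ⟨by simp [m0', Real.volume_Icc]⟩


lemma bdd_integrable {α : Type*} [MeasurableSpace α] {μ : Measure α} [IsProbabilityMeasure μ]
    {f : α → ℝ} {C : ℝ} (hf : Measurable f) (hb : ∀ x, |f x| ≤ C) : Integrable f μ := by
  refine Integrable.mono' (integrable_const C) hf.aestronglyMeasurable ?_
  exact Filter.Eventually.of_forall fun x => by simpa using hb x

lemma abs_integral_le {α : Type*} [MeasurableSpace α] {μ : Measure α} [IsProbabilityMeasure μ]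
    {f : α → ℝ} {C : ℝ} (hf : Measurable f) (hb : ∀ x, |f x| ≤ C) : |∫ x, f x ∂μ| ≤ C := by
  have h1 : |∫ x, f x ∂μ| ≤ ∫ x, |f x| ∂μ := by
    simpa [Real.norm_eq_abs] using norm_integral_le_integral_norm (μ := μ) f
  have h2 : ∫ x, |f x| ∂μ ≤ ∫ _x, C ∂μ :=
    integral_mono (bdd_integrable hf hb).abs (integrable_const C) (fun x => hb x)
  simpa using h1.trans h2

lemma chebyshev_integral {μ : Measure ℝ} [IsProbabilityMeasure μ]
    {f g : ℝ → ℝ} {Cf Cg : ℝ}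
    (hfm : Measurable f) (hgm : Measurable g) (hf : Monotone f) (hg : Monotone g)
    (hbf : ∀ x, |f x| ≤ Cf) (hbg : ∀ x, |g x| ≤ Cg) :
    (∫ x, f x ∂μ) * (∫ x, g x ∂μ) ≤ ∫ x, f x * g x ∂μ := by
  have hif : Integrable f μ := bdd_integrable hfm hbf
  have hig : Integrable g μ := bdd_integrable hgm hbg
  have hifg : Integrable (fun x => f x * g x) μ :=
    bdd_integrable (hfm.mul hgm) (C := Cf * Cg) (fun x => by
      rw [abs_mul]
      exact mul_le_mul (hbf x) (hbg x) (abs_nonneg _) ((abs_nonneg (f x)).trans (hbf x)))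
  have key : 0 ≤ ∫ p : ℝ × ℝ, (f p.1 - f p.2) * (g p.1 - g p.2) ∂μ.prod μ := by
    refine integral_nonneg fun p => ?_
    show (0:ℝ) ≤ _
    rcases le_total p.1 p.2 with h | h
    · have := hf h; have := hg h; nlinarith
    · have := hf h; have := hg h; nlinarith
  have i1 : Integrable (fun p : ℝ × ℝ => f p.1 * g p.1) (μ.prod μ) := by
    simpa using hifg.mul_prod (integrable_const (1:ℝ))
  have i2 : Integrable (fun p : ℝ × ℝ => f p.2 * g p.2) (μ.prod μ) := by
    simpa using (integrable_const (1:ℝ)).mul_prod hifg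
  have i3 : Integrable (fun p : ℝ × ℝ => f p.1 * g p.2) (μ.prod μ) := hif.mul_prod hig
  have i4 : Integrable (fun p : ℝ × ℝ => f p.2 * g p.1) (μ.prod μ) := by
    have := hig.mul_prod hif
    simpa [mul_comm] using this
  have e1 : ∫ p : ℝ × ℝ, f p.1 * g p.1 ∂μ.prod μ = ∫ x, f x * g x ∂μ := by
    simpa using integral_prod_mul (μ := μ) (ν := μ) (f := fun x => f x * g x)
      (g := fun _ => (1:ℝ))
  have e2 : ∫ p : ℝ × ℝ, f p.2 * g p.2 ∂μ.prod μ = ∫ x, f x * g x ∂μ := by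
    simpa using integral_prod_mul (μ := μ) (ν := μ) (f := fun _ => (1:ℝ))
      (g := fun x => f x * g x)
  have e3 : ∫ p : ℝ × ℝ, f p.1 * g p.2 ∂μ.prod μ = (∫ x, f x ∂μ) * ∫ x, g x ∂μ :=
    integral_prod_mul f g
  have e4 : ∫ p : ℝ × ℝ, f p.2 * g p.1 ∂μ.prod μ = (∫ x, g x ∂μ) * ∫ x, f x ∂μ := by
    have := integral_prod_mul (μ := μ) (ν := μ) g f
    simpa [mul_comm] using this
  have expand : ∫ p : ℝ × ℝ, (f p.1 - f p.2) * (g p.1 - g p.2) ∂μ.prod μ =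
      (∫ p : ℝ × ℝ, f p.1 * g p.1 ∂μ.prod μ) + (∫ p : ℝ × ℝ, f p.2 * g p.2 ∂μ.prod μ)
        - (∫ p : ℝ × ℝ, f p.1 * g p.2 ∂μ.prod μ) - (∫ p : ℝ × ℝ, f p.2 * g p.1 ∂μ.prod μ) := by
    have i12 : Integrable (fun p : ℝ × ℝ => f p.1 * g p.1 + f p.2 * g p.2) (μ.prod μ) := i1.add i2
    have i34 : Integrable (fun p : ℝ × ℝ => f p.1 * g p.2 + f p.2 * g p.1) (μ.prod μ) := i3.add i4
    have hfun : (fun p : ℝ × ℝ => (f p.1 - f p.2) * (g p.1 - g p.2)) =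
        (fun p : ℝ × ℝ => f p.1 * g p.1 + f p.2 * g p.2
          - (f p.1 * g p.2 + f p.2 * g p.1)) := by
      funext p; ring
    rw [show (∫ p : ℝ × ℝ, (f p.1 - f p.2) * (g p.1 - g p.2) ∂μ.prod μ)
        = ∫ p : ℝ × ℝ, (f p.1 * g p.1 + f p.2 * g p.2
          - (f p.1 * g p.2 + f p.2 * g p.1)) ∂μ.prod μ from by rw [hfun],
      integral_sub i12 i34]
    rw [integral_add i1 i2, integral_add i3 i4]
    ring
  rw [expand, e1, e2, e3, e4] at key
  nlinarith [key]

lemma measurable_finCons {n : ℕ} :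
    Measurable (fun p : ℝ × (Fin n → ℝ) => (Fin.cons p.1 p.2 : Fin (n+1) → ℝ)) := by
  refine measurable_pi_lambda _ (fun i => ?_)
  refine Fin.cases ?_ (fun j => ?_) i
  · simpa using measurable_fst
  · exact (measurable_pi_apply j).comp measurable_snd

lemma monotone_finCons {n : ℕ} :
    Monotone (fun p : ℝ × (Fin n → ℝ) => (Fin.cons p.1 p.2 : Fin (n+1) → ℝ)) := by
  intro p q hpq i
  refine Fin.cases ?_ (fun j => ?_) i
  · simpa using hpq.1
  · simpa using hpq.2 j


lemma harris_fin : ∀ (n : ℕ) (μ : Fin n → Measure ℝ),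
    (∀ i, IsProbabilityMeasure (μ i)) →
    ∀ (f g : (Fin n → ℝ) → ℝ) (Cf Cg : ℝ), Measurable f → Measurable g →
    Monotone f → Monotone g → (∀ z, |f z| ≤ Cf) → (∀ z, |g z| ≤ Cg) →
    (∫ z, f z ∂Measure.pi μ) * (∫ z, g z ∂Measure.pi μ) ≤ ∫ z, f z * g z ∂Measure.pi μ := by
  intro n
  induction n with
  | zero =>
    intro μ hμ f g Cf Cg hfm hgm hf hg hbf hbg
    rw [Measure.pi_of_empty]
    rw [integral_dirac, integral_dirac, integral_dirac]
  | succ n ih =>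
    intro μ hμ f g Cf Cg hfm hgm hf hg hbf hbg
    haveI := hμ
    set ν := μ 0 with hν
    set ρ := Measure.pi (fun i : Fin n => μ ((0 : Fin (n+1)).succAbove i)) with hρ
    haveI : ∀ i : Fin n, IsProbabilityMeasure (μ ((0 : Fin (n+1)).succAbove i)) := fun i => hμ _
    have key : ∀ h : (Fin (n+1) → ℝ) → ℝ,
        ∫ z, h z ∂Measure.pi μ = ∫ p : ℝ × (Fin n → ℝ), h (Fin.cons p.1 p.2) ∂ν.prod ρ := by
      intro h
      have h1 := ((measurePreserving_piFinSuccAbove μ 0).symm).integral_comp' h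
      simp only [MeasurableEquiv.piFinSuccAbove_symm_apply, Fin.insertNthEquiv,
        Equiv.coe_fn_mk, Fin.insertNth_zero] at h1
      exact h1.symm
    have hconsm : ∀ t : ℝ, Measurable (fun w : Fin n → ℝ => (Fin.cons t w : Fin (n+1) → ℝ)) :=
      fun t => measurable_finCons.comp (measurable_const.prodMk measurable_id)
    have hfcm : Measurable (fun p : ℝ × (Fin n → ℝ) => f (Fin.cons p.1 p.2)) :=
      hfm.comp measurable_finCons
    have hgcm : Measurable (fun p : ℝ × (Fin n → ℝ) => g (Fin.cons p.1 p.2)) :=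
      hgm.comp measurable_finCons
    set F : ℝ → ℝ := fun t => ∫ w, f (Fin.cons t w) ∂ρ with hF
    set G : ℝ → ℝ := fun t => ∫ w, g (Fin.cons t w) ∂ρ with hG
    have hFm : Measurable F :=
      hfcm.stronglyMeasurable.integral_prod_right'.measurable
    have hGm : Measurable G :=
      hgcm.stronglyMeasurable.integral_prod_right'.measurable
    have hFb : ∀ t, |F t| ≤ Cf := fun t =>
      abs_integral_le (hfm.comp (hconsm t)) (fun w => hbf _)
    have hGb : ∀ t, |G t| ≤ Cg := fun t =>
      abs_integral_le (hgm.comp (hconsm t)) (fun w => hbg _)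
    have hFmono : Monotone F := by
      intro t t' htt
      refine integral_mono (bdd_integrable (hfm.comp (hconsm t)) (fun w => hbf _))
        (bdd_integrable (hfm.comp (hconsm t')) (fun w => hbf _)) (fun w => ?_)
      exact hf (monotone_finCons (show ((t, w) : ℝ × (Fin n → ℝ)) ≤ (t', w) from ⟨htt, le_rfl⟩))
    have hGmono : Monotone G := by
      intro t t' htt
      refine integral_mono (bdd_integrable (hgm.comp (hconsm t)) (fun w => hbg _))
        (bdd_integrable (hgm.comp (hconsm t')) (fun w => hbg _)) (fun w => ?_)
      exact hg (monotone_finCons (show ((t, w) : ℝ × (Fin n → ℝ)) ≤ (t', w) from ⟨htt, le_rfl⟩))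
    -- marginals
    have hfF : ∫ z, f z ∂Measure.pi μ = ∫ t, F t ∂ν := by
      rw [key f]
      exact integral_prod _ (bdd_integrable hfcm (fun p => hbf _))
    have hgG : ∫ z, g z ∂Measure.pi μ = ∫ t, G t ∂ν := by
      rw [key g]
      exact integral_prod _ (bdd_integrable hgcm (fun p => hbg _))
    have hCf0 : 0 ≤ Cf := le_trans (abs_nonneg _) (hbf (fun _ => 0))
    have hCg0 : 0 ≤ Cg := le_trans (abs_nonneg _) (hbg (fun _ => 0))
    have hfgb : ∀ z, |f z * g z| ≤ Cf * Cg := fun z => by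
      rw [abs_mul]
      exact mul_le_mul (hbf z) (hbg z) (abs_nonneg _) hCf0
    have step1 : ∫ z, f z * g z ∂Measure.pi μ
        = ∫ t, (∫ w, f (Fin.cons t w) * g (Fin.cons t w) ∂ρ) ∂ν := by
      rw [key (fun z => f z * g z)]
      exact integral_prod _ (bdd_integrable (hfcm.mul hgcm) (fun p => hfgb _))
    have hinner_meas : Measurable (fun t => ∫ w, f (Fin.cons t w) * g (Fin.cons t w) ∂ρ) :=
      (hfcm.mul hgcm).stronglyMeasurable.integral_prod_right'.measurable
    have hinner_b : ∀ t, |∫ w, f (Fin.cons t w) * g (Fin.cons t w) ∂ρ| ≤ Cf * Cg := fun t =>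
      abs_integral_le ((hfm.comp (hconsm t)).mul (hgm.comp (hconsm t))) (fun w => hfgb _)
    have step2 : ∫ t, F t * G t ∂ν
        ≤ ∫ t, (∫ w, f (Fin.cons t w) * g (Fin.cons t w) ∂ρ) ∂ν := by
      refine integral_mono
        (bdd_integrable (hFm.mul hGm) (C := Cf * Cg) (fun t => by
          rw [abs_mul]; exact mul_le_mul (hFb t) (hGb t) (abs_nonneg _) hCf0))
        (bdd_integrable hinner_meas hinner_b) (fun t => ?_)
      exact ih _ (fun i => hμ _) _ _ Cf Cg (hfm.comp (hconsm t)) (hgm.comp (hconsm t))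
        (fun w w' hww => hf (monotone_finCons (show ((t,w) : ℝ × (Fin n → ℝ)) ≤ (t,w') from
          ⟨le_rfl, hww⟩)))
        (fun w w' hww => hg (monotone_finCons (show ((t,w) : ℝ × (Fin n → ℝ)) ≤ (t,w') from
          ⟨le_rfl, hww⟩)))
        (fun w => hbf _) (fun w => hbg _)
    have step3 : (∫ t, F t ∂ν) * (∫ t, G t ∂ν) ≤ ∫ t, F t * G t ∂ν :=
      chebyshev_integral hFm hGm hFmono hGmono hFb hGb
    rw [hfF, hgG, step1]
    exact le_trans step3 step2

lemma harris_pi {ι : Type*} [Fintype ι] (μ : ι → Measure ℝ)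
    (hμ : ∀ i, IsProbabilityMeasure (μ i))
    (f g : (ι → ℝ) → ℝ) (Cf Cg : ℝ) (hfm : Measurable f) (hgm : Measurable g)
    (hf : Monotone f) (hg : Monotone g) (hbf : ∀ z, |f z| ≤ Cf) (hbg : ∀ z, |g z| ≤ Cg) :
    (∫ z, f z ∂Measure.pi μ) * (∫ z, g z ∂Measure.pi μ) ≤ ∫ z, f z * g z ∂Measure.pi μ := by
  classical
  set e := (Fintype.equivFin ι).symm with he
  set pc := MeasurableEquiv.piCongrLeft (fun _ : ι => ℝ) e with hpc
  have happ : ∀ (x : Fin (Fintype.card ι) → ℝ) (v : ι), pc x v = x (e.symm v) := by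
    intro x v
    have h := Equiv.piCongrLeft_apply_apply (fun _ : ι => ℝ) e x (e.symm v)
    rw [Equiv.apply_symm_apply] at h
    simpa [hpc, MeasurableEquiv.coe_piCongrLeft] using h
  have hmono : Monotone (fun x => pc x) := by
    intro x y hxy v
    simp only []
    rw [happ x v, happ y v]; exact hxy _
  have hmeas : Measurable (fun x => pc x) := pc.measurable
  have key : ∀ h : (ι → ℝ) → ℝ, ∫ z, h z ∂Measure.pi μ
      = ∫ x, h (pc x) ∂Measure.pi (fun i => μ (e i)) :=
    fun h => ((measurePreserving_piCongrLeft μ e).integral_comp' h).symm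
  rw [key f, key g, key (fun z => f z * g z)]
  exact harris_fin _ _ (fun i => hμ _) _ _ Cf Cg (hfm.comp hmeas) (hgm.comp hmeas)
    (fun x y hxy => hf (hmono hxy)) (fun x y hxy => hg (hmono hxy))
    (fun z => hbf _) (fun z => hbg _)

lemma monotone_finset_prod {ι κ : Type*} (s : Finset κ) (f : κ → (ι → ℝ) → ℝ)
    (h0 : ∀ k ∈ s, ∀ z, 0 ≤ f k z) (hm : ∀ k ∈ s, Monotone (f k)) :
    Monotone (fun z => ∏ k ∈ s, f k z) := by
  intro z z' hz
  exact Finset.prod_le_prod (fun k hk => h0 k hk z) (fun k hk => hm k hk hz)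

lemma harris_prod {ι κ : Type*} [Fintype ι] (μ : ι → Measure ℝ)
    (hμ : ∀ i, IsProbabilityMeasure (μ i)) (s : Finset κ)
    (f : κ → (ι → ℝ) → ℝ) (C : κ → ℝ)
    (hm : ∀ k, Measurable (f k)) (hmono : ∀ k, Monotone (f k))
    (h0 : ∀ k z, 0 ≤ f k z) (hb : ∀ k z, f k z ≤ C k) :
    (∏ k ∈ s, ∫ z, f k z ∂Measure.pi μ) ≤ ∫ z, ∏ k ∈ s, f k z ∂Measure.pi μ := by
  classical
  haveI := hμ
  haveI : IsProbabilityMeasure (Measure.pi μ) := by infer_instance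
  induction s using Finset.cons_induction with
  | empty => simp
  | cons a s ha ih =>
    have hprodm : Measurable (fun z => ∏ k ∈ s, f k z) :=
      Finset.measurable_prod s (fun k _ => hm k)
    have hprodmono : Monotone (fun z => ∏ k ∈ s, f k z) :=
      monotone_finset_prod s f (fun k _ => h0 k) (fun k _ => hmono k)
    have hCnn : ∀ k, 0 ≤ C k := fun k => le_trans (h0 k (fun _ => 0)) (hb k _)
    have hprodb : ∀ z, |∏ k ∈ s, f k z| ≤ ∏ k ∈ s, C k := fun z => by
      rw [abs_of_nonneg (Finset.prod_nonneg (fun k _ => h0 k z))]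
      exact Finset.prod_le_prod (fun k _ => h0 k z) (fun k _ => hb k z)
    have hab : ∀ z, |f a z| ≤ C a := fun z => by
      rw [abs_of_nonneg (h0 a z)]; exact hb a z
    have h1 : (∫ z, f a z ∂Measure.pi μ) * (∫ z, ∏ k ∈ s, f k z ∂Measure.pi μ)
        ≤ ∫ z, f a z * ∏ k ∈ s, f k z ∂Measure.pi μ :=
      harris_pi μ hμ (f a) (fun z => ∏ k ∈ s, f k z) (C a) (∏ k ∈ s, C k)
        (hm a) hprodm (hmono a) hprodmono hab hprodb
    have h2 : (0:ℝ) ≤ ∫ z, f a z ∂Measure.pi μ := integral_nonneg (fun z => h0 a z)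
    calc ∏ k ∈ Finset.cons a s ha, ∫ z, f k z ∂Measure.pi μ
        = (∫ z, f a z ∂Measure.pi μ) * ∏ k ∈ s, ∫ z, f k z ∂Measure.pi μ := by
          rw [Finset.prod_cons]
      _ ≤ (∫ z, f a z ∂Measure.pi μ) * ∫ z, ∏ k ∈ s, f k z ∂Measure.pi μ :=
          mul_le_mul_of_nonneg_left ih h2
      _ ≤ ∫ z, f a z * ∏ k ∈ s, f k z ∂Measure.pi μ := h1
      _ = ∫ z, ∏ k ∈ Finset.cons a s ha, f k z ∂Measure.pi μ := by
          simp only [Finset.prod_cons]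

lemma cubeMeasure_nbr_aux {V : Type*} [Fintype V] [DecidableEq V]
    (p : V → Prop) [DecidablePred p] [Unique (Subtype p)] (i : V) (hpi : p i)
    (N : Finset V) (hiN : ∀ j ∈ N, ¬ p j) (R : ℝ → Set ℝ)
    (hpair : MeasurableSet {q : ℝ × ℝ | q.2 ∈ R q.1}) :
    Measure.pi (fun _ : V => m0') {z : V → ℝ | ∀ j ∈ N, z j ∈ R (z i)}
      = ∫⁻ t, (m0' (R t)) ^ N.card ∂m0' := by
  classical
  set e := MeasurableEquiv.piEquivPiSubtypeProd (fun _ : V => ℝ) p with he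
  have mp := measurePreserving_piEquivPiSubtypeProd (fun _ : V => m0') p
  set S : Set (V → ℝ) := {z : V → ℝ | ∀ j ∈ N, z j ∈ R (z i)} with hSdef
  have hS : MeasurableSet S := by
    have hSeq : S = ⋂ j ∈ N, (fun z : V → ℝ => (z i, z j)) ⁻¹' {q : ℝ × ℝ | q.2 ∈ R q.1} := by
      ext z; simp [hSdef, Set.mem_iInter]
    rw [hSeq]
    exact MeasurableSet.biInter N.countable_toSet fun j _ =>
      ((measurable_pi_apply i).prodMk (measurable_pi_apply j)) hpair
  set T : Set ((Subtype p → ℝ) × ({v // ¬ p v} → ℝ)) := e.symm ⁻¹' S with hT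
  have hTm : MeasurableSet T := e.symm.measurable hS
  have h1 : Measure.pi (fun _ : V => m0') S
      = ((Measure.pi fun _ : Subtype p => m0').prod (Measure.pi fun _ : {v // ¬ p v} => m0')) T := by
    have h0 := mp.measure_preimage hTm.nullMeasurableSet
    have hpre : ⇑e ⁻¹' T = S := by ext z; simp [hT]
    rw [hpre] at h0
    exact h0
  have hslice : ∀ (a : Subtype p → ℝ) (b : {v // ¬ p v} → ℝ),
      ((a, b) ∈ T ↔ b ∈ Set.pi Set.univ
        (fun q : {v // ¬ p v} => if (q : V) ∈ N then R (a ⟨i, hpi⟩) else Set.univ)) := by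
    intro a b
    have hesymm : ∀ v, e.symm (a, b) v = if h : p v then a ⟨v, h⟩ else b ⟨v, h⟩ := fun v => rfl
    constructor
    · intro hmem q _
      by_cases hq : (q : V) ∈ N
      · simp only [hq, if_pos]
        have h2 := hmem q hq
        rw [hesymm, hesymm, dif_neg q.2, dif_pos hpi] at h2
        exact h2
      · simp [hq]
    · intro hmem j hj
      have hji : ¬ p j := hiN j hj
      have h2 := hmem ⟨j, hji⟩ (Set.mem_univ _)
      simp only [hj, if_pos] at h2
      show e.symm (a, b) j ∈ R (e.symm (a, b) i)
      rw [hesymm, hesymm, dif_neg hji, dif_pos hpi]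
      exact h2
  have h2 : ∀ a : Subtype p → ℝ,
      (Measure.pi fun _ : {v // ¬ p v} => m0') (Prod.mk a ⁻¹' T)
        = (m0' (R (a ⟨i, hpi⟩))) ^ N.card := by
    intro a
    have hset : (Prod.mk a ⁻¹' T) = Set.pi Set.univ
        (fun q : {v // ¬ p v} => if (q : V) ∈ N then R (a ⟨i, hpi⟩) else Set.univ) := by
      ext b; exact hslice a b
    rw [hset, Measure.pi_pi]
    have hite : ∀ q : {v // ¬ p v},
        m0' (if (q : V) ∈ N then R (a ⟨i, hpi⟩) else Set.univ)
          = (fun v : V => if v ∈ N then m0' (R (a ⟨i, hpi⟩)) else 1) (q : V) := by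
      intro q
      by_cases hq : (q : V) ∈ N <;> simp [hq]
    rw [Finset.prod_congr rfl (fun q _ => hite q)]
    rw [← Finset.prod_subtype (Finset.univ.filter fun v => ¬ p v)
      (by intro x; simp) (fun v : V => if v ∈ N then m0' (R (a ⟨i, hpi⟩)) else 1)]
    rw [Finset.prod_ite_mem, Finset.prod_const]
    congr 1
    have hinter : (Finset.univ.filter fun v => ¬ p v) ∩ N = N := by
      ext v
      simp only [Finset.mem_inter, Finset.mem_filter, Finset.mem_univ, true_and]
      exact ⟨fun h => h.2, fun hv => ⟨hiN v hv, hv⟩⟩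
    rw [hinter]
  have h3 : Measure.pi (fun _ : V => m0') S
      = ∫⁻ a, (m0' (R (a ⟨i, hpi⟩))) ^ N.card ∂(Measure.pi fun _ : Subtype p => m0') := by
    rw [h1, Measure.prod_apply hTm]
    exact lintegral_congr fun a => h2 a
  have hgm : Measurable (fun t : ℝ => (m0' (R t)) ^ N.card) := by
    have hm : Measurable (fun t : ℝ => m0' (R t)) := by
      have h := measurable_measure_prodMk_left (ν := m0') hpair
      have hpre : ∀ t : ℝ, Prod.mk t ⁻¹' {q : ℝ × ℝ | q.2 ∈ R q.1} = R t := fun t => by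
        ext s; simp
      simpa [hpre] using h
    exact hm.pow_const _
  have h4 := (measurePreserving_piUnique (fun _ : Subtype p => m0')).lintegral_comp hgm
  rw [h3, ← h4]
  refine lintegral_congr fun a => ?_
  have hu : (MeasurableEquiv.piUnique fun _ : Subtype p => ℝ) a = a default := rfl
  have hd : (default : Subtype p) = ⟨i, hpi⟩ := Subsingleton.elim _ _
  rw [hu, hd]

lemma cubeMeasure_nbr {V : Type*} [Fintype V] [DecidableEq V]
    (i : V) (N : Finset V) (hiN : i ∉ N) (R : ℝ → Set ℝ)
    (hpair : MeasurableSet {q : ℝ × ℝ | q.2 ∈ R q.1}) :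
    Measure.pi (fun _ : V => m0') {z : V → ℝ | ∀ j ∈ N, z j ∈ R (z i)}
      = ∫⁻ t, (m0' (R t)) ^ N.card ∂m0' := by
  haveI : Unique (Subtype (fun v : V => v = i)) :=
    ⟨⟨⟨i, rfl⟩⟩, fun q => Subtype.ext q.2⟩
  exact cubeMeasure_nbr_aux (fun v => v = i) i rfl N
    (fun j hj h => hiN (h ▸ hj)) R hpair

lemma m0_Ici {t : ℝ} (ht : t ∈ Set.Icc (0:ℝ) 1) :
    m0' (Set.Ici (1 - t)) = ENNReal.ofReal t := by
  rw [m0', Measure.restrict_apply measurableSet_Ici]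
  have hset : Set.Ici (1 - t) ∩ Set.Icc 0 1 = Set.Icc (1 - t) 1 := by
    ext x
    simp only [Set.mem_inter_iff, Set.mem_Ici, Set.mem_Icc]
    constructor
    · rintro ⟨h1, _, h3⟩; exact ⟨h1, h3⟩
    · rintro ⟨h1, h2⟩
      exact ⟨h1, by linarith [ht.2], h2⟩
  rw [hset, Real.volume_Icc]
  congr 1; ring

lemma m0_Iic {t : ℝ} (ht : t ∈ Set.Icc (0:ℝ) 1) :
    m0' (Set.Iic (1 - t)) = ENNReal.ofReal (1 - t) := by
  rw [m0', Measure.restrict_apply measurableSet_Iic]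
  have hset : Set.Iic (1 - t) ∩ Set.Icc 0 1 = Set.Icc 0 (1 - t) := by
    ext x
    simp only [Set.mem_inter_iff, Set.mem_Iic, Set.mem_Icc]
    constructor
    · rintro ⟨h1, h2, _⟩; exact ⟨h2, h1⟩
    · rintro ⟨h1, h2⟩
      exact ⟨h2, h1, by linarith [ht.1]⟩
  rw [hset, Real.volume_Icc]
  congr 1; ring

lemma integral_Icc_pow (d : ℕ) : ∫ t in Set.Icc (0:ℝ) 1, t ^ d = 1 / (d + 1 : ℝ) := by
  rw [integral_Icc_eq_integral_Ioc, ← intervalIntegral.integral_of_le zero_le_one,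
    integral_pow]
  push_cast
  norm_num

lemma integral_Icc_one_sub_pow (d : ℕ) :
    ∫ t in Set.Icc (0:ℝ) 1, (1 - t) ^ d = 1 / (d + 1 : ℝ) := by
  rw [integral_Icc_eq_integral_Ioc, ← intervalIntegral.integral_of_le zero_le_one]
  have := intervalIntegral.integral_comp_sub_left (a := 0) (b := 1) (fun s => s ^ d) 1
  simp only [sub_zero, sub_self] at this
  rw [this, integral_pow]
  push_cast
  norm_num

lemma lint_Ici (d : ℕ) :
    ∫⁻ t, (m0' (Set.Ici (1 - t))) ^ d ∂m0' = ENNReal.ofReal (1 / (d + 1 : ℝ)) := by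
  have h1 : ∫⁻ t, (m0' (Set.Ici (1 - t))) ^ d ∂m0'
      = ∫⁻ t in Set.Icc (0:ℝ) 1, ENNReal.ofReal (t ^ d) ∂volume := by
    refine setLIntegral_congr_fun_ae measurableSet_Icc (Filter.Eventually.of_forall ?_)
    intro t ht
    rw [m0_Ici ht, ← ENNReal.ofReal_pow ht.1]
  have hint : IntegrableOn (fun t : ℝ => t ^ d) (Set.Icc (0:ℝ) 1) volume :=
    (continuous_pow d).integrableOn_Icc
  have hnn : 0 ≤ᵐ[volume.restrict (Set.Icc (0:ℝ) 1)] (fun t : ℝ => t ^ d) :=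
    (ae_restrict_iff' measurableSet_Icc).2 (Filter.Eventually.of_forall fun t ht =>
      pow_nonneg ht.1 d)
  rw [h1, ← ofReal_integral_eq_lintegral_ofReal hint hnn, integral_Icc_pow]

lemma lint_Iic (d : ℕ) :
    ∫⁻ t, (m0' (Set.Iic (1 - t))) ^ d ∂m0' = ENNReal.ofReal (1 / (d + 1 : ℝ)) := by
  have h1 : ∫⁻ t, (m0' (Set.Iic (1 - t))) ^ d ∂m0'
      = ∫⁻ t in Set.Icc (0:ℝ) 1, ENNReal.ofReal ((1 - t) ^ d) ∂volume := by
    refine setLIntegral_congr_fun_ae measurableSet_Icc (Filter.Eventually.of_forall ?_)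
    intro t ht
    rw [m0_Iic ht, ← ENNReal.ofReal_pow (by linarith [ht.2])]
  have hint : IntegrableOn (fun t : ℝ => (1 - t) ^ d) (Set.Icc (0:ℝ) 1) volume :=
    (((continuous_const.sub continuous_id).pow d)).integrableOn_Icc
  have hnn : 0 ≤ᵐ[volume.restrict (Set.Icc (0:ℝ) 1)] (fun t : ℝ => (1 - t) ^ d) :=
    (ae_restrict_iff' measurableSet_Icc).2 (Filter.Eventually.of_forall fun t ht =>
      pow_nonneg (by linarith [ht.2]) d)
  rw [h1, ← ofReal_integral_eq_lintegral_ofReal hint hnn, integral_Icc_one_sub_pow]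

section marginals
variable {V : Type*} [Fintype V] [DecidableEq V]

lemma measurableSet_nbr (i : V) (N : Finset V) (R : ℝ → Set ℝ)
    (hpair : MeasurableSet {q : ℝ × ℝ | q.2 ∈ R q.1}) :
    MeasurableSet {z : V → ℝ | ∀ j ∈ N, z j ∈ R (z i)} := by
  have hSeq : {z : V → ℝ | ∀ j ∈ N, z j ∈ R (z i)}
      = ⋂ j ∈ N, (fun z : V → ℝ => (z i, z j)) ⁻¹' {q : ℝ × ℝ | q.2 ∈ R q.1} := by
    ext z; simp [Set.mem_iInter]
  rw [hSeq]
  exact MeasurableSet.biInter N.countable_toSet fun j _ =>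
    ((measurable_pi_apply i).prodMk (measurable_pi_apply j)) hpair

lemma integral_if_nbr (i : V) (N : Finset V) (R : ℝ → Set ℝ)
    (hpair : MeasurableSet {q : ℝ × ℝ | q.2 ∈ R q.1}) (c : ℝ) :
    ∫ z, (if ∀ j ∈ N, z j ∈ R (z i) then c else 1) ∂Measure.pi (fun _ : V => m0')
      = 1 + (c - 1) *
        (Measure.pi (fun _ : V => m0') {z : V → ℝ | ∀ j ∈ N, z j ∈ R (z i)}).toReal := by
  set S := {z : V → ℝ | ∀ j ∈ N, z j ∈ R (z i)} with hSdef
  have hS : MeasurableSet S := measurableSet_nbr i N R hpair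
  have hfun : ∀ z : V → ℝ, (if ∀ j ∈ N, z j ∈ R (z i) then c else 1)
      = S.indicator (fun _ => c - 1) z + 1 := by
    intro z
    by_cases h : ∀ j ∈ N, z j ∈ R (z i)
    · rw [if_pos h, Set.indicator_of_mem (by exact h)]; ring
    · rw [if_neg h, Set.indicator_of_notMem (by exact h)]; ring
  rw [integral_congr_ae (Filter.Eventually.of_forall hfun)]
  haveI : IsProbabilityMeasure (Measure.pi (fun _ : V => m0')) := by infer_instance
  rw [integral_add ((integrable_const (c - 1)).indicator hS) (integrable_const 1)]
  rw [integral_indicator_const _ hS, integral_const]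
  simp only [smul_eq_mul, measureReal_def, measure_univ, ENNReal.toReal_one, one_smul]
  ring

lemma integral_if_up (i : V) (N : Finset V) (hiN : i ∉ N) (x : ℝ) :
    ∫ z, (if ∀ j ∈ N, 1 - z j ≤ z i then x else 1) ∂Measure.pi (fun _ : V => m0')
      = x / (N.card + 1) + N.card / (N.card + 1) := by
  have hpair : MeasurableSet {q : ℝ × ℝ | q.2 ∈ Set.Ici (1 - q.1)} :=
    measurableSet_le (measurable_const.sub measurable_fst) measurable_snd
  have hcond : ∀ z : V → ℝ,
      (if ∀ j ∈ N, 1 - z j ≤ z i then x else 1)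
        = (if ∀ j ∈ N, z j ∈ Set.Ici (1 - z i) then x else 1) := by
    intro z
    refine if_congr ?_ rfl rfl
    constructor
    · intro h j hj
      have := h j hj
      simp only [Set.mem_Ici]
      linarith
    · intro h j hj
      have := h j hj
      simp only [Set.mem_Ici] at this
      linarith
  rw [integral_congr_ae (Filter.Eventually.of_forall hcond)]
  rw [show (∫ z, (if ∀ j ∈ N, z j ∈ Set.Ici (1 - z i) then x else 1) ∂Measure.pi (fun _ : V => m0'))
      = _ from by convert integral_if_nbr i N (fun t => Set.Ici (1 - t)) hpair x,
    cubeMeasure_nbr i N hiN (fun t => Set.Ici (1 - t)) hpair, lint_Ici,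
    ENNReal.toReal_ofReal (by positivity)]
  have hd : ((N.card : ℝ) + 1) ≠ 0 := by positivity
  field_simp
  ring

lemma integral_if_down (i : V) (N : Finset V) (hiN : i ∉ N) (y : ℝ) :
    ∫ z, (if ∀ j ∈ N, z j ≤ 1 - z i then y else 1) ∂Measure.pi (fun _ : V => m0')
      = y / (N.card + 1) + N.card / (N.card + 1) := by
  have hpair : MeasurableSet {q : ℝ × ℝ | q.2 ∈ Set.Iic (1 - q.1)} :=
    measurableSet_le measurable_snd (measurable_const.sub measurable_fst)
  have hcond : ∀ z : V → ℝ,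
      (if ∀ j ∈ N, z j ≤ 1 - z i then y else 1)
        = (if ∀ j ∈ N, z j ∈ Set.Iic (1 - z i) then y else 1) := by
    intro z
    exact if_congr (by simp [Set.mem_Iic]) rfl rfl
  rw [integral_congr_ae (Filter.Eventually.of_forall hcond)]
  rw [show (∫ z, (if ∀ j ∈ N, z j ∈ Set.Iic (1 - z i) then y else 1) ∂Measure.pi (fun _ : V => m0'))
      = _ from by convert integral_if_nbr i N (fun t => Set.Iic (1 - t)) hpair y,
    cubeMeasure_nbr i N hiN (fun t => Set.Iic (1 - t)) hpair, lint_Iic,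
    ENNReal.toReal_ofReal (by positivity)]
  have hd : ((N.card : ℝ) + 1) ≠ 0 := by positivity
  field_simp
  ring

end marginals


/-- For vertex weights `x^(i) ≥ 1` on `A` and `0 ≤ y^(j) ≤ 1` on `B`, the expectation of
`Π_{i∈A} X̂_i · Π_{j∈B} Ŷ_j` (with i.i.d. uniform `z i` playing the role of `x_i` for
`i ∈ A` and of `y_j` for `j ∈ B`) is at least
`Π_{i∈A} (x^(i)/(d_i+1) + d_i/(d_i+1)) · Π_{j∈B} (y^(j)/(d_j+1) + d_j/(d_j+1))`. -/
theorem integral_weighted_activities_ge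
    {V : Type*} [Fintype V] [DecidableEq V] (G : SimpleGraph V) [DecidableRel G.Adj]
    (A : Set V) (hbip : IsBipartition G A)
    (xw yw : V → ℝ)
    (hxw : ∀ i ∈ A, 1 ≤ xw i) (hyw0 : ∀ j ∉ A, 0 ≤ yw j) (hyw1 : ∀ j ∉ A, yw j ≤ 1) :
    (∫ z : V → ℝ,
        (∏ i ∈ Finset.univ.filter (· ∈ A),
          (if ∀ j, G.Adj i j → 1 - z j ≤ z i then xw i else 1)) *
        (∏ j ∈ Finset.univ.filter (· ∉ A),
          (if ∀ i, G.Adj j i → z i ≤ 1 - z j then yw j else 1))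
        ∂(cubeMeasure V)) ≥
      (∏ i ∈ Finset.univ.filter (· ∈ A),
        (xw i / ((G.degree i : ℝ) + 1) + (G.degree i : ℝ) / ((G.degree i : ℝ) + 1))) *
      ∏ j ∈ Finset.univ.filter (· ∉ A),
        (yw j / ((G.degree j : ℝ) + 1) + (G.degree j : ℝ) / ((G.degree j : ℝ) + 1)) := by
  rw [ge_iff_le]
  have hcube : cubeMeasure V = Measure.pi (fun _ : V => m0') := rfl
  set F : V → (V → ℝ) → ℝ := fun v z =>
    if v ∈ A then (if ∀ j, G.Adj v j → 1 - z j ≤ z v then xw v else 1)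
    else (if ∀ i', G.Adj v i' → z i' ≤ 1 - z v then yw v else 1) with hF
  set C : V → ℝ := fun v => if v ∈ A then xw v else 1 with hC
  set rhs : V → ℝ := fun v =>
    (if v ∈ A then xw v else yw v) / ((G.degree v : ℝ) + 1)
      + (G.degree v : ℝ) / ((G.degree v : ℝ) + 1) with hrhs
  -- measurability
  have hSup : ∀ v : V, MeasurableSet {z : V → ℝ | ∀ j, G.Adj v j → 1 - z j ≤ z v} := by
    intro v
    have : {z : V → ℝ | ∀ j, G.Adj v j → 1 - z j ≤ z v}
        = ⋂ j, {z : V → ℝ | G.Adj v j → 1 - z j ≤ z v} := by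
      ext z; simp [Set.mem_iInter]
    rw [this]
    refine MeasurableSet.iInter fun j => ?_
    by_cases h : G.Adj v j
    · have : {z : V → ℝ | G.Adj v j → 1 - z j ≤ z v} = {z : V → ℝ | 1 - z j ≤ z v} := by
        ext z; simp [h]
      rw [this]
      exact measurableSet_le (measurable_const.sub (measurable_pi_apply j)) (measurable_pi_apply v)
    · have : {z : V → ℝ | G.Adj v j → 1 - z j ≤ z v} = Set.univ := by
        ext z; simp [h]
      rw [this]
      exact MeasurableSet.univ
  have hSdn : ∀ v : V, MeasurableSet {z : V → ℝ | ∀ i', G.Adj v i' → z i' ≤ 1 - z v} := by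
    intro v
    have : {z : V → ℝ | ∀ i', G.Adj v i' → z i' ≤ 1 - z v}
        = ⋂ j, {z : V → ℝ | G.Adj v j → z j ≤ 1 - z v} := by
      ext z; simp [Set.mem_iInter]
    rw [this]
    refine MeasurableSet.iInter fun j => ?_
    by_cases h : G.Adj v j
    · have : {z : V → ℝ | G.Adj v j → z j ≤ 1 - z v} = {z : V → ℝ | z j ≤ 1 - z v} := by
        ext z; simp [h]
      rw [this]
      exact measurableSet_le (measurable_pi_apply j) (measurable_const.sub (measurable_pi_apply v))
    · have : {z : V → ℝ | G.Adj v j → z j ≤ 1 - z v} = Set.univ := by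
        ext z; simp [h]
      rw [this]
      exact MeasurableSet.univ
  have hmeas_ite : ∀ (S : Set (V → ℝ)), MeasurableSet S → ∀ a : ℝ, ∀ f : (V → ℝ) → ℝ,
      (∀ z, (z ∈ S → f z = a) ∧ (z ∉ S → f z = 1)) → Measurable f := by
    intro S hS a f hf
    have : f = fun z => S.indicator (fun _ => a - 1) z + 1 := by
      funext z
      by_cases h : z ∈ S
      · rw [(hf z).1 h, Set.indicator_of_mem h]; ring
      · rw [(hf z).2 h, Set.indicator_of_notMem h]; ring
    rw [this]
    exact ((measurable_const.indicator hS).add measurable_const)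
  have hFm : ∀ v, Measurable (F v) := by
    intro v
    by_cases hv : v ∈ A
    · simp only [hF, if_pos hv]
      exact hmeas_ite _ (hSup v) (xw v) _
        (fun z => ⟨fun h => if_pos h, fun h => if_neg h⟩)
    · simp only [hF, if_neg hv]
      exact hmeas_ite _ (hSdn v) (yw v) _
        (fun z => ⟨fun h => if_pos h, fun h => if_neg h⟩)
  -- monotonicity
  have hFmono : ∀ v, Monotone (F v) := by
    intro v z z' hzz
    by_cases hv : v ∈ A
    · simp only [hF, if_pos hv]
      by_cases h : ∀ j, G.Adj v j → 1 - z j ≤ z v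
      · have h' : ∀ j, G.Adj v j → 1 - z' j ≤ z' v := fun j hj => by
          have := h j hj; have h1 := hzz j; have h2 := hzz v; linarith
        rw [if_pos h, if_pos h']
      · rw [if_neg h]
        by_cases h' : ∀ j, G.Adj v j → 1 - z' j ≤ z' v
        · rw [if_pos h']; exact hxw v hv
        · rw [if_neg h']
    · simp only [hF, if_neg hv]
      by_cases h' : ∀ i', G.Adj v i' → z' i' ≤ 1 - z' v
      · have h : ∀ i', G.Adj v i' → z i' ≤ 1 - z v := fun j hj => by
          have := h' j hj; have h1 := hzz j; have h2 := hzz v; linarith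
        rw [if_pos h, if_pos h']
      · rw [if_neg h']
        by_cases h : ∀ i', G.Adj v i' → z i' ≤ 1 - z v
        · rw [if_pos h]; exact hyw1 v hv
        · rw [if_neg h]
  have hF0 : ∀ v z, 0 ≤ F v z := by
    intro v z
    by_cases hv : v ∈ A
    · simp only [hF, if_pos hv]
      split
      · linarith [hxw v hv]
      · norm_num
    · simp only [hF, if_neg hv]
      split
      · exact hyw0 v hv
      · norm_num
  have hFb : ∀ v z, F v z ≤ C v := by
    intro v z
    by_cases hv : v ∈ A
    · simp only [hF, hC, if_pos hv]
      split
      · exact le_refl _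
      · exact hxw v hv
    · simp only [hF, hC, if_neg hv]
      split
      · exact hyw1 v hv
      · exact le_refl _
  -- per-vertex expectations
  have heval : ∀ v : V, ∫ z, F v z ∂Measure.pi (fun _ : V => m0') = rhs v := by
    intro v
    by_cases hv : v ∈ A
    · have hfun : ∀ z : V → ℝ, F v z
          = (if ∀ j ∈ G.neighborFinset v, 1 - z j ≤ z v then xw v else 1) := by
        intro z
        simp only [hF, if_pos hv]
        refine if_congr ?_ rfl rfl
        constructor
        · intro h j hj
          exact h j ((SimpleGraph.mem_neighborFinset _ _ _).mp hj)
        · intro h j hj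
          exact h j ((SimpleGraph.mem_neighborFinset _ _ _).mpr hj)
      rw [integral_congr_ae (Filter.Eventually.of_forall hfun),
        integral_if_up v _ (by simp) (xw v)]
      simp only [hrhs, if_pos hv, SimpleGraph.card_neighborFinset_eq_degree]
    · have hfun : ∀ z : V → ℝ, F v z
          = (if ∀ j ∈ G.neighborFinset v, z j ≤ 1 - z v then yw v else 1) := by
        intro z
        simp only [hF, if_neg hv]
        refine if_congr ?_ rfl rfl
        constructor
        · intro h j hj
          exact h j ((SimpleGraph.mem_neighborFinset _ _ _).mp hj)
        · intro h j hj
          exact h j ((SimpleGraph.mem_neighborFinset _ _ _).mpr hj)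
      rw [integral_congr_ae (Filter.Eventually.of_forall hfun),
        integral_if_down v _ (by simp) (yw v)]
      simp only [hrhs, if_neg hv, SimpleGraph.card_neighborFinset_eq_degree]
  -- integrand equality
  have hinteg : ∀ z : V → ℝ,
      (∏ i ∈ Finset.univ.filter (· ∈ A),
        (if ∀ j, G.Adj i j → 1 - z j ≤ z i then xw i else 1)) *
      (∏ j ∈ Finset.univ.filter (· ∉ A),
        (if ∀ i', G.Adj j i' → z i' ≤ 1 - z j then yw j else 1))
      = ∏ v, F v z := by
    intro z
    rw [← Finset.prod_filter_mul_prod_filter_not Finset.univ (· ∈ A) (fun v => F v z)]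
    congr 1
    · refine Finset.prod_congr rfl fun v hv => ?_
      simp only [Finset.mem_filter] at hv
      simp only [hF]
      rw [if_pos hv.2]
    · refine Finset.prod_congr (by ext v; simp) fun v hv => ?_
      simp only [Finset.mem_filter] at hv
      simp only [hF]
      rw [if_neg hv.2]
  have hRHS : (∏ i ∈ Finset.univ.filter (· ∈ A),
        (xw i / ((G.degree i : ℝ) + 1) + (G.degree i : ℝ) / ((G.degree i : ℝ) + 1))) *
      (∏ j ∈ Finset.univ.filter (· ∉ A),
        (yw j / ((G.degree j : ℝ) + 1) + (G.degree j : ℝ) / ((G.degree j : ℝ) + 1)))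
      = ∏ v, rhs v := by
    rw [← Finset.prod_filter_mul_prod_filter_not Finset.univ (· ∈ A) rhs]
    congr 1
    · refine Finset.prod_congr rfl fun v hv => ?_
      simp only [Finset.mem_filter] at hv
      simp only [hrhs]
      rw [if_pos hv.2]
    · refine Finset.prod_congr (by ext v; simp) fun v hv => ?_
      simp only [Finset.mem_filter] at hv
      simp only [hrhs]
      rw [if_neg hv.2]
  rw [hcube, hRHS]
  calc ∏ v, rhs v = ∏ v, ∫ z, F v z ∂Measure.pi (fun _ : V => m0') :=
        Finset.prod_congr rfl fun v _ => (heval v).symm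
    _ ≤ ∫ z, ∏ v, F v z ∂Measure.pi (fun _ : V => m0') :=
        harris_prod _ (fun _ => inferInstance) Finset.univ F C hFm hFmono hF0 hFb
    _ = _ := integral_congr_ae (Filter.Eventually.of_forall fun z => (hinteg z).symm)
end

section
/- Let H = (A, B, E) be a finite bipartite graph with vertex degrees d_v, let x ≥ 2 and 0 ≤ s ≤ 1 be real numbers. Then T̃_H(x,0) ≥ Π_{v ∈ A} ( (d_v+x)s/(d_v+1) + x(1−s) ) · Π_{u ∈ B} ( s − (s/(d_u+1)) · Π_{v ∈ N(u)} γ_{x,s}(d_v) ). -/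
open scoped Classical


/-- `γ_{x,s}(d) = (d+x)s / ((d+x)s + (d+1)x(1−s))`. -/
noncomputable def gam (x s d : ℝ) : ℝ :=
  ((d + x) * s) / ((d + x) * s + (d + 1) * x * (1 - s))

set_option linter.unusedSectionVars false
namespace PTaux
open Finset

/-- `1 + Σ a ≤ Π (1+a)` for nonnegative `a`. -/
lemma one_add_sum_le_prod {ι : Type*} (T : Finset ι) (a : ι → ℝ)
    (ha : ∀ i ∈ T, 0 ≤ a i) : 1 + ∑ i ∈ T, a i ≤ ∏ i ∈ T, (1 + a i) := by
  classical
  induction T using Finset.cons_induction with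
  | empty => simp
  | cons i T hi ih =>
    rw [Finset.sum_cons, Finset.prod_cons]
    have hai : 0 ≤ a i := ha i (Finset.mem_cons_self i T)
    have hsum : 0 ≤ ∑ j ∈ T, a j := Finset.sum_nonneg fun j hj => ha j (Finset.mem_cons.2 (Or.inr hj))
    have ih' := ih fun j hj => ha j (Finset.mem_cons.2 (Or.inr hj))
    nlinarith [ih', hai, hsum]

/-- Weierstrass: `1 − Σ a ≤ Π (1−a)` for `a ∈ [0,1]`. -/
lemma one_sub_sum_le_prod {ι : Type*} (T : Finset ι) (a : ι → ℝ)
    (ha : ∀ i ∈ T, 0 ≤ a i ∧ a i ≤ 1) : 1 - ∑ i ∈ T, a i ≤ ∏ i ∈ T, (1 - a i) := by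
  classical
  induction T using Finset.cons_induction with
  | empty => simp
  | cons i T hi ih =>
    rw [Finset.sum_cons, Finset.prod_cons]
    obtain ⟨h0, h1⟩ := ha i (Finset.mem_cons_self i T)
    have ih' := ih fun j hj => ha j (Finset.mem_cons.2 (Or.inr hj))
    have hprod0 : (0:ℝ) ≤ ∏ j ∈ T, (1 - a j) :=
      Finset.prod_nonneg fun j hj => by linarith [(ha j (Finset.mem_cons.2 (Or.inr hj))).2]
    have hprod1 : ∏ j ∈ T, (1 - a j) ≤ 1 :=
      Finset.prod_le_one (fun j hj => by linarith [(ha j (Finset.mem_cons.2 (Or.inr hj))).2])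
        (fun j hj => by linarith [(ha j (Finset.mem_cons.2 (Or.inr hj))).1])
    nlinarith [ih', hprod0, hprod1]

variable {V : Type*} [Fintype V] [DecidableEq V]

/-- `v` beats every element of `N` under `π`. -/
def beats (π : V ≃ Fin (Fintype.card V)) (v : V) (N : Finset V) : Prop :=
  ∀ y ∈ N, π y < π v

noncomputable def aF (x : ℝ) (N : V → Finset V) (π : V ≃ Fin (Fintype.card V)) (v : V) : ℝ :=
  if beats π v (N v) then x else 1

noncomputable def bF (M : V → Finset V) (π : V ≃ Fin (Fintype.card V)) (u : V) : ℝ :=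
  if beats π u (M u) then 0 else 1

noncomputable def FP (x : ℝ) (N M : V → Finset V) (A' B' : Finset V)
    (π : V ≃ Fin (Fintype.card V)) : ℝ :=
  (∏ v ∈ A', aF x N π v) * ∏ u ∈ B', bF M π u

def TC (k : ℕ) (e : Fin k → V) (π : V ≃ Fin (Fintype.card V)) : Prop :=
  ∀ j : Fin k, (π (e j) : ℕ) = Fintype.card V - 1 - (j : ℕ)

lemma aF_nonneg {x : ℝ} (hx : 0 ≤ x) (N : V → Finset V) (π) (v : V) : 0 ≤ aF x N π v := by
  unfold aF; split <;> norm_num [hx]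

lemma bF_nonneg (M : V → Finset V) (π) (u : V) : 0 ≤ bF M π u := by
  unfold bF; split <;> norm_num

lemma FP_nonneg {x : ℝ} (hx : 0 ≤ x) (N M : V → Finset V) (A' B' : Finset V) (π) :
    0 ≤ FP x N M A' B' π :=
  mul_nonneg (Finset.prod_nonneg fun v _ => aF_nonneg hx N π v)
    (Finset.prod_nonneg fun u _ => bF_nonneg M π u)

/-- Under `TC k e π` with `e` injective, vertices not in the range of `e` have
small `π`-value. -/
lemma TC_low {k : ℕ} {e : Fin k → V} {π : V ≃ Fin (Fintype.card V)}
    (hT : TC k e π) (he : Function.Injective e) {y : V}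
    (hy : ∀ j, e j ≠ y) : (π y : ℕ) < Fintype.card V - k := by
  have hkm : k ≤ Fintype.card V := by
    simpa using Fintype.card_le_of_injective e he
  by_contra h
  push_neg at h
  have hym : (π y : ℕ) < Fintype.card V := (π y).isLt
  have hj : Fintype.card V - 1 - (π y : ℕ) < k := by omega
  have h2 := hT ⟨Fintype.card V - 1 - (π y : ℕ), hj⟩
  have heq : (π (e ⟨Fintype.card V - 1 - (π y : ℕ), hj⟩) : ℕ) = (π y : ℕ) := by
    simp only [Fin.val_mk] at h2; rw [h2]; omega
  exact hy _ (π.injective (Fin.ext heq))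

lemma TC_high {k : ℕ} {e : Fin k → V} {π : V ≃ Fin (Fintype.card V)}
    (hT : TC k e π) (he : Function.Injective e) (j : Fin k) :
    Fintype.card V - k ≤ (π (e j) : ℕ) := by
  have hkm : k ≤ Fintype.card V := by simpa using Fintype.card_le_of_injective e he
  have h2 := hT j
  have hjk : (j : ℕ) < k := j.isLt
  omega


/-- For each `π` and `k ≤ m`, there is exactly one `e` with `TC k e π`. -/
lemma TC_sum_one {k : ℕ} (hk : k ≤ Fintype.card V) (π : V ≃ Fin (Fintype.card V)) :
    ∑ e : Fin k → V, (if TC k e π then (1:ℝ) else 0) = 1 := by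
  have hlt : ∀ j : Fin k, Fintype.card V - 1 - (j : ℕ) < Fintype.card V := by
    intro j; have := j.isLt; omega
  set e₀ : Fin k → V := fun j => π.symm ⟨Fintype.card V - 1 - (j : ℕ), hlt j⟩ with he₀
  have hiff : ∀ e : Fin k → V, TC k e π ↔ e = e₀ := by
    intro e
    constructor
    · intro hT
      funext j
      have := hT j
      have : π (e j) = ⟨Fintype.card V - 1 - (j : ℕ), hlt j⟩ := Fin.ext this
      rw [he₀]
      exact π.injective.eq_iff.mp (by rw [this, Equiv.apply_symm_apply])
    · rintro rfl
      intro j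
      simp [he₀]
  rw [Finset.sum_congr rfl fun e _ => if_congr (hiff e) rfl rfl]
  simp

lemma TC_snoc_iff {k : ℕ} (e : Fin k → V) (w : V) (π : V ≃ Fin (Fintype.card V)) :
    TC (k+1) (Fin.snoc e w) π ↔
      TC k e π ∧ (π w : ℕ) = Fintype.card V - 1 - k := by
  constructor
  · intro hT
    refine ⟨fun j => ?_, ?_⟩
    · have := hT j.castSucc
      simpa [Fin.snoc_castSucc] using this
    · have := hT (Fin.last k)
      simpa [Fin.snoc_last] using this
  · rintro ⟨hT, hw⟩
    intro j
    rcases Fin.eq_castSucc_or_eq_last j with ⟨i, rfl⟩ | rfl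
    · simpa [Fin.snoc_castSucc] using hT i
    · simpa [Fin.snoc_last] using hw

/-- Splitting the `TC`-indicator by the next-highest vertex. -/
lemma TC_split {k : ℕ} (hk : k < Fintype.card V) (e : Fin k → V)
    (he : Function.Injective e) (π : V ≃ Fin (Fintype.card V)) (F : ℝ) :
    (if TC k e π then F else 0) =
      ∑ w ∈ Finset.univ \ Finset.image e Finset.univ,
        (if TC (k+1) (Fin.snoc e w) π then F else 0) := by
  by_cases hT : TC k e π
  · have hm : Fintype.card V - 1 - k < Fintype.card V := by omega
    set w₀ : V := π.symm ⟨Fintype.card V - 1 - k, hm⟩ with hw₀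
    have hπw₀ : (π w₀ : ℕ) = Fintype.card V - 1 - k := by
      rw [hw₀, Equiv.apply_symm_apply]
    have hw₀mem : w₀ ∈ Finset.univ \ Finset.image e Finset.univ := by
      refine Finset.mem_sdiff.2 ⟨Finset.mem_univ _, fun hmem => ?_⟩
      obtain ⟨j, -, hje⟩ := Finset.mem_image.1 hmem
      have h1 := hT j
      have h2 : (π (e j) : ℕ) = Fintype.card V - 1 - k := by rw [hje, hπw₀]
      have := j.isLt
      omega
    rw [Finset.sum_eq_single_of_mem w₀ hw₀mem]
    · rw [if_pos hT, if_pos ((TC_snoc_iff e w₀ π).mpr ⟨hT, hπw₀⟩)]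
    · intro w hw hne
      rw [if_neg]
      intro hTs
      obtain ⟨-, hw'⟩ := (TC_snoc_iff e w π).mp hTs
      exact hne (π.injective (Fin.ext (by rw [hπw₀, hw'])))
  · rw [if_neg hT]
    symm
    apply Finset.sum_eq_zero
    intro w hw
    rw [if_neg]
    intro hTs
    exact hT ((TC_snoc_iff e w π).mp hTs).1


noncomputable def cF (x : ℝ) (N : V → Finset V) (v : V) : ℝ :=
  (((N v).card : ℝ) + x) / (((N v).card : ℝ) + 1)

noncomputable def qF (M : V → Finset V) (u : V) : ℝ :=
  ((M u).card : ℝ) / (((M u).card : ℝ) + 1)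

lemma cF_pos {x : ℝ} (hx : 1 ≤ x) (N : V → Finset V) (v : V) : 0 < cF x N v := by
  have h1 : (0:ℝ) ≤ ((N v).card : ℝ) := Nat.cast_nonneg _
  apply div_pos <;> linarith

lemma one_le_cF {x : ℝ} (hx : 1 ≤ x) (N : V → Finset V) (v : V) : 1 ≤ cF x N v := by
  have h1 : (0:ℝ) ≤ ((N v).card : ℝ) := Nat.cast_nonneg _
  rw [cF, le_div_iff₀ (by linarith)]
  linarith

lemma cF_le_x {x : ℝ} (hx : 1 ≤ x) (N : V → Finset V) (v : V) : cF x N v ≤ x := by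
  have h1 : (0:ℝ) ≤ ((N v).card : ℝ) := Nat.cast_nonneg _
  rw [cF, div_le_iff₀ (by linarith)]
  nlinarith

lemma inv_cF_le_one {x : ℝ} (hx : 1 ≤ x) (N : V → Finset V) (v : V) : (cF x N v)⁻¹ ≤ 1 :=
  inv_le_one_of_one_le₀ (one_le_cF hx N v)

lemma inv_cF_pos {x : ℝ} (hx : 1 ≤ x) (N : V → Finset V) (v : V) : 0 < (cF x N v)⁻¹ :=
  inv_pos.2 (cF_pos hx N v)

lemma x_mul_inv_cF {x : ℝ} (hx : 1 ≤ x) (N : V → Finset V) (v : V) :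
    x * (cF x N v)⁻¹ = 1 + ((N v).card : ℝ) * (1 - (cF x N v)⁻¹) := by
  have h1 : (0:ℝ) ≤ ((N v).card : ℝ) := Nat.cast_nonneg _
  have h2 : ((N v).card : ℝ) + x ≠ 0 := by linarith
  have h3 : ((N v).card : ℝ) + 1 ≠ 0 := by linarith
  rw [cF]
  field_simp
  ring

lemma one_le_x_mul_inv_cF {x : ℝ} (hx : 1 ≤ x) (N : V → Finset V) (v : V) :
    1 ≤ x * (cF x N v)⁻¹ := by
  rw [x_mul_inv_cF hx N v]
  have h1 : (0:ℝ) ≤ ((N v).card : ℝ) := Nat.cast_nonneg _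
  have := inv_cF_le_one hx N v
  nlinarith

lemma qF_nonneg (M : V → Finset V) (u : V) : 0 ≤ qF M u := by
  have h1 : (0:ℝ) ≤ ((M u).card : ℝ) := Nat.cast_nonneg _
  apply div_nonneg h1; linarith

lemma qF_le_one (M : V → Finset V) (u : V) : qF M u ≤ 1 := by
  have h1 : (0:ℝ) ≤ ((M u).card : ℝ) := Nat.cast_nonneg _
  rw [qF, div_le_one (by linarith)]; linarith

lemma qF_mul_one_add_inv (M : V → Finset V) (u : V) (h : (M u).Nonempty) :
    qF M u * (1 + (((M u).card : ℝ))⁻¹) = 1 := by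
  have h1 : 1 ≤ (M u).card := Finset.card_pos.2 h
  have h2 : (0:ℝ) < ((M u).card : ℝ) := by exact_mod_cast h1
  rw [qF]
  field_simp

/-- B-side per-`w` product bound. -/
lemma prodq_lower (w : V) (B' : Finset V) (M : V → Finset V)
    (hM1 : ∀ u ∈ B', (M u).Nonempty) :
    (∏ u ∈ B', qF M u) *
      (1 + ∑ u ∈ B'.filter (fun u => w ∈ M u), (((M u).card : ℝ))⁻¹) ≤
    ∏ u ∈ B'.filter (fun u => w ∉ M u), qF M u := by
  have hq0 : ∀ (T : Finset V), 0 ≤ ∏ u ∈ T, qF M u :=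
    fun T => Finset.prod_nonneg fun u _ => qF_nonneg M u
  have hsplit : (∏ u ∈ B'.filter (fun u => w ∈ M u), qF M u) *
      ∏ u ∈ B'.filter (fun u => ¬ (w ∈ M u)), qF M u = ∏ u ∈ B', qF M u :=
    Finset.prod_filter_mul_prod_filter_not B' _ _
  have hkey : (∏ u ∈ B'.filter (fun u => w ∈ M u), qF M u) *
      (1 + ∑ u ∈ B'.filter (fun u => w ∈ M u), (((M u).card : ℝ))⁻¹) ≤ 1 := by
    have h1 : 1 + ∑ u ∈ B'.filter (fun u => w ∈ M u), (((M u).card : ℝ))⁻¹ ≤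
        ∏ u ∈ B'.filter (fun u => w ∈ M u), (1 + (((M u).card : ℝ))⁻¹) :=
      one_add_sum_le_prod _ _ fun u hu => inv_nonneg.2 (Nat.cast_nonneg _)
    calc (∏ u ∈ B'.filter (fun u => w ∈ M u), qF M u) *
        (1 + ∑ u ∈ B'.filter (fun u => w ∈ M u), (((M u).card : ℝ))⁻¹)
        ≤ (∏ u ∈ B'.filter (fun u => w ∈ M u), qF M u) *
          ∏ u ∈ B'.filter (fun u => w ∈ M u), (1 + (((M u).card : ℝ))⁻¹) :=
          mul_le_mul_of_nonneg_left h1 (hq0 _)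
      _ = ∏ u ∈ B'.filter (fun u => w ∈ M u), (qF M u * (1 + (((M u).card : ℝ))⁻¹)) :=
          (Finset.prod_mul_distrib).symm
      _ = 1 := Finset.prod_eq_one fun u hu =>
          qF_mul_one_add_inv M u (hM1 u (Finset.mem_filter.1 hu).1)
  calc (∏ u ∈ B', qF M u) * (1 + ∑ u ∈ B'.filter (fun u => w ∈ M u), (((M u).card : ℝ))⁻¹)
      = (∏ u ∈ B'.filter (fun u => ¬ (w ∈ M u)), qF M u) *
        ((∏ u ∈ B'.filter (fun u => w ∈ M u), qF M u) *
          (1 + ∑ u ∈ B'.filter (fun u => w ∈ M u), (((M u).card : ℝ))⁻¹)) := by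
        rw [← hsplit]; ring
    _ ≤ (∏ u ∈ B'.filter (fun u => ¬ (w ∈ M u)), qF M u) * 1 :=
        mul_le_mul_of_nonneg_left hkey (hq0 _)
    _ = ∏ u ∈ B'.filter (fun u => w ∉ M u), qF M u := by rw [mul_one]

/-- A-side per-`w` product bound. -/
lemma prodc_lower {x : ℝ} (hx : 1 ≤ x) (w : V) (A' : Finset V) (N : V → Finset V) :
    (∏ v ∈ A', cF x N v) *
      (1 - ∑ v ∈ A'.filter (fun v => w ∈ N v), (1 - (cF x N v)⁻¹)) ≤
    ∏ v ∈ A'.filter (fun v => w ∉ N v), cF x N v := by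
  have hc0 : ∀ (T : Finset V), 0 ≤ ∏ v ∈ T, cF x N v :=
    fun T => Finset.prod_nonneg fun v _ => (cF_pos hx N v).le
  have hsplit : (∏ v ∈ A'.filter (fun v => w ∈ N v), cF x N v) *
      ∏ v ∈ A'.filter (fun v => ¬ (w ∈ N v)), cF x N v = ∏ v ∈ A', cF x N v :=
    Finset.prod_filter_mul_prod_filter_not A' _ _
  have hkey : (∏ v ∈ A'.filter (fun v => w ∈ N v), cF x N v) *
      (1 - ∑ v ∈ A'.filter (fun v => w ∈ N v), (1 - (cF x N v)⁻¹)) ≤ 1 := by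
    have h1 : 1 - ∑ v ∈ A'.filter (fun v => w ∈ N v), (1 - (cF x N v)⁻¹) ≤
        ∏ v ∈ A'.filter (fun v => w ∈ N v), (1 - (1 - (cF x N v)⁻¹)) :=
      one_sub_sum_le_prod _ _ fun v hv =>
        ⟨by linarith [inv_cF_le_one hx N v], by linarith [inv_cF_pos hx N v]⟩
    have h2 : ∏ v ∈ A'.filter (fun v => w ∈ N v), (1 - (1 - (cF x N v)⁻¹)) =
        ∏ v ∈ A'.filter (fun v => w ∈ N v), (cF x N v)⁻¹ := by
      apply Finset.prod_congr rfl; intro v hv; ring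
    by_cases hneg : 0 ≤ 1 - ∑ v ∈ A'.filter (fun v => w ∈ N v), (1 - (cF x N v)⁻¹)
    · calc (∏ v ∈ A'.filter (fun v => w ∈ N v), cF x N v) *
          (1 - ∑ v ∈ A'.filter (fun v => w ∈ N v), (1 - (cF x N v)⁻¹))
          ≤ (∏ v ∈ A'.filter (fun v => w ∈ N v), cF x N v) *
            ∏ v ∈ A'.filter (fun v => w ∈ N v), (cF x N v)⁻¹ := by
            rw [← h2]; exact mul_le_mul_of_nonneg_left h1 (hc0 _)
        _ = 1 := by
            rw [← Finset.prod_mul_distrib]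
            exact Finset.prod_eq_one fun v hv =>
              mul_inv_cancel₀ (ne_of_gt (cF_pos hx N v))
    · push_neg at hneg
      have := hc0 (A'.filter (fun v => w ∈ N v))
      nlinarith
  calc (∏ v ∈ A', cF x N v) * (1 - ∑ v ∈ A'.filter (fun v => w ∈ N v), (1 - (cF x N v)⁻¹))
      = (∏ v ∈ A'.filter (fun v => ¬ (w ∈ N v)), cF x N v) *
        ((∏ v ∈ A'.filter (fun v => w ∈ N v), cF x N v) *
          (1 - ∑ v ∈ A'.filter (fun v => w ∈ N v), (1 - (cF x N v)⁻¹))) := by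
        rw [← hsplit]; ring
    _ ≤ (∏ v ∈ A'.filter (fun v => ¬ (w ∈ N v)), cF x N v) * 1 := by
        by_cases hneg : 0 ≤ (∏ v ∈ A'.filter (fun v => w ∈ N v), cF x N v) *
            (1 - ∑ v ∈ A'.filter (fun v => w ∈ N v), (1 - (cF x N v)⁻¹))
        · exact mul_le_mul_of_nonneg_left hkey (hc0 _)
        · push_neg at hneg
          have h3 := hc0 (A'.filter (fun v => ¬ (w ∈ N v)))
          nlinarith
    _ = ∏ v ∈ A'.filter (fun v => w ∉ N v), cF x N v := by rw [mul_one]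


/-- The key averaging inequality. -/
lemma dagger {x : ℝ} (hx : 1 ≤ x) (A' B' D : Finset V) (N M : V → Finset V)
    (hM1 : ∀ u ∈ B', (M u).Nonempty)
    (hMsub : ∀ u ∈ B', M u ⊆ A' ∪ D)
    (hAD : Disjoint A' D)
    (h6 : ∀ w ∈ D, ∀ v ∈ A', w ∈ N v → ∀ u ∈ B', w ∉ M u) :
    ((A'.card : ℝ) + B'.card + D.card) *
      ((∏ v ∈ A', cF x N v) * ∏ u ∈ B', qF M u) ≤
    (∑ w ∈ A', x * ((∏ v ∈ A'.erase w, cF x N v) *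
        ∏ u ∈ B'.filter (fun u => w ∉ M u), qF M u))
    + ∑ w ∈ D, (∏ v ∈ A'.filter (fun v => w ∉ N v), cF x N v) *
        ∏ u ∈ B'.filter (fun u => w ∉ M u), qF M u := by
  set P := ∏ v ∈ A', cF x N v with hP
  set Q := ∏ u ∈ B', qF M u with hQ
  have hP0 : 0 ≤ P := Finset.prod_nonneg fun v _ => (cF_pos hx N v).le
  have hQ0 : 0 ≤ Q := Finset.prod_nonneg fun u _ => qF_nonneg M u
  set G : V → ℝ := fun w => ∑ u ∈ B'.filter (fun u => w ∈ M u), (((M u).card : ℝ))⁻¹ with hG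
  set L : V → ℝ := fun w => ∑ v ∈ A'.filter (fun v => w ∈ N v), (1 - (cF x N v)⁻¹) with hL
  have hG0 : ∀ w, 0 ≤ G w := fun w =>
    Finset.sum_nonneg fun u _ => inv_nonneg.2 (Nat.cast_nonneg _)
  have hL0 : ∀ w, 0 ≤ L w := fun w => Finset.sum_nonneg fun v hv => by
    have := inv_cF_le_one hx N v; linarith
  have hA : ∀ w ∈ A', P * Q * (x * (cF x N w)⁻¹ + G w) ≤
      x * ((∏ v ∈ A'.erase w, cF x N v) *
        ∏ u ∈ B'.filter (fun u => w ∉ M u), qF M u) := by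
    intro w hw
    have herase : ∏ v ∈ A'.erase w, cF x N v = (cF x N w)⁻¹ * P := by
      have h := Finset.mul_prod_erase A' (cF x N) hw
      rw [hP, ← h, ← mul_assoc, inv_mul_cancel₀ (ne_of_gt (cF_pos hx N w)), one_mul]
    have h1 : Q * (1 + G w) ≤ ∏ u ∈ B'.filter (fun u => w ∉ M u), qF M u :=
      prodq_lower w B' M hM1
    have hb : x * (cF x N w)⁻¹ + G w ≤ (x * (cF x N w)⁻¹) * (1 + G w) := by
      nlinarith [one_le_x_mul_inv_cF hx N w, hG0 w]
    calc P * Q * (x * (cF x N w)⁻¹ + G w)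
        ≤ P * Q * ((x * (cF x N w)⁻¹) * (1 + G w)) :=
          mul_le_mul_of_nonneg_left hb (mul_nonneg hP0 hQ0)
      _ = (x * ((cF x N w)⁻¹ * P)) * (Q * (1 + G w)) := by ring
      _ ≤ (x * ((cF x N w)⁻¹ * P)) * (∏ u ∈ B'.filter (fun u => w ∉ M u), qF M u) := by
          apply mul_le_mul_of_nonneg_left h1
          have := inv_cF_pos hx N w
          have hx0 : (0:ℝ) ≤ x := by linarith
          positivity
      _ = x * ((∏ v ∈ A'.erase w, cF x N v) *
            ∏ u ∈ B'.filter (fun u => w ∉ M u), qF M u) := by rw [herase]; ring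
  have hD : ∀ w ∈ D, P * Q * (1 + G w - L w) ≤
      (∏ v ∈ A'.filter (fun v => w ∉ N v), cF x N v) *
        ∏ u ∈ B'.filter (fun u => w ∉ M u), qF M u := by
    intro w hw
    by_cases hcase : ∃ v ∈ A', w ∈ N v
    · obtain ⟨v0, hv0, hwv0⟩ := hcase
      have hMfilter : B'.filter (fun u => w ∉ M u) = B' :=
        Finset.filter_true_of_mem fun u hu => h6 w hw v0 hv0 hwv0 u hu
      have hGw : G w = 0 := by
        rw [hG]
        simp only
        apply Finset.sum_eq_zero
        intro u hu
        exact absurd (Finset.mem_filter.1 hu).2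
          (h6 w hw v0 hv0 hwv0 u (Finset.mem_filter.1 hu).1)
      have h1 := prodc_lower hx w A' N
      rw [hMfilter, hGw, hL]
      calc P * Q * (1 + 0 - ∑ v ∈ A'.filter (fun v => w ∈ N v), (1 - (cF x N v)⁻¹))
          = (P * (1 - ∑ v ∈ A'.filter (fun v => w ∈ N v), (1 - (cF x N v)⁻¹))) * Q := by
            ring
        _ ≤ (∏ v ∈ A'.filter (fun v => w ∉ N v), cF x N v) * Q :=
            mul_le_mul_of_nonneg_right h1 hQ0
    · push_neg at hcase
      have hNfilter : A'.filter (fun v => w ∉ N v) = A' :=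
        Finset.filter_true_of_mem fun v hv => hcase v hv
      have hLw : L w = 0 := by
        rw [hL]
        simp only
        apply Finset.sum_eq_zero
        intro v hv
        exact absurd (Finset.mem_filter.1 hv).2 (hcase v (Finset.mem_filter.1 hv).1)
      have h1 := prodq_lower w B' M hM1
      rw [hNfilter, hLw]
      calc P * Q * (1 + G w - 0) = P * (Q * (1 + G w)) := by ring
        _ ≤ P * ∏ u ∈ B'.filter (fun u => w ∉ M u), qF M u :=
            mul_le_mul_of_nonneg_left h1 hP0
  have swap1 : (∑ w ∈ A', G w) + ∑ w ∈ D, G w = (B'.card : ℝ) := by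
    rw [← Finset.sum_union hAD]
    have hGeq : ∀ w, G w = ∑ u ∈ B', (if w ∈ M u then (((M u).card : ℝ))⁻¹ else 0) := by
      intro w; rw [hG]; simp only; rw [Finset.sum_filter]
    calc ∑ w ∈ A' ∪ D, G w
        = ∑ w ∈ A' ∪ D, ∑ u ∈ B', (if w ∈ M u then (((M u).card : ℝ))⁻¹ else 0) :=
          Finset.sum_congr rfl fun w _ => hGeq w
      _ = ∑ u ∈ B', ∑ w ∈ A' ∪ D, (if w ∈ M u then (((M u).card : ℝ))⁻¹ else 0) :=
          Finset.sum_comm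
      _ = ∑ u ∈ B', (1:ℝ) := by
          apply Finset.sum_congr rfl
          intro u hu
          rw [← Finset.sum_filter]
          have hfil : (A' ∪ D).filter (fun w => w ∈ M u) = M u := by
            rw [Finset.filter_mem_eq_inter]
            exact Finset.inter_eq_right.2 (hMsub u hu)
          rw [hfil, Finset.sum_const, nsmul_eq_mul]
          have hne : (((M u).card : ℝ)) ≠ 0 := by
            have := Finset.card_pos.2 (hM1 u hu)
            exact_mod_cast Nat.pos_iff_ne_zero.1 this
          field_simp
      _ = (B'.card : ℝ) := by rw [Finset.sum_const, nsmul_eq_mul, mul_one]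
  have swap2 : ∑ w ∈ D, L w ≤ ∑ v ∈ A', ((N v).card : ℝ) * (1 - (cF x N v)⁻¹) := by
    have hLeq : ∀ w, L w = ∑ v ∈ A', (if w ∈ N v then (1 - (cF x N v)⁻¹) else 0) := by
      intro w; rw [hL]; simp only; rw [Finset.sum_filter]
    calc ∑ w ∈ D, L w
        = ∑ v ∈ A', ∑ w ∈ D, (if w ∈ N v then (1 - (cF x N v)⁻¹) else 0) := by
          rw [← Finset.sum_comm]
          exact Finset.sum_congr rfl fun w _ => hLeq w
      _ ≤ ∑ v ∈ A', ((N v).card : ℝ) * (1 - (cF x N v)⁻¹) := by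
          apply Finset.sum_le_sum
          intro v hv
          rw [← Finset.sum_filter, Finset.sum_const, nsmul_eq_mul]
          have hcard : ((D.filter (fun w => w ∈ N v)).card : ℝ) ≤ ((N v).card : ℝ) := by
            have : D.filter (fun w => w ∈ N v) ⊆ N v := fun w hw =>
              (Finset.mem_filter.1 hw).2
            exact_mod_cast Finset.card_le_card this
          have ha : 0 ≤ 1 - (cF x N v)⁻¹ := by
            have := inv_cF_le_one hx N v; linarith
          exact mul_le_mul_of_nonneg_right hcard ha
  have idA : ∑ w ∈ A', (x * (cF x N w)⁻¹) =
      (A'.card : ℝ) + ∑ v ∈ A', ((N v).card : ℝ) * (1 - (cF x N v)⁻¹) := by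
    calc ∑ w ∈ A', (x * (cF x N w)⁻¹)
        = ∑ w ∈ A', (1 + ((N w).card : ℝ) * (1 - (cF x N w)⁻¹)) :=
          Finset.sum_congr rfl fun w _ => x_mul_inv_cF hx N w
      _ = (A'.card : ℝ) + ∑ v ∈ A', ((N v).card : ℝ) * (1 - (cF x N v)⁻¹) := by
          rw [Finset.sum_add_distrib, Finset.sum_const, nsmul_eq_mul, mul_one]
  have hkey : (A'.card : ℝ) + B'.card + D.card ≤
      (∑ w ∈ A', (x * (cF x N w)⁻¹ + G w)) + ∑ w ∈ D, (1 + G w - L w) := by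
    have e1 : ∑ w ∈ A', (x * (cF x N w)⁻¹ + G w) =
        (∑ w ∈ A', (x * (cF x N w)⁻¹)) + ∑ w ∈ A', G w := Finset.sum_add_distrib
    have e2 : ∑ w ∈ D, (1 + G w - L w) =
        (D.card : ℝ) + ∑ w ∈ D, G w - ∑ w ∈ D, L w := by
      rw [Finset.sum_sub_distrib, Finset.sum_add_distrib, Finset.sum_const, nsmul_eq_mul,
        mul_one]
    rw [e1, e2, idA]
    linarith [swap1, swap2]
  calc ((A'.card : ℝ) + B'.card + D.card) * (P * Q)
      ≤ ((∑ w ∈ A', (x * (cF x N w)⁻¹ + G w)) + ∑ w ∈ D, (1 + G w - L w)) * (P * Q) :=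
        mul_le_mul_of_nonneg_right hkey (mul_nonneg hP0 hQ0)
    _ = (∑ w ∈ A', P * Q * (x * (cF x N w)⁻¹ + G w))
        + ∑ w ∈ D, P * Q * (1 + G w - L w) := by
        rw [add_mul, Finset.sum_mul, Finset.sum_mul]
        congr 1 <;> exact Finset.sum_congr rfl fun w _ => by ring
    _ ≤ _ := add_le_add (Finset.sum_le_sum hA) (Finset.sum_le_sum hD)


lemma snoc_injective {k : ℕ} {e : Fin k → V} {w : V} (he : Function.Injective e)
    (hw : ∀ j, e j ≠ w) : Function.Injective (Fin.snoc e w) := by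
  intro a b hab
  rcases Fin.eq_castSucc_or_eq_last a with ⟨i, rfl⟩ | rfl <;>
    rcases Fin.eq_castSucc_or_eq_last b with ⟨i', rfl⟩ | rfl
  · rw [Fin.snoc_castSucc, Fin.snoc_castSucc] at hab
    exact congrArg Fin.castSucc (he hab)
  · rw [Fin.snoc_castSucc, Fin.snoc_last] at hab
    exact absurd hab (hw i)
  · rw [Fin.snoc_castSucc, Fin.snoc_last] at hab
    exact absurd hab.symm (hw i')
  · rfl

/-- For a bijective `e`, exactly one `π` satisfies `TC`. -/
lemma TC_sum_one_pi {k : ℕ} (hk : k = Fintype.card V) (e : Fin k → V)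
    (hbij : Function.Bijective e) :
    ∑ π : V ≃ Fin (Fintype.card V), (if TC k e π then (1:ℝ) else 0) = 1 := by
  set E : Fin k ≃ V := Equiv.ofBijective e hbij with hE
  set π₀ : V ≃ Fin (Fintype.card V) := E.symm.trans (Fin.revPerm.trans (finCongr hk))
    with hπ₀
  have hπ₀e : ∀ j : Fin k, (π₀ (e j) : ℕ) = Fintype.card V - 1 - (j : ℕ) := by
    intro j
    have h1 : E.symm (e j) = j := by
      rw [hE]
      exact E.symm_apply_apply j
    rw [hπ₀]
    simp only [Equiv.trans_apply, h1, finCongr_apply, Fin.coe_cast, Fin.revPerm_apply,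
      Fin.val_rev]
    omega
  have hiff : ∀ π : V ≃ Fin (Fintype.card V), TC k e π ↔ π = π₀ := by
    intro π
    constructor
    · intro hT
      ext y
      have h1 : e (E.symm y) = y := E.apply_symm_apply y
      have h2 := hT (E.symm y)
      have h3 := hπ₀e (E.symm y)
      rw [h1] at h2 h3
      omega
    · rintro rfl
      intro j
      exact hπ₀e j
  rw [Finset.sum_congr rfl fun π _ => if_congr (hiff π) rfl rfl]
  simp

/-- The master induction. -/
lemma master {x : ℝ} (hx : 1 ≤ x) :
    ∀ (n k : ℕ) (e : Fin k → V) (A' B' : Finset V) (N M : V → Finset V),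
      k + n = Fintype.card V →
      Function.Injective e →
      (∀ j, e j ∉ A') →
      (∀ j, e j ∉ B') →
      Disjoint A' B' →
      (∀ v ∈ A', v ∉ N v) →
      (∀ v ∈ A', ∀ y ∈ N v, y ∉ A') →
      (∀ v ∈ A', ∀ j, e j ∉ N v) →
      (∀ u ∈ B', (M u).Nonempty) →
      (∀ u ∈ B', u ∉ M u) →
      (∀ u ∈ B', ∀ i ∈ M u, i ∉ B') →
      (∀ u ∈ B', ∀ j, e j ∉ M u) →
      (∀ v ∈ A', ∀ u ∈ B', ∀ y ∈ N v, y ∉ M u) →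
      (n.factorial : ℝ) * ((∏ v ∈ A', cF x N v) * ∏ u ∈ B', qF M u) ≤
        ∑ π : V ≃ Fin (Fintype.card V), (if TC k e π then FP x N M A' B' π else 0) := by
  intro n
  induction n with
  | zero =>
    intro k e A' B' N M hkn he hA' hB' hAB hNv1 hNv2 hNv3 hM1 hM2 hM3 hM4 h6
    have hbij : Function.Bijective e :=
      (Fintype.bijective_iff_injective_and_card e).2 ⟨he, by simpa using hkn⟩
    have hA'e : A' = ∅ := by
      rw [Finset.eq_empty_iff_forall_notMem]
      intro a ha
      obtain ⟨j, rfl⟩ := hbij.2 a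
      exact hA' j ha
    have hB'e : B' = ∅ := by
      rw [Finset.eq_empty_iff_forall_notMem]
      intro a ha
      obtain ⟨j, rfl⟩ := hbij.2 a
      exact hB' j ha
    subst hA'e hB'e
    have hFP : ∀ π : V ≃ Fin (Fintype.card V), FP x N M ∅ ∅ π = 1 := by
      intro π; rw [FP]; simp
    rw [Finset.sum_congr rfl fun π _ => by rw [hFP π]]
    rw [TC_sum_one_pi (by omega) e hbij]
    simp
  | succ n ih =>
    intro k e A' B' N M hkn he hA' hB' hAB hNv1 hNv2 hNv3 hM1 hM2 hM3 hM4 h6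
    have hkm : k < Fintype.card V := by omega
    set m := Fintype.card V with hm
    set R : Finset V := Finset.image e Finset.univ with hR
    set T : Finset V := Finset.univ \ R with hT
    have hmemT : ∀ w, w ∈ T ↔ ∀ j, e j ≠ w := by
      intro w
      simp [hT, hR]
    have hA'T : A' ⊆ T := fun a ha => (hmemT a).2 fun j hje => hA' j (hje ▸ ha)
    have hB'T : B' ⊆ T := fun a ha => (hmemT a).2 fun j hje => hB' j (hje ▸ ha)
    -- split the sum over π using TC_split
    have hsplit : ∑ π : V ≃ Fin m, (if TC k e π then FP x N M A' B' π else 0) =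
        ∑ w ∈ T, ∑ π : V ≃ Fin m,
          (if TC (k+1) (Fin.snoc e w) π then FP x N M A' B' π else 0) := by
      rw [Finset.sum_comm]
      exact Finset.sum_congr rfl fun π _ => TC_split hkm e he π _
    -- basic facts for each w ∈ T
    have key : ∀ w ∈ T, ∀ π : V ≃ Fin m, TC (k+1) (Fin.snoc e w) π →
        ((π w : ℕ) = m - 1 - k ∧
         ∀ y, (∀ j, e j ≠ y) → y ≠ w → (π y : ℕ) < m - 1 - k) := by
      intro w hw π hTs
      obtain ⟨hTe, hπw⟩ := (TC_snoc_iff e w π).1 hTs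
      refine ⟨hπw, fun y hy hyw => ?_⟩
      have hinj : Function.Injective (Fin.snoc e w) :=
        snoc_injective he ((hmemT w).1 hw)
      have hylow : ∀ j : Fin (k+1), (Fin.snoc e w : Fin (k+1) → V) j ≠ y := by
        intro j
        rcases Fin.eq_castSucc_or_eq_last j with ⟨i, rfl⟩ | rfl
        · rw [Fin.snoc_castSucc]; exact hy i
        · rw [Fin.snoc_last]; exact fun h => hyw h.symm
      have := TC_low hTs hinj hylow
      omega
    -- the three case bounds
    have hcaseA : ∀ w ∈ A',
        ((n.factorial : ℝ)) * (x * ((∏ v ∈ A'.erase w, cF x N v) *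
            ∏ u ∈ B'.filter (fun u => w ∉ M u), qF M u)) ≤
        ∑ π : V ≃ Fin m, (if TC (k+1) (Fin.snoc e w) π then FP x N M A' B' π else 0) := by
      intro w hw
      have hwT := hA'T hw
      have hwe : ∀ j, e j ≠ w := (hmemT w).1 hwT
      -- pointwise rewriting
      have hpw : ∀ π : V ≃ Fin m, (if TC (k+1) (Fin.snoc e w) π then FP x N M A' B' π else 0)
          = x * (if TC (k+1) (Fin.snoc e w) π then
              FP x N M (A'.erase w) (B'.filter (fun u => w ∉ M u)) π else 0) := by
        intro π
        by_cases hTs : TC (k+1) (Fin.snoc e w) π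
        · obtain ⟨hπw, hlow⟩ := key w hwT π hTs
          rw [if_pos hTs, if_pos hTs]
          rw [FP, FP]
          have haFw : aF x N π w = x := by
            rw [aF, if_pos]
            intro y hy
            have h1 : (π y : ℕ) < m - 1 - k := by
              apply hlow y (fun j hje => hNv3 w hw j (hje ▸ hy))
              intro hyw; exact hNv1 w hw (hyw ▸ hy)
            have h2 := hπw
            exact Fin.lt_def.2 (by omega)
          have hAprod : ∏ v ∈ A', aF x N π v = x * ∏ v ∈ A'.erase w, aF x N π v := by
            rw [← Finset.mul_prod_erase A' _ hw, haFw]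
          have hBpart : ∏ u ∈ B', bF M π u =
              ∏ u ∈ B'.filter (fun u => w ∉ M u), bF M π u := by
            rw [← Finset.prod_filter_mul_prod_filter_not B' (fun u => w ∈ M u) (bF M π)]
            have hone : ∏ u ∈ B'.filter (fun u => w ∈ M u), bF M π u = 1 := by
              apply Finset.prod_eq_one
              intro u hu
              obtain ⟨huB, hwMu⟩ := Finset.mem_filter.1 hu
              rw [bF, if_neg]
              intro hbeat
              have h1 : (π u : ℕ) < m - 1 - k := by
                apply hlow u (fun j hje => hB' j (hje ▸ huB))
                intro huw
                exact (Finset.disjoint_left.1 hAB) hw (huw ▸ huB)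
              have h2 := hbeat w hwMu
              rw [Fin.lt_def] at h2
              omega
            rw [hone, one_mul]
          rw [hAprod, hBpart]; ring
        · rw [if_neg hTs, if_neg hTs, mul_zero]
      rw [Finset.sum_congr rfl fun π _ => hpw π, ← Finset.mul_sum]
      -- apply IH
      have hIH := ih k.succ (Fin.snoc e w) (A'.erase w)
        (B'.filter (fun u => w ∉ M u)) N M (by omega)
        (snoc_injective he hwe)
        (by
          intro j
          rcases Fin.eq_castSucc_or_eq_last j with ⟨i, rfl⟩ | rfl
          · rw [Fin.snoc_castSucc]
            exact fun h => hA' i (Finset.mem_of_mem_erase h)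
          · rw [Fin.snoc_last]; exact Finset.notMem_erase w A')
        (by
          intro j
          rcases Fin.eq_castSucc_or_eq_last j with ⟨i, rfl⟩ | rfl
          · rw [Fin.snoc_castSucc]
            exact fun h => hB' i (Finset.filter_subset _ _ h)
          · rw [Fin.snoc_last]
            exact fun h => (Finset.disjoint_left.1 hAB) hw (Finset.filter_subset _ _ h))
        (Finset.disjoint_of_subset_left (Finset.erase_subset w A')
          (Finset.disjoint_of_subset_right (Finset.filter_subset _ B') hAB))
        (fun v hv => hNv1 v (Finset.mem_of_mem_erase hv))
        (fun v hv y hy hyA => hNv2 v (Finset.mem_of_mem_erase hv) y hy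
          (Finset.mem_of_mem_erase hyA))
        (by
          intro v hv j
          rcases Fin.eq_castSucc_or_eq_last j with ⟨i, rfl⟩ | rfl
          · rw [Fin.snoc_castSucc]
            exact hNv3 v (Finset.mem_of_mem_erase hv) i
          · rw [Fin.snoc_last]
            exact fun h => hNv2 v (Finset.mem_of_mem_erase hv) w h hw)
        (fun u hu => hM1 u (Finset.filter_subset _ _ hu))
        (fun u hu => hM2 u (Finset.filter_subset _ _ hu))
        (fun u hu i hi hiB => hM3 u (Finset.filter_subset _ _ hu) i hi
          (Finset.filter_subset _ _ hiB))
        (by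
          intro u hu j
          rcases Fin.eq_castSucc_or_eq_last j with ⟨i, rfl⟩ | rfl
          · rw [Fin.snoc_castSucc]
            exact hM4 u (Finset.filter_subset _ _ hu) i
          · rw [Fin.snoc_last]
            exact (Finset.mem_filter.1 hu).2)
        (fun v hv u hu y hy => h6 v (Finset.mem_of_mem_erase hv) u
          (Finset.filter_subset _ _ hu) y hy)
      calc (n.factorial : ℝ) * (x * ((∏ v ∈ A'.erase w, cF x N v) *
              ∏ u ∈ B'.filter (fun u => w ∉ M u), qF M u))
          = x * ((n.factorial : ℝ) * ((∏ v ∈ A'.erase w, cF x N v) *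
              ∏ u ∈ B'.filter (fun u => w ∉ M u), qF M u)) := by ring
        _ ≤ x * ∑ π : V ≃ Fin m, (if TC (k+1) (Fin.snoc e w) π then
              FP x N M (A'.erase w) (B'.filter (fun u => w ∉ M u)) π else 0) :=
            mul_le_mul_of_nonneg_left hIH (by linarith)
    have hcaseB : ∀ w ∈ B',
        (0:ℝ) ≤ ∑ π : V ≃ Fin m,
          (if TC (k+1) (Fin.snoc e w) π then FP x N M A' B' π else 0) := by
      intro w hw
      apply Finset.sum_nonneg
      intro π _
      split
      · exact FP_nonneg (by linarith) N M A' B' π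
      · exact le_rfl
    have hcaseD : ∀ w ∈ (T \ A') \ B',
        ((n.factorial : ℝ)) * ((∏ v ∈ A'.filter (fun v => w ∉ N v), cF x N v) *
            ∏ u ∈ B'.filter (fun u => w ∉ M u), qF M u) ≤
        ∑ π : V ≃ Fin m, (if TC (k+1) (Fin.snoc e w) π then FP x N M A' B' π else 0) := by
      intro w hw
      obtain ⟨hw1, hwB⟩ := Finset.mem_sdiff.1 hw
      obtain ⟨hwT, hwA⟩ := Finset.mem_sdiff.1 hw1
      have hwe : ∀ j, e j ≠ w := (hmemT w).1 hwT
      have hpw : ∀ π : V ≃ Fin m, (if TC (k+1) (Fin.snoc e w) π then FP x N M A' B' π else 0)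
          = (if TC (k+1) (Fin.snoc e w) π then
              FP x N M (A'.filter (fun v => w ∉ N v)) (B'.filter (fun u => w ∉ M u)) π
            else 0) := by
        intro π
        by_cases hTs : TC (k+1) (Fin.snoc e w) π
        · obtain ⟨hπw, hlow⟩ := key w hwT π hTs
          rw [if_pos hTs, if_pos hTs, FP, FP]
          have hApart : ∏ v ∈ A', aF x N π v =
              ∏ v ∈ A'.filter (fun v => w ∉ N v), aF x N π v := by
            rw [← Finset.prod_filter_mul_prod_filter_not A' (fun v => w ∈ N v) (aF x N π)]
            have hone : ∏ v ∈ A'.filter (fun v => w ∈ N v), aF x N π v = 1 := by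
              apply Finset.prod_eq_one
              intro v hv
              obtain ⟨hvA, hwNv⟩ := Finset.mem_filter.1 hv
              rw [aF, if_neg]
              intro hbeat
              have h1 : (π v : ℕ) < m - 1 - k := by
                apply hlow v (fun j hje => hA' j (hje ▸ hvA))
                intro hvw; exact hwA (hvw ▸ hvA)
              have h2 := hbeat w hwNv
              rw [Fin.lt_def] at h2
              omega
            rw [hone, one_mul]
          have hBpart : ∏ u ∈ B', bF M π u =
              ∏ u ∈ B'.filter (fun u => w ∉ M u), bF M π u := by
            rw [← Finset.prod_filter_mul_prod_filter_not B' (fun u => w ∈ M u) (bF M π)]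
            have hone : ∏ u ∈ B'.filter (fun u => w ∈ M u), bF M π u = 1 := by
              apply Finset.prod_eq_one
              intro u hu
              obtain ⟨huB, hwMu⟩ := Finset.mem_filter.1 hu
              rw [bF, if_neg]
              intro hbeat
              have h1 : (π u : ℕ) < m - 1 - k := by
                apply hlow u (fun j hje => hB' j (hje ▸ huB))
                intro huw; exact hwB (huw ▸ huB)
              have h2 := hbeat w hwMu
              rw [Fin.lt_def] at h2
              omega
            rw [hone, one_mul]
          rw [hApart, hBpart]
        · rw [if_neg hTs, if_neg hTs]
      rw [Finset.sum_congr rfl fun π _ => hpw π]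
      exact ih k.succ (Fin.snoc e w) (A'.filter (fun v => w ∉ N v))
        (B'.filter (fun u => w ∉ M u)) N M (by omega)
        (snoc_injective he hwe)
        (by
          intro j
          rcases Fin.eq_castSucc_or_eq_last j with ⟨i, rfl⟩ | rfl
          · rw [Fin.snoc_castSucc]
            exact fun h => hA' i (Finset.filter_subset _ _ h)
          · rw [Fin.snoc_last]
            exact fun h => hwA (Finset.filter_subset _ _ h))
        (by
          intro j
          rcases Fin.eq_castSucc_or_eq_last j with ⟨i, rfl⟩ | rfl
          · rw [Fin.snoc_castSucc]
            exact fun h => hB' i (Finset.filter_subset _ _ h)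
          · rw [Fin.snoc_last]
            exact fun h => hwB (Finset.filter_subset _ _ h))
        (Finset.disjoint_of_subset_left (Finset.filter_subset _ A')
          (Finset.disjoint_of_subset_right (Finset.filter_subset _ B') hAB))
        (fun v hv => hNv1 v (Finset.filter_subset _ _ hv))
        (fun v hv y hy hyA => hNv2 v (Finset.filter_subset _ _ hv) y hy
          (Finset.filter_subset _ _ hyA))
        (by
          intro v hv j
          rcases Fin.eq_castSucc_or_eq_last j with ⟨i, rfl⟩ | rfl
          · rw [Fin.snoc_castSucc]
            exact hNv3 v (Finset.filter_subset _ _ hv) i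
          · rw [Fin.snoc_last]
            exact (Finset.mem_filter.1 hv).2)
        (fun u hu => hM1 u (Finset.filter_subset _ _ hu))
        (fun u hu => hM2 u (Finset.filter_subset _ _ hu))
        (fun u hu i hi hiB => hM3 u (Finset.filter_subset _ _ hu) i hi
          (Finset.filter_subset _ _ hiB))
        (by
          intro u hu j
          rcases Fin.eq_castSucc_or_eq_last j with ⟨i, rfl⟩ | rfl
          · rw [Fin.snoc_castSucc]
            exact hM4 u (Finset.filter_subset _ _ hu) i
          · rw [Fin.snoc_last]
            exact (Finset.mem_filter.1 hu).2)
        (fun v hv u hu y hy => h6 v (Finset.filter_subset _ _ hv) u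
          (Finset.filter_subset _ _ hu) y hy)
    -- assemble using dagger
    have hTsum : ∑ w ∈ T, ∑ π : V ≃ Fin m,
          (if TC (k+1) (Fin.snoc e w) π then FP x N M A' B' π else 0) =
        (∑ w ∈ A', ∑ π : V ≃ Fin m,
          (if TC (k+1) (Fin.snoc e w) π then FP x N M A' B' π else 0))
        + ((∑ w ∈ B', ∑ π : V ≃ Fin m,
          (if TC (k+1) (Fin.snoc e w) π then FP x N M A' B' π else 0))
        + ∑ w ∈ (T \ A') \ B', ∑ π : V ≃ Fin m,
          (if TC (k+1) (Fin.snoc e w) π then FP x N M A' B' π else 0)) := by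
      rw [← Finset.sum_sdiff hA'T]
      have hB'TA : B' ⊆ T \ A' := fun b hb => Finset.mem_sdiff.2
        ⟨hB'T hb, fun hbA => (Finset.disjoint_left.1 hAB) hbA hb⟩
      rw [← Finset.sum_sdiff hB'TA]
      ring
    have hcards : (A'.card : ℝ) + B'.card + ((T \ A') \ B').card = (n+1 : ℕ) := by
      have h1 : R.card = k := by
        rw [hR, Finset.card_image_of_injective _ he]
        simp
      have h2 : T.card = n + 1 := by
        rw [hT, Finset.card_sdiff_of_subset (Finset.subset_univ R), h1]
        simp only [Finset.card_univ]
        omega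
      have hB'TA : B' ⊆ T \ A' := fun b hb => Finset.mem_sdiff.2
        ⟨hB'T hb, fun hbA => (Finset.disjoint_left.1 hAB) hbA hb⟩
      have h3 : ((T \ A') \ B').card = T.card - A'.card - B'.card := by
        rw [Finset.card_sdiff_of_subset hB'TA, Finset.card_sdiff_of_subset hA'T]
      have h4 : B'.card ≤ T.card - A'.card := by
        simpa [Finset.card_sdiff_of_subset hA'T] using Finset.card_le_card hB'TA
      have h5 := Finset.card_le_card hA'T
      have hnat : A'.card + B'.card + ((T \ A') \ B').card = n + 1 := by omega
      rw [← hnat]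
      push_cast
      ring
    -- dagger application
    have hdag := dagger hx A' B' ((T \ A') \ B') N M hM1
      (by
        intro u hu i hi
        have hiT : i ∈ T := (hmemT i).2 fun j hje => hM4 u hu j (hje ▸ hi)
        by_cases hiA : i ∈ A'
        · exact Finset.mem_union_left _ hiA
        · refine Finset.mem_union_right _ (Finset.mem_sdiff.2 ⟨Finset.mem_sdiff.2 ⟨hiT, hiA⟩, ?_⟩)
          exact hM3 u hu i hi)
      (Finset.disjoint_of_subset_right Finset.sdiff_subset Finset.disjoint_sdiff)
      (fun w hw v hv hwNv u hu => h6 v hv u hu w hwNv)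
    have hb1 := Finset.sum_le_sum hcaseA
    have hb3 := Finset.sum_le_sum hcaseD
    have hb2 : (0:ℝ) ≤ ∑ w ∈ B', ∑ π : V ≃ Fin m,
        (if TC (k+1) (Fin.snoc e w) π then FP x N M A' B' π else 0) :=
      Finset.sum_nonneg fun w hw => hcaseB w hw
    have hfac0 : (0:ℝ) ≤ (n.factorial : ℝ) := Nat.cast_nonneg _
    rw [hsplit, hTsum]
    calc ((n+1).factorial : ℝ) * ((∏ v ∈ A', cF x N v) * ∏ u ∈ B', qF M u)
        = (n.factorial : ℝ) * (((A'.card : ℝ) + B'.card + ((T \ A') \ B').card) *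
            ((∏ v ∈ A', cF x N v) * ∏ u ∈ B', qF M u)) := by
          rw [Nat.factorial_succ, hcards]
          push_cast
          ring
      _ ≤ (n.factorial : ℝ) *
          ((∑ w ∈ A', x * ((∏ v ∈ A'.erase w, cF x N v) *
              ∏ u ∈ B'.filter (fun u => w ∉ M u), qF M u))
            + ∑ w ∈ (T \ A') \ B', (∏ v ∈ A'.filter (fun v => w ∉ N v), cF x N v) *
              ∏ u ∈ B'.filter (fun u => w ∉ M u), qF M u) :=
          mul_le_mul_of_nonneg_left hdag hfac0
      _ = (∑ w ∈ A', (n.factorial : ℝ) * (x * ((∏ v ∈ A'.erase w, cF x N v) *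
              ∏ u ∈ B'.filter (fun u => w ∉ M u), qF M u)))
          + ∑ w ∈ (T \ A') \ B', (n.factorial : ℝ) *
              ((∏ v ∈ A'.filter (fun v => w ∉ N v), cF x N v) *
              ∏ u ∈ B'.filter (fun u => w ∉ M u), qF M u) := by
          rw [mul_add, Finset.mul_sum, Finset.mul_sum]
      _ ≤ (∑ w ∈ A', ∑ π : V ≃ Fin m,
              (if TC (k+1) (Fin.snoc e w) π then FP x N M A' B' π else 0))
          + ∑ w ∈ (T \ A') \ B', ∑ π : V ≃ Fin m,
              (if TC (k+1) (Fin.snoc e w) π then FP x N M A' B' π else 0) :=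
          add_le_add hb1 hb3
      _ ≤ _ := by linarith


/-- Product Bernoulli weight of a subset `S` of `𝒜` (each `v` lies in `S` with
probability `1 - γ v`). -/
noncomputable def muW (γ : V → ℝ) (𝒜 S : Finset V) : ℝ :=
  (∏ v ∈ S, (1 - γ v)) * ∏ v ∈ 𝒜 \ S, γ v

lemma muW_nonneg {γ : V → ℝ} (hγ : ∀ v, 0 ≤ γ v ∧ γ v ≤ 1) (𝒜 S : Finset V) :
    0 ≤ muW γ 𝒜 S :=
  mul_nonneg (Finset.prod_nonneg fun v _ => by linarith [(hγ v).2])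
    (Finset.prod_nonneg fun v _ => (hγ v).1)

lemma sum_muW (γ : V → ℝ) (𝒜 : Finset V) :
    ∑ S ∈ 𝒜.powerset, muW γ 𝒜 S = 1 := by
  have h := Finset.prod_add (fun v => 1 - γ v) γ 𝒜
  simp only [sub_add_cancel, Finset.prod_const_one] at h
  simp only [muW]
  exact h.symm

lemma muW_insert_not_mem {γ : V → ℝ} {a : V} {𝒜 S : Finset V} (ha : a ∉ 𝒜)
    (hS : S ⊆ 𝒜) :
    muW γ (insert a 𝒜) S = γ a * muW γ 𝒜 S := by
  have haS : a ∉ S := fun h => ha (hS h)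
  rw [muW, muW, Finset.insert_sdiff_of_notMem _ haS,
    Finset.prod_insert (fun h => ha (Finset.mem_sdiff.1 h).1)]
  ring

lemma muW_insert_mem {γ : V → ℝ} {a : V} {𝒜 S : Finset V} (ha : a ∉ 𝒜) (hS : S ⊆ 𝒜) :
    muW γ (insert a 𝒜) (insert a S) = (1 - γ a) * muW γ 𝒜 S := by
  have haS : a ∉ S := fun h => ha (hS h)
  have hsd : insert a 𝒜 \ insert a S = 𝒜 \ S := by
    ext y
    simp only [Finset.mem_sdiff, Finset.mem_insert]
    constructor
    · rintro ⟨hy1 | hy1, hy2⟩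
      · exact absurd (Or.inl hy1) hy2
      · exact ⟨hy1, fun h => hy2 (Or.inr h)⟩
    · rintro ⟨hy1, hy2⟩
      exact ⟨Or.inr hy1, fun h => by
        rcases h with h | h
        · exact ha (h ▸ hy1)
        · exact hy2 h⟩
  rw [muW, muW, hsd, Finset.prod_insert haS]
  ring

/-- Harris inequality (pair version) for product Bernoulli measures on `𝒜.powerset`. -/
lemma harris_pair {γ : V → ℝ} (hγ : ∀ v, 0 ≤ γ v ∧ γ v ≤ 1) :
    ∀ (𝒜 : Finset V) (f g : Finset V → ℝ),
      (∀ S S', S ⊆ S' → S' ⊆ 𝒜 → f S ≤ f S') →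
      (∀ S S', S ⊆ S' → S' ⊆ 𝒜 → g S ≤ g S') →
      (∑ S ∈ 𝒜.powerset, muW γ 𝒜 S * f S) * (∑ S ∈ 𝒜.powerset, muW γ 𝒜 S * g S) ≤
        ∑ S ∈ 𝒜.powerset, muW γ 𝒜 S * (f S * g S) := by
  intro 𝒜
  induction 𝒜 using Finset.induction_on with
  | empty => intro f g hf hg; simp [muW]
  | @insert a 𝒜₀ ha ih =>
    intro f g hf hg
    have hpa := hγ a
    set F : Finset V → ℝ := fun S₀ => γ a * f S₀ + (1 - γ a) * f (insert a S₀) with hF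
    set Gg : Finset V → ℝ := fun S₀ => γ a * g S₀ + (1 - γ a) * g (insert a S₀) with hGg
    have hexp : ∀ h : Finset V → ℝ,
        ∑ S ∈ (insert a 𝒜₀).powerset, muW γ (insert a 𝒜₀) S * h S =
        ∑ S₀ ∈ 𝒜₀.powerset, muW γ 𝒜₀ S₀ * (γ a * h S₀ + (1 - γ a) * h (insert a S₀)) := by
      intro h
      rw [Finset.sum_powerset_insert ha]
      rw [← Finset.sum_add_distrib]
      apply Finset.sum_congr rfl
      intro S₀ hS₀
      have hS₀' := Finset.mem_powerset.1 hS₀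
      rw [muW_insert_not_mem ha hS₀', muW_insert_mem ha hS₀']
      ring
    rw [hexp f, hexp g, hexp (fun S => f S * g S)]
    have hFmono : ∀ S S', S ⊆ S' → S' ⊆ 𝒜₀ → F S ≤ F S' := by
      intro S S' hss hs'
      have h1 : f S ≤ f S' := hf S S' hss (hs'.trans (Finset.subset_insert a 𝒜₀))
      have h2 : f (insert a S) ≤ f (insert a S') :=
        hf _ _ (Finset.insert_subset_insert a hss) (Finset.insert_subset_insert a hs')
      simp only [hF]
      have h3 := mul_le_mul_of_nonneg_left h1 hpa.1
      have h4 := mul_le_mul_of_nonneg_left h2 (show (0:ℝ) ≤ 1 - γ a by linarith [hpa.2])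
      linarith
    have hGmono : ∀ S S', S ⊆ S' → S' ⊆ 𝒜₀ → Gg S ≤ Gg S' := by
      intro S S' hss hs'
      have h1 : g S ≤ g S' := hg S S' hss (hs'.trans (Finset.subset_insert a 𝒜₀))
      have h2 : g (insert a S) ≤ g (insert a S') :=
        hg _ _ (Finset.insert_subset_insert a hss) (Finset.insert_subset_insert a hs')
      simp only [hGg]
      have h3 := mul_le_mul_of_nonneg_left h1 hpa.1
      have h4 := mul_le_mul_of_nonneg_left h2 (show (0:ℝ) ≤ 1 - γ a by linarith [hpa.2])
      linarith
    have hpoint : ∀ S₀ ∈ 𝒜₀.powerset,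
        muW γ 𝒜₀ S₀ * (F S₀ * Gg S₀) ≤
        muW γ 𝒜₀ S₀ * (γ a * (f S₀ * g S₀) + (1 - γ a) * (f (insert a S₀) * g (insert a S₀))) := by
      intro S₀ hS₀
      apply mul_le_mul_of_nonneg_left _ (muW_nonneg hγ 𝒜₀ S₀)
      have hmf : f S₀ ≤ f (insert a S₀) :=
        hf S₀ (insert a S₀) (Finset.subset_insert a S₀)
          (Finset.insert_subset_insert a (Finset.mem_powerset.1 hS₀))
      have hmg : g S₀ ≤ g (insert a S₀) :=
        hg S₀ (insert a S₀) (Finset.subset_insert a S₀)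
          (Finset.insert_subset_insert a (Finset.mem_powerset.1 hS₀))
      simp only [hF, hGg]
      have key : 0 ≤ (γ a * (1 - γ a)) *
          ((f (insert a S₀) - f S₀) * (g (insert a S₀) - g S₀)) :=
        mul_nonneg (mul_nonneg hpa.1 (by linarith [hpa.2]))
          (mul_nonneg (by linarith) (by linarith))
      nlinarith [key]
    calc (∑ S₀ ∈ 𝒜₀.powerset, muW γ 𝒜₀ S₀ * F S₀) *
          (∑ S₀ ∈ 𝒜₀.powerset, muW γ 𝒜₀ S₀ * Gg S₀)
        ≤ ∑ S₀ ∈ 𝒜₀.powerset, muW γ 𝒜₀ S₀ * (F S₀ * Gg S₀) := ih F Gg hFmono hGmono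
      _ ≤ ∑ S₀ ∈ 𝒜₀.powerset, muW γ 𝒜₀ S₀ *
            (γ a * (f S₀ * g S₀) + (1 - γ a) * (f (insert a S₀) * g (insert a S₀))) :=
          Finset.sum_le_sum hpoint

/-- Harris inequality, product version. -/
lemma harris_prod {γ : V → ℝ} (hγ : ∀ v, 0 ≤ γ v ∧ γ v ≤ 1) (𝒜 : Finset V)
    {ι : Type*} (U : Finset ι) (h : ι → Finset V → ℝ)
    (hmono : ∀ u ∈ U, ∀ S S', S ⊆ S' → S' ⊆ 𝒜 → h u S ≤ h u S')
    (hnn : ∀ u ∈ U, ∀ S, 0 ≤ h u S) :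
    ∏ u ∈ U, (∑ S ∈ 𝒜.powerset, muW γ 𝒜 S * h u S) ≤
      ∑ S ∈ 𝒜.powerset, muW γ 𝒜 S * ∏ u ∈ U, h u S := by
  classical
  induction U using Finset.cons_induction with
  | empty => simp [sum_muW γ 𝒜]
  | cons u U hu ihU =>
    have hmono' : ∀ u' ∈ U, ∀ S S', S ⊆ S' → S' ⊆ 𝒜 → h u' S ≤ h u' S' :=
      fun u' hu' => hmono u' (Finset.mem_cons.2 (Or.inr hu'))
    have hnn' : ∀ u' ∈ U, ∀ S, 0 ≤ h u' S :=
      fun u' hu' => hnn u' (Finset.mem_cons.2 (Or.inr hu'))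
    have ih := ihU hmono' hnn'
    have hu0 : ∀ S S', S ⊆ S' → S' ⊆ 𝒜 → h u S ≤ h u S' :=
      hmono u (Finset.mem_cons_self u U)
    have hu0nn : ∀ S, 0 ≤ h u S := hnn u (Finset.mem_cons_self u U)
    have hprodmono : ∀ S S', S ⊆ S' → S' ⊆ 𝒜 →
        (∏ u' ∈ U, h u' S) ≤ ∏ u' ∈ U, h u' S' := by
      intro S S' hss hs'
      apply Finset.prod_le_prod (fun u' hu' => hnn' u' hu' S)
      intro u' hu'
      exact hmono' u' hu' S S' hss hs'
    have hEnn : 0 ≤ ∑ S ∈ 𝒜.powerset, muW γ 𝒜 S * h u S :=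
      Finset.sum_nonneg fun S _ => mul_nonneg (muW_nonneg hγ 𝒜 S) (hu0nn S)
    calc ∏ u' ∈ Finset.cons u U hu, (∑ S ∈ 𝒜.powerset, muW γ 𝒜 S * h u' S)
        = (∑ S ∈ 𝒜.powerset, muW γ 𝒜 S * h u S) *
            ∏ u' ∈ U, (∑ S ∈ 𝒜.powerset, muW γ 𝒜 S * h u' S) := Finset.prod_cons _
      _ ≤ (∑ S ∈ 𝒜.powerset, muW γ 𝒜 S * h u S) *
            (∑ S ∈ 𝒜.powerset, muW γ 𝒜 S * ∏ u' ∈ U, h u' S) :=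
          mul_le_mul_of_nonneg_left ih hEnn
      _ ≤ ∑ S ∈ 𝒜.powerset, muW γ 𝒜 S * (h u S * ∏ u' ∈ U, h u' S) :=
          harris_pair hγ 𝒜 (h u) (fun S => ∏ u' ∈ U, h u' S) hu0 hprodmono
      _ = ∑ S ∈ 𝒜.powerset, muW γ 𝒜 S * ∏ u' ∈ Finset.cons u U hu, h u' S := by
          apply Finset.sum_congr rfl
          intro S _
          rw [Finset.prod_cons]

/-- Independence computation: probability that `S` misses `Nu`. -/
lemma sum_muW_indicator (γ : V → ℝ) (𝒜 Nu : Finset V) (hNu : Nu ⊆ 𝒜) :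
    ∑ S ∈ 𝒜.powerset, muW γ 𝒜 S * (if ∀ i ∈ Nu, i ∉ S then (1:ℝ) else 0) =
      ∏ i ∈ Nu, γ i := by
  have h := Finset.prod_add (fun v => if v ∈ Nu then 0 else 1 - γ v) γ 𝒜
  have hL : ∏ i ∈ 𝒜, ((if i ∈ Nu then (0:ℝ) else 1 - γ i) + γ i) = ∏ i ∈ Nu, γ i := by
    rw [← Finset.prod_filter_mul_prod_filter_not 𝒜 (fun i => i ∈ Nu)]
    have h1 : 𝒜.filter (fun i => i ∈ Nu) = Nu := by
      rw [Finset.filter_mem_eq_inter]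
      exact Finset.inter_eq_right.2 hNu
    rw [h1]
    have h2 : ∏ i ∈ Nu, ((if i ∈ Nu then (0:ℝ) else 1 - γ i) + γ i) = ∏ i ∈ Nu, γ i :=
      Finset.prod_congr rfl fun i hi => by rw [if_pos hi]; ring
    have h3 : ∏ i ∈ 𝒜.filter (fun i => ¬ i ∈ Nu),
        ((if i ∈ Nu then (0:ℝ) else 1 - γ i) + γ i) = 1 :=
      Finset.prod_eq_one fun i hi => by
        rw [if_neg (Finset.mem_filter.1 hi).2]; ring
    rw [h2, h3, mul_one]
  rw [hL] at h
  rw [h]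
  apply Finset.sum_congr rfl
  intro S hS
  by_cases hc : ∀ i ∈ Nu, i ∉ S
  · rw [if_pos hc, muW]
    have : ∏ i ∈ S, (if i ∈ Nu then (0:ℝ) else 1 - γ i) = ∏ i ∈ S, (1 - γ i) :=
      Finset.prod_congr rfl fun i hi => if_neg (fun hiNu => hc i hiNu hi)
    rw [this]
    ring
  · rw [if_neg hc]
    push_neg at hc
    obtain ⟨i, hiNu, hiS⟩ := hc
    have : ∏ i ∈ S, (if i ∈ Nu then (0:ℝ) else 1 - γ i) = 0 :=
      Finset.prod_eq_zero hiS (by rw [if_pos hiNu])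
    rw [this]
    ring


/-- The number of injective tuples with a given image of size `k` is `k!`. -/
lemma card_ordered (k : ℕ) (S : Finset V) (hS : S.card = k) :
    (Finset.univ.filter (fun e : Fin k → V =>
      Function.Injective e ∧ Finset.image e Finset.univ = S)).card = k.factorial := by
  have hcardS : Fintype.card {y // y ∈ S} = k := by rw [Fintype.card_coe, hS]
  have hcf : Fintype.card (Fin k ≃ {y // y ∈ S}) = k.factorial := by
    rw [Fintype.card_equiv (Fintype.equivFinOfCardEq hcardS).symm, Fintype.card_fin]
  have hPinj : Function.Injective
      (fun σ : Fin k ≃ {y // y ∈ S} => fun j => (σ j : V)) := by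
    intro σ σ' h
    apply Equiv.ext
    intro j
    apply Subtype.ext
    exact congrFun h j
  have hset : Finset.univ.filter (fun e : Fin k → V =>
      Function.Injective e ∧ Finset.image e Finset.univ = S) =
      Finset.image (fun σ : Fin k ≃ {y // y ∈ S} => fun j => (σ j : V)) Finset.univ := by
    ext e
    simp only [Finset.mem_filter, Finset.mem_univ, true_and, Finset.mem_image]
    constructor
    · rintro ⟨hinj, himg⟩
      have hmem : ∀ j, e j ∈ S := fun j => by
        rw [← himg]; exact Finset.mem_image_of_mem e (Finset.mem_univ j)
      have hbij : Function.Bijective (fun j => (⟨e j, hmem j⟩ : {y // y ∈ S})) := by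
        refine (Fintype.bijective_iff_injective_and_card _).2 ⟨?_, by simp [hcardS]⟩
        intro a b hab
        exact hinj (Subtype.ext_iff.1 hab)
      exact ⟨Equiv.ofBijective _ hbij, rfl⟩
    · rintro ⟨σ, rfl⟩
      constructor
      · intro a b hab
        exact σ.injective (Subtype.ext hab)
      · ext y
        simp only [Finset.mem_image, Finset.mem_univ, true_and]
        constructor
        · rintro ⟨j, rfl⟩; exact (σ j).2
        · intro hy; exact ⟨σ.symm ⟨y, hy⟩, by simp⟩
  rw [hset, Finset.card_image_of_injective _ hPinj, Finset.card_univ, hcf]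

/-- Grouping a sum over injective tuples by their image. -/
lemma sum_inj_image (k : ℕ) (𝒜 : Finset V) (H : Finset V → ℝ) :
    ∑ e : Fin k → V, (if Function.Injective e ∧ Finset.image e Finset.univ ⊆ 𝒜
        then H (Finset.image e Finset.univ) else 0) =
    (k.factorial : ℝ) * ∑ S ∈ Finset.powersetCard k 𝒜, H S := by
  classical
  rw [← Finset.sum_filter]
  have hmap : ∀ e ∈ Finset.univ.filter (fun e : Fin k → V =>
      Function.Injective e ∧ Finset.image e Finset.univ ⊆ 𝒜),
      Finset.image e Finset.univ ∈ Finset.powersetCard k 𝒜 := by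
    intro e he
    obtain ⟨-, hinj, hsub⟩ := Finset.mem_filter.1 he
    refine Finset.mem_powersetCard.2 ⟨hsub, ?_⟩
    rw [Finset.card_image_of_injective _ hinj]
    simp
  rw [← Finset.sum_fiberwise_of_maps_to hmap (fun e => H (Finset.image e Finset.univ))]
  rw [Finset.mul_sum]
  apply Finset.sum_congr rfl
  intro S hS
  obtain ⟨hSsub, hScard⟩ := Finset.mem_powersetCard.1 hS
  have hfil : (Finset.univ.filter (fun e : Fin k → V =>
      Function.Injective e ∧ Finset.image e Finset.univ ⊆ 𝒜)).filter
        (fun e => Finset.image e Finset.univ = S) =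
      Finset.univ.filter (fun e : Fin k → V =>
        Function.Injective e ∧ Finset.image e Finset.univ = S) := by
    ext e
    simp only [Finset.mem_filter, Finset.mem_univ, true_and]
    constructor
    · rintro ⟨⟨h1, h2⟩, h3⟩; exact ⟨h1, h3⟩
    · rintro ⟨h1, h3⟩; exact ⟨⟨h1, h3 ▸ hSsub⟩, h3⟩
  rw [hfil]
  have : ∀ e ∈ Finset.univ.filter (fun e : Fin k → V =>
      Function.Injective e ∧ Finset.image e Finset.univ = S),
      H (Finset.image e Finset.univ) = H S := by
    intro e he
    rw [(Finset.mem_filter.1 he).2.2]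
  rw [Finset.sum_congr rfl this, Finset.sum_const, card_ordered k S hScard,
    nsmul_eq_mul]

/-- Algebraic facts about `f` and `gam`. -/
lemma f_ge_one {x s d : ℝ} (hx : 2 ≤ x) (hs0 : 0 ≤ s) (hs1 : s ≤ 1) (hd : 0 ≤ d) :
    1 ≤ (d + x) * s / (d + 1) + x * (1 - s) := by
  have hd1 : (0:ℝ) < d + 1 := by linarith
  have hc : 1 ≤ (d + x) / (d + 1) := by
    rw [le_div_iff₀ hd1]; linarith
  have h1 : s * 1 ≤ s * ((d + x) / (d + 1)) := mul_le_mul_of_nonneg_left hc hs0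
  have h2 : (1 - s) * 1 ≤ (1 - s) * x := by nlinarith
  have : (d + x) * s / (d + 1) = s * ((d + x) / (d + 1)) := by ring
  rw [this]
  nlinarith

lemma gam_denom {x s d : ℝ} (hd : 0 ≤ d) :
    (d + x) * s + (d + 1) * x * (1 - s) =
      (d + 1) * ((d + x) * s / (d + 1) + x * (1 - s)) := by
  have hd1 : d + 1 ≠ 0 := by positivity
  field_simp

lemma gam_mul_f {x s d : ℝ} (hx : 2 ≤ x) (hs0 : 0 ≤ s) (hs1 : s ≤ 1) (hd : 0 ≤ d) :
    ((d + x) * s / (d + 1) + x * (1 - s)) * gam x s d = s * ((d + x) / (d + 1)) := by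
  have hd1 : (0:ℝ) < d + 1 := by linarith
  have hf := f_ge_one hx hs0 hs1 hd
  have hfne : (d + x) * s / (d + 1) + x * (1 - s) ≠ 0 := by linarith
  rw [gam, gam_denom hd, div_div ((d+x)*s) (d+1) _ |>.symm]
  rw [mul_comm, div_mul_cancel₀ _ hfne]
  ring

lemma one_sub_gam_mul_f {x s d : ℝ} (hx : 2 ≤ x) (hs0 : 0 ≤ s) (hs1 : s ≤ 1) (hd : 0 ≤ d) :
    ((d + x) * s / (d + 1) + x * (1 - s)) * (1 - gam x s d) = (1 - s) * x := by
  have h1 := gam_mul_f hx hs0 hs1 hd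
  have h2 : ((d + x) * s / (d + 1) + x * (1 - s)) * (1 - gam x s d)
      = ((d + x) * s / (d + 1) + x * (1 - s))
        - ((d + x) * s / (d + 1) + x * (1 - s)) * gam x s d := by ring
  rw [h2, h1]
  have h3 : s * ((d + x) / (d + 1)) = (d + x) * s / (d + 1) := by ring
  rw [h3]
  ring

lemma gam_mem {x s d : ℝ} (hx : 2 ≤ x) (hs0 : 0 ≤ s) (hs1 : s ≤ 1) (hd : 0 ≤ d) :
    0 ≤ gam x s d ∧ gam x s d ≤ 1 := by
  have hd1 : (0:ℝ) < d + 1 := by linarith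
  have hf := f_ge_one hx hs0 hs1 hd
  have hD : 0 < (d + x) * s + (d + 1) * x * (1 - s) := by
    rw [gam_denom hd]
    exact mul_pos hd1 (by linarith)
  constructor
  · apply div_nonneg _ hD.le
    have hdx : (0:ℝ) ≤ d + x := by linarith
    exact mul_nonneg hdx hs0
  · rw [gam, div_le_one hD]
    nlinarith [mul_nonneg (mul_nonneg (show (0:ℝ) ≤ d+1 by linarith)
      (show (0:ℝ) ≤ x by linarith)) (show (0:ℝ) ≤ 1-s by linarith)]


section MainProof

variable (G : SimpleGraph V) [DecidableRel G.Adj] (A : Set V)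

/-- Step A : rewriting `permTutte` at `y = 0` as a sum of `FP`'s. -/
lemma permTutte_eq_FP (x : ℝ) :
    permTutte G A x 0 = ((Fintype.card V).factorial : ℝ)⁻¹ *
      ∑ π : V ≃ Fin (Fintype.card V),
        FP x (fun v => G.neighborFinset v) (fun v => G.neighborFinset v)
          (Finset.univ.filter (· ∈ A)) (Finset.univ.filter (· ∉ A)) π := by
  rw [permTutte]
  congr 1
  apply Finset.sum_congr rfl
  intro π _
  have hA : (x : ℝ) ^ Nat.card {i : V // i ∈ A ∧ ∀ j, G.Adj i j → π j < π i} =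
      ∏ v ∈ Finset.univ.filter (· ∈ A), aF x (fun v => G.neighborFinset v) π v := by
    have h1 : Nat.card {i : V // i ∈ A ∧ ∀ j, G.Adj i j → π j < π i} =
        ((Finset.univ.filter (· ∈ A)).filter
          (fun v => beats π v (G.neighborFinset v))).card := by
      rw [Nat.card_eq_fintype_card, Fintype.card_subtype, Finset.filter_filter]
      congr 1
      apply Finset.filter_congr
      intro v _
      constructor
      · rintro ⟨h1, h2⟩
        exact ⟨h1, fun y hy => h2 y ((SimpleGraph.mem_neighborFinset G v y).1 hy)⟩
      · rintro ⟨h1, h2⟩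
        exact ⟨h1, fun y hy => h2 y ((SimpleGraph.mem_neighborFinset G v y).2 hy)⟩
    rw [h1]
    symm
    calc ∏ v ∈ Finset.univ.filter (· ∈ A), aF x (fun v => G.neighborFinset v) π v
        = ∏ v ∈ (Finset.univ.filter (· ∈ A)).filter
            (fun v => beats π v (G.neighborFinset v)), x := (Finset.prod_filter _ _).symm
      _ = x ^ ((Finset.univ.filter (· ∈ A)).filter
            (fun v => beats π v (G.neighborFinset v))).card := Finset.prod_const x
  have hB : (0 : ℝ) ^ Nat.card {j : V // j ∉ A ∧ ∀ i, G.Adj j i → π i < π j} =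
      ∏ u ∈ Finset.univ.filter (· ∉ A), bF (fun v => G.neighborFinset v) π u := by
    have h1 : Nat.card {j : V // j ∉ A ∧ ∀ i, G.Adj j i → π i < π j} =
        ((Finset.univ.filter (· ∉ A)).filter
          (fun u => beats π u (G.neighborFinset u))).card := by
      rw [Nat.card_eq_fintype_card, Fintype.card_subtype, Finset.filter_filter]
      congr 1
      apply Finset.filter_congr
      intro v _
      constructor
      · rintro ⟨h1, h2⟩
        exact ⟨h1, fun y hy => h2 y ((SimpleGraph.mem_neighborFinset G v y).1 hy)⟩
      · rintro ⟨h1, h2⟩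
        exact ⟨h1, fun y hy => h2 y ((SimpleGraph.mem_neighborFinset G v y).2 hy)⟩
    rw [h1]
    symm
    calc ∏ u ∈ Finset.univ.filter (· ∉ A), bF (fun v => G.neighborFinset v) π u
        = ∏ u ∈ (Finset.univ.filter (· ∉ A)).filter
            (fun u => beats π u (G.neighborFinset u)), (0:ℝ) :=
          (Finset.prod_filter _ _).symm
      _ = (0:ℝ) ^ ((Finset.univ.filter (· ∉ A)).filter
            (fun u => beats π u (G.neighborFinset u))).card := Finset.prod_const 0
  rw [hA, hB, FP]


/-- Per-`(k,e)` lower bound for the conditioned sum, via `master`. -/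
lemma per_e_bound {x : ℝ} (hx : 1 ≤ x) (hbip : IsBipartition G A)
    (hne : ∀ u ∈ Finset.univ.filter (· ∉ A), (G.neighborFinset u).Nonempty)
    (k : ℕ) (hk : k ≤ Fintype.card V) (e : Fin k → V) :
    (if Function.Injective e ∧ Finset.image e Finset.univ ⊆ Finset.univ.filter (· ∈ A) then
        (x ^ k * (((Fintype.card V - k).factorial : ℝ))) *
          ((∏ v ∈ (Finset.univ.filter (· ∈ A)) \ Finset.image e Finset.univ,
              cF x (fun v => G.neighborFinset v) v) *
           ∏ u ∈ (Finset.univ.filter (· ∉ A)).filter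
               (fun u => ∀ i ∈ G.neighborFinset u, i ∉ Finset.image e Finset.univ),
             qF (fun v => G.neighborFinset v) u)
      else 0) ≤
    ∑ π : V ≃ Fin (Fintype.card V), (if TC k e π then
        FP x (fun v => G.neighborFinset v) (fun v => G.neighborFinset v)
          (Finset.univ.filter (· ∈ A)) (Finset.univ.filter (· ∉ A)) π else 0) := by
  have hx0 : (0:ℝ) ≤ x := by linarith
  by_cases hcond : Function.Injective e ∧
      Finset.image e Finset.univ ⊆ Finset.univ.filter (· ∈ A)
  swap
  · rw [if_neg hcond]
    apply Finset.sum_nonneg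
    intro π _
    split
    · exact FP_nonneg hx0 _ _ _ _ π
    · exact le_rfl
  obtain ⟨hinj, himg⟩ := hcond
  rw [if_pos ⟨hinj, himg⟩]
  set m := Fintype.card V with hm
  set 𝒜 : Finset V := Finset.univ.filter (· ∈ A) with h𝒜
  set ℬ : Finset V := Finset.univ.filter (· ∉ A) with hℬ
  set Nb : V → Finset V := fun v => G.neighborFinset v with hNb
  set S : Finset V := Finset.image e Finset.univ with hS
  have hSA : ∀ y ∈ S, y ∈ A := by
    intro y hy
    have := himg hy
    rw [h𝒜, Finset.mem_filter] at this
    exact this.2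
  have hmemS : ∀ j, e j ∈ S := fun j => Finset.mem_image_of_mem e (Finset.mem_univ j)
  have h𝒜mem : ∀ v, v ∈ 𝒜 ↔ v ∈ A := by
    intro v; rw [h𝒜, Finset.mem_filter]; simp
  have hℬmem : ∀ v, v ∈ ℬ ↔ v ∉ A := by
    intro v; rw [hℬ, Finset.mem_filter]; simp
  have hadj : ∀ v y, y ∈ Nb v ↔ G.Adj v y := by
    intro v y; rw [hNb]; exact SimpleGraph.mem_neighborFinset G v y
  -- pointwise splitting
  have hpw : ∀ π : V ≃ Fin m, (if TC k e π then FP x Nb Nb 𝒜 ℬ π else 0) =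
      x ^ k * (if TC k e π then FP x Nb Nb (𝒜 \ S)
        (ℬ.filter (fun u => ∀ i ∈ Nb u, i ∉ S)) π else 0) := by
    intro π
    by_cases hT : TC k e π
    · rw [if_pos hT, if_pos hT, FP, FP]
      have hxk : ∏ v ∈ S, aF x Nb π v = x ^ k := by
        have hall : ∀ v ∈ S, aF x Nb π v = x := by
          intro v hv
          obtain ⟨j, -, rfl⟩ := Finset.mem_image.1 hv
          rw [aF, if_pos]
          intro y hy
          have hadjy : G.Adj (e j) y := (hadj _ y).1 hy
          have hyA : y ∉ A := (hbip (e j) y hadjy).1 (hSA _ hv)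
          have hyS : ∀ j', e j' ≠ y := fun j' hj' => hyA (hSA y (hj' ▸ hmemS j'))
          have hlow := TC_low hT hinj hyS
          have hhigh := TC_high hT hinj j
          exact Fin.lt_def.2 (by omega)
        rw [Finset.prod_congr rfl hall, Finset.prod_const, hS,
          Finset.card_image_of_injective _ hinj, Finset.card_univ, Fintype.card_fin]
      have hAsplit : ∏ v ∈ 𝒜, aF x Nb π v =
          (∏ v ∈ 𝒜 \ S, aF x Nb π v) * x ^ k := by
        rw [← hxk, Finset.prod_sdiff himg]
      have hBsplit : ∏ u ∈ ℬ, bF Nb π u =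
          ∏ u ∈ ℬ.filter (fun u => ∀ i ∈ Nb u, i ∉ S), bF Nb π u := by
        rw [← Finset.prod_filter_mul_prod_filter_not ℬ (fun u => ∀ i ∈ Nb u, i ∉ S)
          (bF Nb π)]
        have hone : ∏ u ∈ ℬ.filter (fun u => ¬ ∀ i ∈ Nb u, i ∉ S), bF Nb π u = 1 := by
          apply Finset.prod_eq_one
          intro u hu
          obtain ⟨huB, hnp⟩ := Finset.mem_filter.1 hu
          push_neg at hnp
          obtain ⟨i, hiNb, hiS⟩ := hnp
          rw [bF, if_neg]
          intro hbeat
          have h1 := hbeat i hiNb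
          have huA : u ∉ A := (hℬmem u).1 huB
          have huS : ∀ j', e j' ≠ u := fun j' hj' => huA (hSA u (hj' ▸ hmemS j'))
          have hlow := TC_low hT hinj huS
          obtain ⟨ji, -, hji⟩ := Finset.mem_image.1 hiS
          have hhigh := TC_high hT hinj ji
          rw [hji] at hhigh
          rw [Fin.lt_def] at h1
          omega
        rw [hone, mul_one]
      rw [hAsplit, hBsplit]
      ring
    · rw [if_neg hT, if_neg hT, mul_zero]
  rw [Finset.sum_congr rfl fun π _ => hpw π, ← Finset.mul_sum]
  -- now apply master
  have hmaster := master (V := V) hx (m - k) k e (𝒜 \ S)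
    (ℬ.filter (fun u => ∀ i ∈ Nb u, i ∉ S)) Nb Nb
    (by omega)
    hinj
    (fun j h => (Finset.mem_sdiff.1 h).2 (hmemS j))
    (fun j h => ((hℬmem (e j)).1 (Finset.filter_subset _ _ h)) (hSA _ (hmemS j)))
    (by
      rw [Finset.disjoint_left]
      intro a ha haf
      have h1 : a ∈ A := (h𝒜mem a).1 (Finset.mem_sdiff.1 ha).1
      exact ((hℬmem a).1 (Finset.filter_subset _ _ haf)) h1)
    (fun v hv h => G.irrefl ((hadj v v).1 h))
    (by
      intro v hv y hy hyA
      have h1 : v ∈ A := (h𝒜mem v).1 (Finset.mem_sdiff.1 hv).1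
      have h2 : y ∉ A := (hbip v y ((hadj v y).1 hy)).1 h1
      exact h2 ((h𝒜mem y).1 (Finset.mem_sdiff.1 hyA).1))
    (by
      intro v hv j hj
      have h1 : v ∈ A := (h𝒜mem v).1 (Finset.mem_sdiff.1 hv).1
      have h2 : e j ∉ A := (hbip v (e j) ((hadj v (e j)).1 hj)).1 h1
      exact h2 (hSA _ (hmemS j)))
    (fun u hu => hne u (Finset.filter_subset _ _ hu))
    (fun u hu h => G.irrefl ((hadj u u).1 h))
    (by
      intro u hu i hi hiB
      have h1 : u ∉ A := (hℬmem u).1 (Finset.filter_subset _ _ hu)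
      have h2 : i ∈ A := by
        by_contra h3
        exact h1 ((hbip u i ((hadj u i).1 hi)).2 h3)
      exact ((hℬmem i).1 (Finset.filter_subset _ _ hiB)) h2)
    (by
      intro u hu j hj
      exact (Finset.mem_filter.1 hu).2 (e j) hj (hmemS j))
    (by
      intro v hv u hu y hy hyM
      have h1 : v ∈ A := (h𝒜mem v).1 (Finset.mem_sdiff.1 hv).1
      have h2 : y ∉ A := (hbip v y ((hadj v y).1 hy)).1 h1
      have h3 : u ∉ A := (hℬmem u).1 (Finset.filter_subset _ _ hu)
      have h4 : y ∈ A := by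
        by_contra h5
        exact h3 ((hbip u y ((hadj u y).1 hyM)).2 h5)
      exact h2 h4)
  calc x ^ k * (((m - k).factorial : ℝ)) *
        ((∏ v ∈ 𝒜 \ S, cF x Nb v) *
         ∏ u ∈ ℬ.filter (fun u => ∀ i ∈ Nb u, i ∉ S), qF Nb u)
      = x ^ k * ((((m - k).factorial : ℝ)) *
        ((∏ v ∈ 𝒜 \ S, cF x Nb v) *
         ∏ u ∈ ℬ.filter (fun u => ∀ i ∈ Nb u, i ∉ S), qF Nb u)) := by ring
    _ ≤ x ^ k * ∑ π : V ≃ Fin m, (if TC k e π then FP x Nb Nb (𝒜 \ S)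
          (ℬ.filter (fun u => ∀ i ∈ Nb u, i ∉ S)) π else 0) :=
        mul_le_mul_of_nonneg_left hmaster (pow_nonneg hx0 k)

end MainProof

end PTaux


open PTaux

open Finset in
/-- Main lemma: for `x ≥ 2` and `0 ≤ s ≤ 1`,
`T̃_H(x,0) ≥ Π_{v∈A} ((d_v+x)s/(d_v+1) + x(1−s)) · Π_{u∈B} (s − s/(d_u+1) Π_{v∈N(u)} γ_{x,s}(d_v))`. -/
theorem permTutte_x_zero_ge
    {V : Type*} [Fintype V] [DecidableEq V] (G : SimpleGraph V) [DecidableRel G.Adj]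
    (A : Set V) (hbip : IsBipartition G A) (x s : ℝ)
    (hx : 2 ≤ x) (hs0 : 0 ≤ s) (hs1 : s ≤ 1) :
    permTutte G A x 0 ≥
      (∏ v ∈ Finset.univ.filter (· ∈ A),
        (((G.degree v : ℝ) + x) * s / ((G.degree v : ℝ) + 1) + x * (1 - s))) *
      ∏ u ∈ Finset.univ.filter (· ∉ A),
        (s - s / ((G.degree u : ℝ) + 1) *
          ∏ v ∈ G.neighborFinset u, gam x s (G.degree v)) := by
  classical
  have h1x : (1:ℝ) ≤ x := by linarith
  have hx0 : (0:ℝ) ≤ x := by linarith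
  set m := Fintype.card V with hm
  set 𝒜 : Finset V := Finset.univ.filter (· ∈ A) with h𝒜
  set ℬ : Finset V := Finset.univ.filter (· ∉ A) with hℬ
  have h𝒜mem : ∀ v, v ∈ 𝒜 ↔ v ∈ A := by
    intro v; rw [h𝒜, Finset.mem_filter]; simp
  have hℬmem : ∀ v, v ∈ ℬ ↔ v ∉ A := by
    intro v; rw [hℬ, Finset.mem_filter]; simp
  set Nb : V → Finset V := fun v => G.neighborFinset v with hNb
  have hdeg : ∀ v, (Nb v).card = G.degree v := fun v => G.card_neighborFinset_eq_degree v
  have hadj : ∀ v y, y ∈ Nb v ↔ G.Adj v y := by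
    intro v y; rw [hNb]; exact SimpleGraph.mem_neighborFinset G v y
  -- trivial case : an isolated vertex in `ℬ`
  by_cases hiso : ∃ u ∈ ℬ, Nb u = ∅
  · obtain ⟨u, huB, hu0⟩ := hiso
    have hdeg0 : G.degree u = 0 := by rw [← hdeg u, hu0, Finset.card_empty]
    have hfac : (s - s / ((G.degree u : ℝ) + 1) *
        ∏ v ∈ G.neighborFinset u, gam x s (G.degree v)) = 0 := by
      have : G.neighborFinset u = ∅ := hu0
      rw [this, hdeg0]
      norm_num
    rw [ge_iff_le, Finset.prod_eq_zero huB hfac, mul_zero, permTutte]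
    apply mul_nonneg (inv_nonneg.2 (Nat.cast_nonneg _))
    apply Finset.sum_nonneg
    intro π _
    exact mul_nonneg (pow_nonneg hx0 _) (pow_nonneg le_rfl _)
  push_neg at hiso
  have hne : ∀ u ∈ ℬ, (Nb u).Nonempty :=
    fun u hu => hiso u hu
  -- notation
  set fR : V → ℝ := fun v =>
    ((G.degree v : ℝ) + x) * s / ((G.degree v : ℝ) + 1) + x * (1 - s) with hfR
  set γv : V → ℝ := fun v => gam x s (G.degree v) with hγv
  have hdnn : ∀ v, (0:ℝ) ≤ (G.degree v : ℝ) := fun v => Nat.cast_nonneg _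
  have hγ : ∀ v, 0 ≤ γv v ∧ γv v ≤ 1 := fun v => gam_mem hx hs0 hs1 (hdnn v)
  have hf1 : ∀ v, 1 ≤ fR v := fun v => f_ge_one hx hs0 hs1 (hdnn v)
  have hcF : ∀ v, cF x Nb v = ((G.degree v : ℝ) + x) / ((G.degree v : ℝ) + 1) := by
    intro v
    rw [cF, hdeg v]
  have hqF : ∀ u, qF Nb u = ((G.degree u : ℝ)) / ((G.degree u : ℝ) + 1) := by
    intro u
    rw [qF, hdeg u]
  set PQ : Finset V → ℝ := fun S => (∏ v ∈ 𝒜 \ S, cF x Nb v) *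
      ∏ u ∈ ℬ.filter (fun u => ∀ i ∈ Nb u, i ∉ S), qF Nb u with hPQ
  set hfun : V → Finset V → ℝ :=
    fun u S => if (∀ i ∈ Nb u, i ∉ S) then qF Nb u else 1 with hhfun
  set W : ℕ → ℝ := fun k => (m.choose k : ℝ) * (1-s)^k * s^(m-k) with hW
  have hW0 : ∀ k, 0 ≤ W k := by
    intro k
    rw [hW]
    have := pow_nonneg hs0 (m - k)
    have := pow_nonneg (show (0:ℝ) ≤ 1 - s by linarith) k
    positivity
  -- Step B : pointwise decomposition and swap
  have hswap : ∑ π : V ≃ Fin m, FP x Nb Nb 𝒜 ℬ π =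
      ∑ k ∈ Finset.range (m+1), W k * ∑ e : Fin k → V,
        ∑ π : V ≃ Fin m, (if TC k e π then FP x Nb Nb 𝒜 ℬ π else 0) := by
    have hpoint : ∀ π : V ≃ Fin m, FP x Nb Nb 𝒜 ℬ π =
        ∑ k ∈ Finset.range (m+1), W k * ∑ e : Fin k → V,
          (if TC k e π then FP x Nb Nb 𝒜 ℬ π else 0) := by
      intro π
      have h1 : ∀ k ∈ Finset.range (m+1),
          W k * ∑ e : Fin k → V, (if TC k e π then FP x Nb Nb 𝒜 ℬ π else 0) =
          W k * FP x Nb Nb 𝒜 ℬ π := by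
        intro k hk
        have hkm : k ≤ m := by
          have := Finset.mem_range.1 hk; omega
        have h2 : ∑ e : Fin k → V, (if TC k e π then FP x Nb Nb 𝒜 ℬ π else 0) =
            (∑ e : Fin k → V, (if TC k e π then (1:ℝ) else 0)) * FP x Nb Nb 𝒜 ℬ π := by
          rw [Finset.sum_mul]
          apply Finset.sum_congr rfl
          intro e _
          rw [ite_mul, one_mul, zero_mul]
        rw [h2, TC_sum_one hkm, one_mul]
      rw [Finset.sum_congr rfl h1, ← Finset.sum_mul]
      have h3 : ∑ k ∈ Finset.range (m+1), W k = 1 := by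
        calc ∑ k ∈ Finset.range (m+1), W k
            = ∑ k ∈ Finset.range (m+1), (1-s)^k * s^(m-k) * (m.choose k : ℝ) :=
              Finset.sum_congr rfl fun k _ => by simp only [hW]; ring
          _ = ((1-s)+s)^m := (add_pow (1-s) s m).symm
          _ = 1 := by norm_num
      rw [h3, one_mul]
    rw [Finset.sum_congr rfl fun π _ => hpoint π, Finset.sum_comm]
    apply Finset.sum_congr rfl
    intro k _
    rw [← Finset.mul_sum]
    congr 1
    exact Finset.sum_comm
  -- Step C : apply per_e_bound
  have hLB : ∀ k ∈ Finset.range (m+1),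
      (fun k => W k * ∑ e : Fin k → V,
        (if Function.Injective e ∧ Finset.image e Finset.univ ⊆ 𝒜 then
          (x ^ k * (((m - k).factorial : ℝ))) * PQ (Finset.image e Finset.univ)
        else 0)) k ≤
      (fun k => W k * ∑ e : Fin k → V,
        ∑ π : V ≃ Fin m, (if TC k e π then FP x Nb Nb 𝒜 ℬ π else 0)) k := by
    intro k hk
    have hkm : k ≤ m := by have := Finset.mem_range.1 hk; omega
    apply mul_le_mul_of_nonneg_left _ (hW0 k)
    apply Finset.sum_le_sum
    intro e _
    exact per_e_bound G A h1x hbip hne k hkm e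
  have hchain1 : ∑ k ∈ Finset.range (m+1), W k * ∑ e : Fin k → V,
        (if Function.Injective e ∧ Finset.image e Finset.univ ⊆ 𝒜 then
          (x ^ k * (((m - k).factorial : ℝ))) * PQ (Finset.image e Finset.univ)
        else 0) ≤
      ∑ π : V ≃ Fin m, FP x Nb Nb 𝒜 ℬ π := by
    rw [hswap]
    exact Finset.sum_le_sum hLB
  -- Step D : regroup the LHS of hchain1
  have hregroup : ∀ k, ∑ e : Fin k → V,
      (if Function.Injective e ∧ Finset.image e Finset.univ ⊆ 𝒜 then
        (x ^ k * (((m - k).factorial : ℝ))) * PQ (Finset.image e Finset.univ)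
      else 0) =
      (x ^ k * (((m - k).factorial : ℝ))) * ((k.factorial : ℝ) *
        ∑ S ∈ Finset.powersetCard k 𝒜, PQ S) := by
    intro k
    rw [← sum_inj_image k 𝒜 PQ, Finset.mul_sum]
    apply Finset.sum_congr rfl
    intro e _
    rw [mul_ite, mul_zero]
  have hcoef : ∀ k, k ≤ m → (m.factorial : ℝ)⁻¹ *
      (W k * ((x ^ k * (((m - k).factorial : ℝ))) * ((k.factorial : ℝ) *
        ∑ S ∈ Finset.powersetCard k 𝒜, PQ S))) =
      ∑ S ∈ Finset.powersetCard k 𝒜, ((1-s)*x) ^ k * s^(m-k) * PQ S := by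
    intro k hkm
    have hfact : ((m.choose k : ℝ)) * (k.factorial : ℝ) * ((m - k).factorial : ℝ) =
        (m.factorial : ℝ) := by
      exact_mod_cast congrArg (Nat.cast (R := ℝ))
        (Nat.choose_mul_factorial_mul_factorial hkm)
    have hmf : (m.factorial : ℝ) ≠ 0 := by
      exact_mod_cast Nat.factorial_ne_zero m
    have h2 : ((m.choose k : ℝ) * (((m-k).factorial : ℝ)) * ((k.factorial : ℝ))) *
        ((m.factorial : ℝ))⁻¹ = 1 := by
      rw [show (m.choose k : ℝ) * (((m-k).factorial : ℝ)) * ((k.factorial : ℝ)) =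
        (m.factorial : ℝ) by rw [← hfact]; ring]
      exact mul_inv_cancel₀ hmf
    calc (m.factorial : ℝ)⁻¹ *
          (W k * ((x ^ k * (((m - k).factorial : ℝ))) * ((k.factorial : ℝ) *
            ∑ S ∈ Finset.powersetCard k 𝒜, PQ S)))
        = ((((1-s)*x) ^ k * s^(m-k)) *
            (((m.choose k : ℝ) * (((m-k).factorial : ℝ)) * ((k.factorial : ℝ))) *
              ((m.factorial : ℝ))⁻¹)) * ∑ S ∈ Finset.powersetCard k 𝒜, PQ S := by
          simp only [hW, mul_pow]
          try ring
      _ = (((1-s)*x) ^ k * s^(m-k)) * ∑ S ∈ Finset.powersetCard k 𝒜, PQ S := by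
          rw [h2, mul_one]
      _ = ∑ S ∈ Finset.powersetCard k 𝒜, ((1-s)*x) ^ k * s^(m-k) * PQ S := by
          rw [Finset.mul_sum]
  -- Step E : to powerset sums
  have hpows : ∑ k ∈ Finset.range (m+1), ∑ S ∈ Finset.powersetCard k 𝒜,
      ((1-s)*x) ^ k * s^(m-k) * PQ S =
      ∑ S ∈ 𝒜.powerset, ((1-s)*x) ^ S.card * s^(m - S.card) * PQ S := by
    have hinner : ∀ k, ∑ S ∈ Finset.powersetCard k 𝒜, ((1-s)*x) ^ k * s^(m-k) * PQ S
        = ∑ S ∈ Finset.powersetCard k 𝒜, ((1-s)*x) ^ S.card * s^(m - S.card) * PQ S := by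
      intro k
      apply Finset.sum_congr rfl
      intro S hS
      rw [(Finset.mem_powersetCard.1 hS).2]
    rw [Finset.sum_congr rfl (fun k _ => hinner k)]
    rw [Finset.sum_powerset 𝒜 (fun S => ((1-s)*x) ^ S.card * s^(m - S.card) * PQ S)]
    symm
    apply Finset.sum_subset
      (Finset.range_subset_range.2 (by have := Finset.card_le_univ 𝒜; omega))
    intro k hk1 hk2
    have hbig : 𝒜.card < k := by
      simp only [Finset.mem_range] at hk1 hk2
      omega
    rw [Finset.powersetCard_eq_empty.2 hbig, Finset.sum_empty]
  -- cardinalities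
  have hm𝒜ℬ : 𝒜.card + ℬ.card = m := by
    have hdisj : Disjoint 𝒜 ℬ := by
      rw [Finset.disjoint_left]
      intro a ha hb
      exact (hℬmem a).1 hb ((h𝒜mem a).1 ha)
    have hun : 𝒜 ∪ ℬ = Finset.univ := by
      ext a
      simp only [Finset.mem_union, Finset.mem_univ, iff_true]
      by_cases h : a ∈ A
      · exact Or.inl ((h𝒜mem a).2 h)
      · exact Or.inr ((hℬmem a).2 h)
    rw [← Finset.card_union_of_disjoint hdisj, hun, Finset.card_univ]
  -- Step F : per-S identity
  have hperS : ∀ S ∈ 𝒜.powerset, ((1-s)*x) ^ S.card * s^(m - S.card) * PQ S =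
      ((∏ v ∈ 𝒜, fR v) * s ^ ℬ.card) * (muW γv 𝒜 S * ∏ u ∈ ℬ, hfun u S) := by
    intro S hS
    have hS𝒜 : S ⊆ 𝒜 := Finset.mem_powerset.1 hS
    have hcard1 : S.card ≤ 𝒜.card := Finset.card_le_card hS𝒜
    have hsd : (𝒜 \ S).card = 𝒜.card - S.card := Finset.card_sdiff_of_subset hS𝒜
    have hp1 : s^(m - S.card) = s ^ ℬ.card * s ^ ((𝒜 \ S).card) := by
      rw [hsd, ← pow_add]
      congr 1
      omega
    have hA1 : ∀ v, fR v * (1 - γv v) = (1-s) * x := by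
      intro v
      simp only [hfR, hγv]
      exact one_sub_gam_mul_f hx hs0 hs1 (hdnn v)
    have hA2 : ∀ v, fR v * γv v = s * cF x Nb v := by
      intro v
      rw [hcF v]
      simp only [hfR, hγv]
      rw [gam_mul_f hx hs0 hs1 (hdnn v)]
    have e1 : ∏ v ∈ S, ((1-s)*x) = ∏ v ∈ S, (fR v * (1 - γv v)) :=
      Finset.prod_congr rfl fun v _ => (hA1 v).symm
    have e2 : ∏ v ∈ 𝒜 \ S, (s * cF x Nb v) = ∏ v ∈ 𝒜 \ S, (fR v * γv v) :=
      Finset.prod_congr rfl fun v _ => (hA2 v).symm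
    have e3 : (∏ v ∈ S, (fR v * (1 - γv v))) * ∏ v ∈ 𝒜 \ S, (fR v * γv v) =
        (∏ v ∈ 𝒜, fR v) * muW γv 𝒜 S := by
      rw [Finset.prod_mul_distrib, Finset.prod_mul_distrib, muW,
        ← Finset.prod_sdiff hS𝒜]
      ring
    have e4 : ∏ u ∈ ℬ.filter (fun u => ∀ i ∈ Nb u, i ∉ S), qF Nb u =
        ∏ u ∈ ℬ, hfun u S := by
      simp only [hhfun]
      exact Finset.prod_filter _ _
    calc ((1-s)*x) ^ S.card * s^(m - S.card) * PQ S
        = ((∏ v ∈ S, ((1-s)*x)) * ∏ v ∈ 𝒜 \ S, (s * cF x Nb v)) * (s ^ ℬ.card *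
            ∏ u ∈ ℬ.filter (fun u => ∀ i ∈ Nb u, i ∉ S), qF Nb u) := by
          rw [hp1, Finset.prod_const,
            show ∏ v ∈ 𝒜 \ S, (s * cF x Nb v) =
              s ^ ((𝒜 \ S).card) * ∏ v ∈ 𝒜 \ S, cF x Nb v by
                rw [Finset.prod_mul_distrib, Finset.prod_const]]
          simp only [hPQ]
          ring
      _ = ((∏ v ∈ 𝒜, fR v) * muW γv 𝒜 S) * (s ^ ℬ.card * ∏ u ∈ ℬ, hfun u S) := by
          rw [e1, e2, e4, e3]
      _ = ((∏ v ∈ 𝒜, fR v) * s ^ ℬ.card) * (muW γv 𝒜 S * ∏ u ∈ ℬ, hfun u S) := by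
          ring
  -- Step G : Harris
  have hmono : ∀ u ∈ ℬ, ∀ S S', S ⊆ S' → S' ⊆ 𝒜 → hfun u S ≤ hfun u S' := by
    intro u hu S S' hss _
    simp only [hhfun]
    by_cases h2 : ∀ i ∈ Nb u, i ∉ S'
    · rw [if_pos h2, if_pos (fun i hi hiS => h2 i hi (hss hiS))]
    · rw [if_neg h2]
      split
      · exact qF_le_one Nb u
      · exact le_rfl
  have hnn2 : ∀ u ∈ ℬ, ∀ S, 0 ≤ hfun u S := by
    intro u hu S
    simp only [hhfun]
    split
    · exact qF_nonneg Nb u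
    · norm_num
  have hharris := harris_prod hγ 𝒜 ℬ hfun hmono hnn2
  -- Step H : expectation values
  have hEu : ∀ u ∈ ℬ, ∑ S ∈ 𝒜.powerset, muW γv 𝒜 S * hfun u S =
      1 - (1 - qF Nb u) * ∏ i ∈ Nb u, γv i := by
    intro u hu
    have hNbsub : Nb u ⊆ 𝒜 := by
      intro i hi
      have h3 : u ∉ A := (hℬmem u).1 hu
      have h4 : i ∈ A := by
        by_contra h5
        exact h3 ((hbip u i ((hadj u i).1 hi)).2 h5)
      exact (h𝒜mem i).2 h4
    have hpointu : ∀ S, muW γv 𝒜 S * hfun u S =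
        muW γv 𝒜 S - (1 - qF Nb u) *
          (muW γv 𝒜 S * (if ∀ i ∈ Nb u, i ∉ S then (1:ℝ) else 0)) := by
      intro S
      simp only [hhfun]
      split
      · ring
      · ring
    rw [Finset.sum_congr rfl (fun S _ => hpointu S), Finset.sum_sub_distrib, sum_muW,
      ← Finset.mul_sum, sum_muW_indicator γv 𝒜 (Nb u) hNbsub]
  -- final algebra per u
  have hfinalu : ∀ u ∈ ℬ, s * (1 - (1 - qF Nb u) * ∏ i ∈ Nb u, γv i) =
      s - s / ((G.degree u : ℝ) + 1) * ∏ v ∈ G.neighborFinset u, gam x s (G.degree v) := by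
    intro u hu
    have hd1 : (0:ℝ) < (G.degree u : ℝ) + 1 := by
      have := hdnn u; linarith
    have h1q : 1 - qF Nb u = 1 / ((G.degree u : ℝ) + 1) := by
      rw [hqF u]
      field_simp
      ring
    have hprod : ∏ i ∈ Nb u, γv i =
        ∏ v ∈ G.neighborFinset u, gam x s (G.degree v) := rfl
    rw [h1q, hprod]
    ring
  -- assemble everything
  set C0 : ℝ := (∏ v ∈ 𝒜, fR v) * s ^ ℬ.card with hC0
  have hC0nn : 0 ≤ C0 := by
    rw [hC0]
    apply mul_nonneg (Finset.prod_nonneg fun v _ => by linarith [hf1 v])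
      (pow_nonneg hs0 _)
  have hchain2 : (m.factorial : ℝ)⁻¹ * ∑ k ∈ Finset.range (m+1), (W k *
      ∑ e : Fin k → V, (if Function.Injective e ∧ Finset.image e Finset.univ ⊆ 𝒜 then
        (x ^ k * (((m - k).factorial : ℝ))) * PQ (Finset.image e Finset.univ) else 0)) =
      ∑ S ∈ 𝒜.powerset, ((1-s)*x) ^ S.card * s^(m - S.card) * PQ S := by
    calc (m.factorial : ℝ)⁻¹ * ∑ k ∈ Finset.range (m+1), (W k *
        ∑ e : Fin k → V, (if Function.Injective e ∧ Finset.image e Finset.univ ⊆ 𝒜 then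
          (x ^ k * (((m - k).factorial : ℝ))) * PQ (Finset.image e Finset.univ) else 0))
        = ∑ k ∈ Finset.range (m+1), ((m.factorial : ℝ)⁻¹ *
            (W k * ((x ^ k * (((m - k).factorial : ℝ))) * ((k.factorial : ℝ) *
              ∑ S ∈ Finset.powersetCard k 𝒜, PQ S)))) := by
          rw [Finset.mul_sum]
          exact Finset.sum_congr rfl fun k hk => by rw [hregroup k]
      _ = ∑ k ∈ Finset.range (m+1), ∑ S ∈ Finset.powersetCard k 𝒜,
            ((1-s)*x) ^ k * s^(m-k) * PQ S :=
          Finset.sum_congr rfl fun k hk =>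
            hcoef k (by have := Finset.mem_range.1 hk; omega)
      _ = ∑ S ∈ 𝒜.powerset, ((1-s)*x) ^ S.card * s^(m - S.card) * PQ S := hpows
  have hchain3 : ∑ S ∈ 𝒜.powerset, ((1-s)*x) ^ S.card * s^(m - S.card) * PQ S =
      C0 * ∑ S ∈ 𝒜.powerset, muW γv 𝒜 S * ∏ u ∈ ℬ, hfun u S := by
    rw [Finset.sum_congr rfl hperS, ← Finset.mul_sum]
  have hchain5 : C0 * ∏ u ∈ ℬ, (∑ S ∈ 𝒜.powerset, muW γv 𝒜 S * hfun u S) =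
      (∏ v ∈ 𝒜, fR v) *
        ∏ u ∈ ℬ, (s - s / ((G.degree u : ℝ) + 1) *
          ∏ v ∈ G.neighborFinset u, gam x s (G.degree v)) := by
    rw [Finset.prod_congr rfl hEu, hC0]
    calc ((∏ v ∈ 𝒜, fR v) * s ^ ℬ.card) *
          ∏ u ∈ ℬ, (1 - (1 - qF Nb u) * ∏ i ∈ Nb u, γv i)
        = (∏ v ∈ 𝒜, fR v) * ((∏ _u ∈ ℬ, s) *
            ∏ u ∈ ℬ, (1 - (1 - qF Nb u) * ∏ i ∈ Nb u, γv i)) := by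
          rw [Finset.prod_const]
          ring
      _ = (∏ v ∈ 𝒜, fR v) *
            ∏ u ∈ ℬ, (s * (1 - (1 - qF Nb u) * ∏ i ∈ Nb u, γv i)) := by
          rw [← Finset.prod_mul_distrib]
      _ = (∏ v ∈ 𝒜, fR v) * ∏ u ∈ ℬ, (s - s / ((G.degree u : ℝ) + 1) *
            ∏ v ∈ G.neighborFinset u, gam x s (G.degree v)) := by
          rw [Finset.prod_congr rfl hfinalu]
  -- final inequality chain
  rw [ge_iff_le, permTutte_eq_FP G A x]
  calc (∏ v ∈ Finset.univ.filter (· ∈ A),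
        (((G.degree v : ℝ) + x) * s / ((G.degree v : ℝ) + 1) + x * (1 - s))) *
      ∏ u ∈ Finset.univ.filter (· ∉ A),
        (s - s / ((G.degree u : ℝ) + 1) *
          ∏ v ∈ G.neighborFinset u, gam x s (G.degree v))
      = C0 * ∏ u ∈ ℬ, (∑ S ∈ 𝒜.powerset, muW γv 𝒜 S * hfun u S) := hchain5.symm
    _ ≤ C0 * ∑ S ∈ 𝒜.powerset, muW γv 𝒜 S * ∏ u ∈ ℬ, hfun u S :=
        mul_le_mul_of_nonneg_left hharris hC0nn
    _ = ∑ S ∈ 𝒜.powerset, ((1-s)*x) ^ S.card * s^(m - S.card) * PQ S := hchain3.symm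
    _ = (m.factorial : ℝ)⁻¹ * ∑ k ∈ Finset.range (m+1), (W k *
        ∑ e : Fin k → V, (if Function.Injective e ∧ Finset.image e Finset.univ ⊆ 𝒜 then
          (x ^ k * (((m - k).factorial : ℝ))) * PQ (Finset.image e Finset.univ) else 0)) :=
        hchain2.symm
    _ ≤ (m.factorial : ℝ)⁻¹ * ∑ π : V ≃ Fin m, FP x Nb Nb 𝒜 ℬ π :=
        mul_le_mul_of_nonneg_left hchain1 (inv_nonneg.2 (Nat.cast_nonneg _))
end

section
/- Let x ≥ 2 be real, let 0 ≤ γ ≤ s < 1 be real numbers, and let d ≥ 2 be an integer. If γ^{d−1} ≤ (x−1)/(x(d+2)), then G(d,x,s,γ) ≥ G(d+1,x,s,γ). -/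
noncomputable def Gfun (d : ℕ) (x s γ : ℝ) : ℝ :=
  (((d : ℝ) + x) * s / ((d : ℝ) + 1) + x * (1 - s)) *
    (s - s / ((d : ℝ) + 1) * γ ^ d)

/-!
Write `G(d) = A_d B_d` with `A_d = x - s(x-1)d/(d+1)` and `B_d = s(1 - γ^d/(d+1))`. Passing from
`d` to `d+1` lowers `A` by `s(x-1)/((d+1)(d+2))` and raises `B` by `sγ^d(1/(d+1) - γ/(d+2))`, so
`G(d) - G(d+1) = (A_d - A_{d+1}) B_d - A_{d+1}(B_{d+1} - B_d)`. Since `γ ≤ s`, the hypothesis on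
`γ^{d-1}` gives `x(d+2)γ^d ≤ s(x-1)`, and this is exactly what makes the first term win.
-/

theorem Gfun_sub_Gfun_succ (d : ℕ) (x s γ : ℝ) :
    Gfun d x s γ - Gfun (d + 1) x s γ =
      s / ((d + 1) * (d + 2)) *
        (s * (x - 1) * (1 - γ ^ d / (d + 1)) -
          (x - s * (x - 1) * (d + 1) / (d + 2)) * γ ^ d * ((d + 2) - γ * (d + 1))) := by
  unfold Gfun
  push_cast
  field_simp
  ring

theorem Gfun_succ_loss_le_gain (D x s γ g : ℝ) (hD : 0 ≤ D) (hx : 1 ≤ x) (hs0 : 0 ≤ s)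
    (hs1 : s ≤ 1) (hγ : 0 ≤ γ) (hg : 0 ≤ g) (hkey : x * (D + 2) * g ≤ s * (x - 1)) :
    (x - s * (x - 1) * (D + 1) / (D + 2)) * g * ((D + 2) - γ * (D + 1)) ≤
      s * (x - 1) * (1 - g / (D + 1)) := by
  set A := x - s * (x - 1) * (D + 1) / (D + 2) with hA_def
  have hA : 0 ≤ A := by
    have : s * (x - 1) * (D + 1) / (D + 2) ≤ x - 1 := by
      rw [div_le_iff₀ (by linarith)]
      nlinarith [mul_nonneg (sub_nonneg.2 hs1) (sub_nonneg.2 hx)]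
    linarith
  -- `x - A = s(x-1)(D+1)/(D+2)` turns the slack `s(x-1) - x(D+2)g` into the gain below
  have hsplit : s * (x - 1) * (1 - g / (D + 1)) - A * g * ((D + 2) - γ * (D + 1)) =
      (s * (x - 1) - x * (D + 2) * g) + s * (x - 1) * g * (D * (D + 2) / (D + 1)) +
        A * g * γ * (D + 1) := by
    rw [hA_def]
    field_simp
    ring
  have hgain : 0 ≤ s * (x - 1) * g * (D * (D + 2) / (D + 1)) := by
    have : 0 ≤ x - 1 := by linarith
    positivity
  have hlast : 0 ≤ A * g * γ * (D + 1) := by positivity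
  linarith

/-- For `x ≥ 2`, `0 ≤ γ ≤ s < 1` and an integer `d ≥ 2`, if
`γ^{d−1} ≤ (x−1)/(x(d+2))` then `G(d,x,s,γ) ≥ G(d+1,x,s,γ)`. -/
theorem Gfun_decreasing (x s γ : ℝ) (d : ℕ)
    (hx : 2 ≤ x) (hγ0 : 0 ≤ γ) (hγs : γ ≤ s) (hs : s < 1) (hd : 2 ≤ d)
    (hcond : γ ^ (d - 1) ≤ (x - 1) / (x * ((d : ℝ) + 2))) :
    Gfun d x s γ ≥ Gfun (d + 1) x s γ := by
  have hs0 : 0 ≤ s := hγ0.trans hγs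
  have hpow : γ ^ d = γ * γ ^ (d - 1) := by
    rw [← pow_succ']
    congr 1
    omega
  have hkey : x * (d + 2) * γ ^ d ≤ s * (x - 1) := by
    have hbound := mul_le_mul hγs hcond (pow_nonneg hγ0 _) hs0
    rw [← hpow, mul_div_assoc', le_div_iff₀ (by positivity)] at hbound
    linarith
  rw [ge_iff_le, ← sub_nonneg, Gfun_sub_Gfun_succ]
  exact mul_nonneg (by positivity) (sub_nonneg.2 (Gfun_succ_loss_le_gain _ _ _ _ _ (by positivity)
    (by linarith) hs0 hs.le hγ0 (pow_nonneg hγ0 _) hkey))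
end

section
/- Let x > 1 be a real number. Then the function t ↦ ((x−1)/(x(t+2)))^{1/(t−1)} is monotone increasing on the real interval t ≥ 2; that is, for all real numbers 2 ≤ t₁ ≤ t₂, ((x−1)/(x(t₁+2)))^{1/(t₁−1)} ≤ ((x−1)/(x(t₂+2)))^{1/(t₂−1)}. -/
open Real

/-- Key lemma: `log(t+2)/(t-1)` is decreasing for `t ≥ 2`. -/
lemma key_log_ineq (t₁ t₂ : ℝ) (h1 : 2 ≤ t₁) (h12 : t₁ ≤ t₂) :
    (t₁ - 1) * Real.log (t₂ + 2) ≤ (t₂ - 1) * Real.log (t₁ + 2) := by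
  have hp1 : (0:ℝ) < t₁ + 2 := by linarith
  have hp2 : (0:ℝ) < t₂ + 2 := by linarith
  have hlog_sub : Real.log (t₂ + 2) - Real.log (t₁ + 2) ≤ (t₂ - t₁) / (t₁ + 2) := by
    have h := Real.log_le_sub_one_of_pos (x := (t₂ + 2) / (t₁ + 2)) (by positivity)
    rw [Real.log_div (by positivity) (by positivity)] at h
    have : (t₂ + 2) / (t₁ + 2) - 1 = (t₂ - t₁) / (t₁ + 2) := by
      field_simp
      ring
    linarith [this ▸ h]
  have hlog4 : (1:ℝ) ≤ Real.log (t₁ + 2) := by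
    have h4 : (4:ℝ) ≤ t₁ + 2 := by linarith
    have : Real.log 4 ≤ Real.log (t₁ + 2) := Real.log_le_log (by norm_num) h4
    have h2 : Real.log 4 = 2 * Real.log 2 := by
      rw [show (4:ℝ) = 2 ^ 2 by norm_num, Real.log_pow]; push_cast; ring
    nlinarith [Real.log_two_gt_d9]
  have hfrac : (t₁ - 1) / (t₁ + 2) ≤ 1 := by
    rw [div_le_one hp1]; linarith
  -- (t₂-1)log(t₁+2) - (t₁-1)log(t₂+2) ≥ (t₂-t₁)(log(t₁+2) - (t₁-1)/(t₁+2)) ≥ 0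
  have h1' : (t₁ - 1) * (Real.log (t₂ + 2) - Real.log (t₁ + 2)) ≤
      (t₁ - 1) * ((t₂ - t₁) / (t₁ + 2)) := by
    apply mul_le_mul_of_nonneg_left hlog_sub (by linarith)
  have h2' : (t₁ - 1) * ((t₂ - t₁) / (t₁ + 2)) ≤ (t₂ - t₁) * 1 := by
    have : (t₁ - 1) * ((t₂ - t₁) / (t₁ + 2)) = (t₂ - t₁) * ((t₁ - 1) / (t₁ + 2)) := by
      ring
    rw [this]
    exact mul_le_mul_of_nonneg_left hfrac (by linarith)
  have h3' : (t₂ - t₁) * 1 ≤ (t₂ - t₁) * Real.log (t₁ + 2) :=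
    mul_le_mul_of_nonneg_left hlog4 (by linarith)
  nlinarith

/-- For `x > 1`, the function `t ↦ ((x−1)/(x(t+2)))^{1/(t−1)}` is monotone increasing on
the real interval `t ≥ 2`. -/
theorem rpow_bound_monotone (x : ℝ) (hx : 1 < x) :
    ∀ t₁ t₂ : ℝ, 2 ≤ t₁ → t₁ ≤ t₂ →
      ((x - 1) / (x * (t₁ + 2))) ^ (1 / (t₁ - 1)) ≤
        ((x - 1) / (x * (t₂ + 2))) ^ (1 / (t₂ - 1)) := by
  intro t₁ t₂ h1 h12
  have hx0 : (0:ℝ) < x := by linarith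
  have hx1 : (0:ℝ) < x - 1 := by linarith
  have hp1 : (0:ℝ) < t₁ + 2 := by linarith
  have hp2 : (0:ℝ) < t₂ + 2 := by linarith
  have hd1 : (0:ℝ) < t₁ - 1 := by linarith
  have hd2 : (0:ℝ) < t₂ - 1 := by linarith
  have hb1 : (0:ℝ) < (x - 1) / (x * (t₁ + 2)) := by positivity
  have hb2 : (0:ℝ) < (x - 1) / (x * (t₂ + 2)) := by positivity
  rw [Real.rpow_def_of_pos hb1, Real.rpow_def_of_pos hb2, Real.exp_le_exp]
  have hlog : ∀ t : ℝ, 0 < t + 2 →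
      Real.log ((x - 1) / (x * (t + 2))) =
        (Real.log (x - 1) - Real.log x) - Real.log (t + 2) := by
    intro t ht
    rw [Real.log_div (ne_of_gt hx1) (by positivity),
      Real.log_mul (ne_of_gt hx0) (ne_of_gt ht)]
    ring
  rw [hlog t₁ hp1, hlog t₂ hp2]
  set A := Real.log (x - 1) - Real.log x with hA
  have hAneg : A ≤ 0 := by
    have : Real.log (x - 1) ≤ Real.log x := Real.log_le_log hx1 (by linarith)
    linarith
  rw [mul_one_div, mul_one_div, div_le_div_iff₀ hd1 hd2]
  have hkey := key_log_ineq t₁ t₂ h1 h12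
  nlinarith [mul_nonneg (neg_nonneg.mpr hAneg) (sub_nonneg.mpr h12)]
end
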